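/- arXiv:2512.08669 — 8 statements merged into one kernel-verified Lean document; each statement's English description precedes it below -/
import Mathlib

section
/- For every d ≥ 1, k with 0 ≤ k ≤ d, and j with 0 ≤ j ≤ d, the coefficient c_{d,k}(j) equals the number of permutations of {1,…,d+1} with exactly j+1 cycles in which every cycle whose elements are all at most k is assigned one of two colors (red or blue) and moreover every such cycle has odd length, while all other cycles are uncolored. In particular, c_{d,k}(j) > 0. -/
/-- The integer polynomial `d!·P_{d,k}` in the variable `n`:
`d!·P_{d,k}(n) = ∑_{i=0}^{k} C(k,i) · (n-i+1)(n-i+2)⋯(n-i+d)`.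
Its coefficients are the numbers `c_{d,k}(j)`. -/
noncomputable def Qpoly (d k : ℕ) : Polynomial ℤ :=
  ∑ i ∈ Finset.range (k + 1), Polynomial.C (k.choose i : ℤ) *
    ∏ m ∈ Finset.range d, (Polynomial.X + Polynomial.C ((m : ℤ) + 1 - (i : ℤ)))

/-- The total number of cycles of a permutation (fixed points count as singleton cycles). -/
def numCycles {α : Type*} [Fintype α] [DecidableEq α] (σ : Equiv.Perm α) : ℕ :=
  Multiset.card σ.cycleType + (Fintype.card α - σ.cycleType.sum)

/-- `x` lies in a cycle of `σ` all of whose elements are among the first `k` elements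
(i.e. elements `1,…,k`, represented by `Fin` values `< k`). -/
def IsKCycleElt {N : ℕ} (σ : Equiv.Perm (Fin N)) (k : ℕ) (x : Fin N) : Prop :=
  ∀ y, σ.SameCycle x y → (y : ℕ) < k

/-- The length of the cycle of `σ` containing `x` (fixed points give length `1`). -/
noncomputable def cycleLen {N : ℕ} (σ : Equiv.Perm (Fin N)) (x : Fin N) : ℕ :=
  Nat.card {y // σ.SameCycle x y}

/-- `C_{d,k}(j)`: permutations `σ` of `{1,…,d+1}` with exactly `j+1` cycles such that every
cycle contained in `{1,…,k}` has odd length, together with a 2-coloring (red/blue, encoded by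
`Bool`) of those cycles. The coloring is encoded as a function on elements that is constant on
cycles and normalized to `false` outside cycles contained in `{1,…,k}`. -/
def CSet (d k j : ℕ) : Type :=
  {p : Equiv.Perm (Fin (d + 1)) × (Fin (d + 1) → Bool) //
    numCycles p.1 = j + 1 ∧
    (∀ x, IsKCycleElt p.1 k x → Odd (cycleLen p.1 x)) ∧
    (∀ x y, p.1.SameCycle x y → p.2 x = p.2 y) ∧
    (∀ x, ¬ IsKCycleElt p.1 k x → p.2 x = false)}


open Equiv Equiv.Perm

namespace Stmt4

variable {α β : Type*}

/-- The setoid of `SameCycle`. -/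
def scs (σ : Perm α) : Setoid α :=
  ⟨σ.SameCycle, ⟨Equiv.Perm.SameCycle.refl σ, fun h => h.symm, fun h h' => h.trans h'⟩⟩

lemma scs_rel (σ : Perm α) (x y : α) : (scs σ).r x y ↔ σ.SameCycle x y := Iff.rfl

/-- number of cycles as number of classes -/
noncomputable def nc (σ : Perm α) : ℕ := Nat.card (Quotient (scs σ))

lemma sameCycle_iff_nat [Finite α] {σ : Perm α} {x y : α} :
    σ.SameCycle x y ↔ ∃ m : ℕ, (σ ^ m) x = y := by
  constructor
  · intro h
    obtain ⟨i, _, hi⟩ := h.exists_pow_eq'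
    exact ⟨i, hi⟩
  · rintro ⟨m, rfl⟩
    exact ⟨m, by simp⟩

lemma eq_of_sameCycle_fixed {σ : Perm α} {x y : α} (h : σ.SameCycle x y) (hx : σ x = x) :
    y = x := by
  obtain ⟨i, rfl⟩ := h
  exact Equiv.Perm.zpow_apply_eq_self_of_apply_eq_self hx i

variable [Fintype α] [DecidableEq α]

lemma numCycles_eq_nc (σ : Perm α) : numCycles σ = nc σ := by
  classical
  -- build equivalence Quotient (scs σ) ≃ cycleFactorsFinset ⊕ {x // x ∉ support}
  have hwd : ∀ x y : α, σ.SameCycle x y →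
      (if hx : x ∈ σ.support then (Sum.inl ⟨σ.cycleOf x, cycleOf_mem_cycleFactorsFinset_iff.mpr hx⟩ :
        σ.cycleFactorsFinset ⊕ {z : α // z ∉ σ.support})
       else Sum.inr ⟨x, hx⟩) =
      (if hy : y ∈ σ.support then Sum.inl ⟨σ.cycleOf y, cycleOf_mem_cycleFactorsFinset_iff.mpr hy⟩
       else Sum.inr ⟨y, hy⟩) := by
    intro x y hxy
    by_cases hx : x ∈ σ.support
    · have hy : y ∈ σ.support := by
        by_contra hy
        have := eq_of_sameCycle_fixed hxy.symm (by simpa using hy)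
        exact hy (this ▸ hx)
      rw [dif_pos hx, dif_pos hy]
      have hco := hxy.cycleOf_eq
      congr 1
      exact Subtype.ext hco
    · have hyx := eq_of_sameCycle_fixed hxy (by simpa using hx)
      subst hyx
      rw [dif_neg hx]
  let F : Quotient (scs σ) → σ.cycleFactorsFinset ⊕ {z : α // z ∉ σ.support} :=
    Quotient.lift _ hwd
  have hFsurj : Function.Surjective F := by
    rintro (⟨c, hc⟩ | ⟨x, hx⟩)
    · have hc' := hc
      rw [Equiv.Perm.mem_cycleFactorsFinset_iff] at hc'
      obtain ⟨a, ha⟩ := hc'.1.nonempty_support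
      have hax : a ∈ σ.support := by
        rw [Equiv.Perm.mem_support]
        rw [← hc'.2 a ha]
        exact Equiv.Perm.mem_support.mp ha
      refine ⟨⟦a⟧, ?_⟩
      show (if h : a ∈ σ.support then _ else _) = _
      rw [dif_pos hax]
      congr 1
      exact Subtype.ext (Equiv.Perm.cycle_is_cycleOf ha hc).symm
    · exact ⟨⟦x⟧, by show (if h : x ∈ σ.support then _ else _) = _; rw [dif_neg hx]⟩
  have hFinj : Function.Injective F := by
    intro q1 q2
    induction q1 using Quotient.ind with | _ x =>
    induction q2 using Quotient.ind with | _ y =>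
    intro h
    change (if hx : x ∈ σ.support then _ else _) = (if hy : y ∈ σ.support then _ else _) at h
    by_cases hx : x ∈ σ.support <;> by_cases hy : y ∈ σ.support
    · rw [dif_pos hx, dif_pos hy] at h
      have hco : σ.cycleOf x = σ.cycleOf y := congrArg Subtype.val (Sum.inl.inj h)
      apply Quotient.sound
      show σ.SameCycle x y
      have : y ∈ (σ.cycleOf y).support := Equiv.Perm.mem_support_cycleOf_iff.mpr ⟨SameCycle.refl _ _, hy⟩
      rw [← hco] at this
      exact (Equiv.Perm.mem_support_cycleOf_iff.mp this).1
    · rw [dif_pos hx, dif_neg hy] at h; exact absurd h (by simp)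
    · rw [dif_neg hx, dif_pos hy] at h; exact absurd h (by simp)
    · rw [dif_neg hx, dif_neg hy] at h
      have : x = y := congrArg Subtype.val (Sum.inr.inj h)
      exact this ▸ rfl
  have hcard : nc σ = Nat.card (σ.cycleFactorsFinset ⊕ {z : α // z ∉ σ.support}) :=
    Nat.card_congr (Equiv.ofBijective F ⟨hFinj, hFsurj⟩)
  rw [numCycles, hcard, Nat.card_sum]
  congr 1
  · rw [Nat.card_eq_fintype_card, Fintype.card_coe, Equiv.Perm.cycleType_def, Multiset.card_map]
    rfl
  · rw [Nat.card_eq_fintype_card, Equiv.Perm.sum_cycleType]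
    have h1 : Fintype.card {z : α // z ∉ σ.support} = Fintype.card {z : α // z ∈ σ.supportᶜ} := by
      apply Fintype.card_congr
      exact Equiv.subtypeEquivRight (by intro x; simp)
    rw [h1, Fintype.card_coe, Finset.card_compl]

end Stmt4

section L2
open Equiv Equiv.Perm
namespace Stmt4

variable {α β : Type*}

def Pure (S : α → Prop) (σ : Perm α) (x : α) : Prop := ∀ z, σ.SameCycle x z → S z

noncomputable def len (σ : Perm α) (x : α) : ℕ := Nat.card {z // σ.SameCycle x z}

lemma len_eq_of_sameCycle {σ : Perm α} {x z : α} (h : σ.SameCycle x z) :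
    len σ x = len σ z :=
  Nat.card_congr (Equiv.subtypeEquivRight fun w => ⟨fun hw => h.symm.trans hw, fun hw => h.trans hw⟩)

lemma pure_of_sameCycle {S : α → Prop} {σ : Perm α} {x z : α} (h : σ.SameCycle x z)
    (hp : Pure S σ x) : Pure S σ z := fun w hw => hp w (h.trans hw)

def GSet (α : Type*) [Fintype α] [DecidableEq α] (S : α → Prop) (c : ℕ) : Type _ :=
  {p : Perm α × (α → Bool) //
    numCycles p.1 = c ∧
    (∀ x, Pure S p.1 x → Odd (len p.1 x)) ∧
    (∀ x z, p.1.SameCycle x z → p.2 x = p.2 z) ∧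
    (∀ x, ¬ Pure S p.1 x → p.2 x = false)}

instance (α : Type*) [Fintype α] [DecidableEq α] (S : α → Prop) (c : ℕ) :
    Finite (GSet α S c) := by
  unfold GSet; infer_instance

section Conj

variable [Fintype α] [DecidableEq α] [Fintype β] [DecidableEq β]
variable (e : α ≃ β) (σ : Perm α)

omit [Fintype α] [DecidableEq α] [Fintype β] [DecidableEq β] in
lemma conj_apply (x : α) : (e.permCongr σ) (e x) = e (σ x) := by
  simp [Equiv.permCongr_apply]

omit [Fintype α] [DecidableEq α] [Fintype β] [DecidableEq β] in
lemma conj_pow (m : ℕ) (x : α) : ((e.permCongr σ) ^ m) (e x) = e ((σ ^ m) x) := by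
  induction m generalizing x with
  | zero => simp
  | succ m ih =>
    rw [pow_succ, Equiv.Perm.mul_apply, pow_succ, Equiv.Perm.mul_apply, conj_apply, ih]

lemma conj_sc {x z : α} : (e.permCongr σ).SameCycle (e x) (e z) ↔ σ.SameCycle x z := by
  rw [sameCycle_iff_nat, sameCycle_iff_nat]
  constructor
  · rintro ⟨m, hm⟩; exact ⟨m, e.injective (by rw [← conj_pow]; exact hm)⟩
  · rintro ⟨m, hm⟩; exact ⟨m, by rw [conj_pow, hm]⟩

lemma conj_sc' {x z : β} :
    (e.permCongr σ).SameCycle x z ↔ σ.SameCycle (e.symm x) (e.symm z) := by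
  rw [← conj_sc e σ, e.apply_symm_apply, e.apply_symm_apply]

lemma conj_len (x : α) : len (e.permCongr σ) (e x) = len σ x :=
  (Nat.card_congr (e.subtypeEquiv fun z => (conj_sc e σ (x := x) (z := z)).symm)).symm

lemma conj_pure {S : α → Prop} {T : β → Prop} (hS : ∀ a, S a ↔ T (e a)) (x : α) :
    Pure T (e.permCongr σ) (e x) ↔ Pure S σ x := by
  constructor
  · intro h z hz
    rw [hS]
    exact h (e z) ((conj_sc e σ).mpr hz)
  · intro h w hw
    rw [conj_sc' e σ, e.symm_apply_apply] at hw
    have := h _ hw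
    rw [hS, e.apply_symm_apply] at this
    exact this

lemma conj_numCycles : numCycles (e.permCongr σ) = numCycles σ := by
  rw [numCycles_eq_nc, numCycles_eq_nc, nc, nc]
  apply Nat.card_congr
  exact Quotient.congr e.symm (fun a b => conj_sc' e σ)

variable {S : α → Prop} {T : β → Prop}

/-- forward transport map on GSet data -/
def gmap (hS : ∀ a, S a ↔ T (e a)) (c : ℕ) (t : GSet α S c) : GSet β T c := by
  refine ⟨(e.permCongr t.1.1, t.1.2 ∘ e.symm), ?_, ?_, ?_, ?_⟩
  · rw [conj_numCycles]; exact t.2.1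
  · intro w hw
    have hw' : Pure T (e.permCongr t.1.1) (e (e.symm w)) := by rwa [e.apply_symm_apply]
    rw [conj_pure e t.1.1 hS] at hw'
    have := t.2.2.1 _ hw'
    rwa [← conj_len e t.1.1 (e.symm w), e.apply_symm_apply] at this
  · intro w w' hww
    rw [conj_sc' e t.1.1] at hww
    exact t.2.2.2.1 _ _ hww
  · intro w hw
    apply t.2.2.2.2
    intro hp
    apply hw
    have := (conj_pure e t.1.1 hS (e.symm w)).mpr hp
    rwa [e.apply_symm_apply] at this

lemma card_gset_congr (hS : ∀ a, S a ↔ T (e a)) (c : ℕ) :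
    Nat.card (GSet α S c) = Nat.card (GSet β T c) := by
  have hS' : ∀ b, T b ↔ S (e.symm b) := by
    intro b
    conv_lhs => rw [← e.apply_symm_apply b]
    exact (hS _).symm
  apply Nat.card_eq_of_bijective (gmap e hS c)
  constructor
  · intro t1 t2 h
    apply Subtype.ext
    have h1 : e.permCongr t1.1.1 = e.permCongr t2.1.1 := congrArg (fun u => u.1.1) h
    have h2 : t1.1.2 ∘ e.symm = t2.1.2 ∘ e.symm := congrArg (fun u => u.1.2) h
    apply Prod.ext
    · exact e.permCongr.injective h1
    · funext x
      have := congrFun h2 (e x)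
      simpa using this
  · intro u
    refine ⟨gmap e.symm hS' c u, ?_⟩
    apply Subtype.ext
    apply Prod.ext
    · apply Equiv.ext; intro x
      show (e.permCongr (e.symm.permCongr u.1.1)) x = u.1.1 x
      simp [Equiv.permCongr_apply]
    · funext x
      show (u.1.2 ∘ e ∘ e.symm) x = u.1.2 x
      simp

end Conj

end Stmt4
end L2

section L3
open Equiv Equiv.Perm
namespace Stmt4

variable {n : ℕ}

section Insert

variable (e : Perm (Fin n)) (y : Fin n)

/-- the permutation with `0` inserted just before `y.succ` -/
def ins : Perm (Fin (n + 1)) := Equiv.Perm.decomposeFin.symm (y.succ, e)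

/-- the permutation extended with `0` as a fixed point -/
def ext : Perm (Fin (n + 1)) := Equiv.Perm.decomposeFin.symm (0, e)

lemma ins_zero : ins e y 0 = y.succ := Equiv.Perm.decomposeFin_symm_apply_zero _ _

lemma ins_succ_of_ne {x : Fin n} (h : e x ≠ y) : ins e y x.succ = (e x).succ := by
  rw [ins, Equiv.Perm.decomposeFin_symm_apply_succ]
  exact Equiv.swap_apply_of_ne_of_ne (Fin.succ_ne_zero _)
    (fun hc => h (Fin.succ_injective _ hc))

lemma ins_succ_of_eq {x : Fin n} (h : e x = y) : ins e y x.succ = 0 := by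
  rw [ins, Equiv.Perm.decomposeFin_symm_apply_succ, h]
  exact Equiv.swap_apply_right _ _

lemma ext_zero : ext e 0 = 0 := Equiv.Perm.decomposeFin_symm_apply_zero _ _

lemma ext_succ (x : Fin n) : ext e x.succ = (e x).succ := by
  rw [ext, Equiv.Perm.decomposeFin_symm_apply_succ]
  simp

/- ### SameCycle transfer for `ext` -/

lemma ext_pow_succ (m : ℕ) (x : Fin n) : ((ext e) ^ m) x.succ = ((e ^ m) x).succ := by
  induction m generalizing x with
  | zero => simp
  | succ m ih =>
    rw [pow_succ, Equiv.Perm.mul_apply, pow_succ, Equiv.Perm.mul_apply, ext_succ, ih]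

lemma ext_pow_zero (m : ℕ) : ((ext e) ^ m) 0 = 0 := by
  induction m with
  | zero => rfl
  | succ m ih => rw [pow_succ, Equiv.Perm.mul_apply, ext_zero, ih]

lemma ext_sc_succ {a b : Fin n} : (ext e).SameCycle a.succ b.succ ↔ e.SameCycle a b := by
  rw [sameCycle_iff_nat, sameCycle_iff_nat]
  constructor
  · rintro ⟨m, hm⟩
    rw [ext_pow_succ] at hm
    exact ⟨m, Fin.succ_injective _ hm⟩
  · rintro ⟨m, hm⟩
    exact ⟨m, by rw [ext_pow_succ, hm]⟩

lemma ext_sc_zero {z : Fin (n + 1)} : (ext e).SameCycle 0 z ↔ z = 0 := by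
  constructor
  · intro h
    obtain ⟨m, hm⟩ := sameCycle_iff_nat.mp h
    rw [ext_pow_zero] at hm
    exact hm.symm
  · rintro rfl; exact SameCycle.refl _ _

/- ### SameCycle transfer for `ins` -/

lemma ins_sc_step (c : Fin n) : (ins e y).SameCycle c.succ (e c).succ := by
  by_cases h : e c = y
  · refine ⟨2, ?_⟩
    have h2 : ((ins e y) ^ (2:ℤ)) c.succ = (ins e y) ((ins e y) c.succ) := by
      rw [show (2:ℤ) = ((2:ℕ):ℤ) by norm_num, zpow_natCast]
      rw [pow_succ, pow_one, Equiv.Perm.mul_apply]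
    rw [h2, ins_succ_of_eq e y h, ins_zero, h]
  · exact ⟨1, by rw [zpow_one, ins_succ_of_ne e y h]⟩

lemma ins_sc_of_sc {a b : Fin n} (h : e.SameCycle a b) :
    (ins e y).SameCycle a.succ b.succ := by
  obtain ⟨m, hm⟩ := sameCycle_iff_nat.mp h
  subst hm
  clear h
  induction m generalizing a with
  | zero => exact SameCycle.refl _ _
  | succ m ih =>
    have heq : ((e ^ (m+1)) a) = (e ^ m) (e a) := by
      rw [pow_succ, Equiv.Perm.mul_apply]
    rw [heq]
    exact (ins_sc_step e y a).trans (ih (a := e a))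

lemma ins_sc_down : ∀ m : ℕ, ∀ a b : Fin n, ((ins e y) ^ m) a.succ = b.succ →
    e.SameCycle a b := by
  intro m
  induction m using Nat.strong_induction_on with
  | _ m ih =>
    intro a b h
    match m, h with
    | 0, h =>
      have : a = b := Fin.succ_injective _ h
      exact this ▸ SameCycle.refl _ _
    | (m+1), h =>
      rw [pow_succ, Equiv.Perm.mul_apply] at h
      by_cases hc : e a = y
      · rw [ins_succ_of_eq e y hc] at h
        match m, h with
        | 0, h => exact absurd h.symm (Fin.succ_ne_zero _)
        | (m'+1), h =>
          rw [pow_succ, Equiv.Perm.mul_apply, ins_zero] at h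
          have h1 : e.SameCycle y b := ih m' (by omega) y b h
          have h2 : e.SameCycle a y := by rw [← hc]; exact ⟨1, by simp⟩
          exact h2.trans h1
      · rw [ins_succ_of_ne e y hc] at h
        have h1 : e.SameCycle (e a) b := ih m (by omega) (e a) b h
        have h2 : e.SameCycle a (e a) := ⟨1, by simp⟩
        exact h2.trans h1

lemma ins_sc_succ {a b : Fin n} : (ins e y).SameCycle a.succ b.succ ↔ e.SameCycle a b := by
  constructor
  · intro h
    obtain ⟨m, hm⟩ := sameCycle_iff_nat.mp h
    exact ins_sc_down e y m a b hm
  · exact ins_sc_of_sc e y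

lemma ins_sc_zero_succ : (ins e y).SameCycle 0 y.succ := ⟨1, by rw [zpow_one, ins_zero]⟩

lemma ins_sc_zero {b : Fin n} : (ins e y).SameCycle 0 b.succ ↔ e.SameCycle y b := by
  constructor
  · intro h
    exact (ins_sc_succ e y).mp ((ins_sc_zero_succ e y).symm.trans h)
  · intro h
    exact (ins_sc_zero_succ e y).trans ((ins_sc_succ e y).mpr h)

end Insert

end Stmt4
end L3

section L4
open Equiv Equiv.Perm
namespace Stmt4

variable {n : ℕ}

lemma nat_card_option (β : Type*) [Finite β] : Nat.card (Option β) = Nat.card β + 1 := by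
  have E : Option β ≃ β ⊕ (PUnit : Type) := Equiv.optionEquivSumPUnit β
  rw [Nat.card_congr E, Nat.card_sum]
  simp

section Insert2

variable (e : Perm (Fin n)) (y : Fin n)

lemma ins_numCycles : numCycles (ins e y) = numCycles e := by
  rw [numCycles_eq_nc, numCycles_eq_nc, nc, nc]
  apply Nat.card_congr
  have wd : ∀ u v : Fin (n+1), (ins e y).SameCycle u v →
      (Fin.cases (Quotient.mk (scs e) y) (fun a => Quotient.mk (scs e) a) u :
        Quotient (scs e)) =
      Fin.cases (Quotient.mk (scs e) y) (fun a => Quotient.mk (scs e) a) v := by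
    intro u v huv
    induction u using Fin.cases with
    | zero =>
      induction v using Fin.cases with
      | zero => rfl
      | succ b =>
        rw [Fin.cases_zero, Fin.cases_succ]
        exact Quotient.sound ((ins_sc_zero e y).mp huv)
    | succ a =>
      induction v using Fin.cases with
      | zero =>
        rw [Fin.cases_zero, Fin.cases_succ]
        exact Quotient.sound ((ins_sc_zero e y).mp huv.symm).symm
      | succ b =>
        rw [Fin.cases_succ, Fin.cases_succ]
        exact Quotient.sound ((ins_sc_succ e y).mp huv)
  refine ⟨Quotient.lift _ wd, Quotient.lift (fun a => Quotient.mk (scs (ins e y)) a.succ)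
    (fun a b hab => Quotient.sound ((ins_sc_succ e y).mpr hab)), ?_, ?_⟩
  · intro q
    induction q using Quotient.ind with | _ x =>
    induction x using Fin.cases with
    | zero =>
      show Quotient.mk _ y.succ = Quotient.mk _ 0
      exact Quotient.sound (ins_sc_zero_succ e y).symm
    | succ a => rfl
  · intro q
    induction q using Quotient.ind with | _ a =>
    rfl

lemma ext_numCycles : numCycles (ext e) = numCycles e + 1 := by
  rw [numCycles_eq_nc, numCycles_eq_nc, nc, nc]
  have wd : ∀ u v : Fin (n+1), (ext e).SameCycle u v →
      (Fin.cases none (fun a => some (Quotient.mk (scs e) a)) u :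
        Option (Quotient (scs e))) =
      Fin.cases none (fun a => some (Quotient.mk (scs e) a)) v := by
    intro u v huv
    induction u using Fin.cases with
    | zero =>
      have := (ext_sc_zero e).mp huv
      subst this; rfl
    | succ a =>
      induction v using Fin.cases with
      | zero => exact absurd ((ext_sc_zero e).mp huv.symm) (Fin.succ_ne_zero a)
      | succ b =>
        rw [Fin.cases_succ, Fin.cases_succ]
        exact congrArg some (Quotient.sound ((ext_sc_succ e).mp huv))
  have E : Quotient (scs (ext e)) ≃ Option (Quotient (scs e)) := by
    refine ⟨Quotient.lift _ wd,
      fun o => Option.rec (Quotient.mk (scs (ext e)) 0)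
        (fun q => Quotient.lift (fun a => Quotient.mk (scs (ext e)) a.succ)
          (fun a b hab => Quotient.sound ((ext_sc_succ e).mpr hab)) q) o, ?_, ?_⟩
    · intro q
      induction q using Quotient.ind with | _ x =>
      induction x using Fin.cases with
      | zero => rfl
      | succ a => rfl
    · intro o
      match o with
      | none => rfl
      | some q =>
        induction q using Quotient.ind with | _ a =>
        rfl
  rw [Nat.card_congr E, nat_card_option]

lemma ins_len_of_not {b : Fin n} (h : ¬ e.SameCycle b y) :
    len (ins e y) b.succ = len e b := by
  have hbij : Function.Bijective
      (fun a : {a // e.SameCycle b a} => (⟨a.1.succ, (ins_sc_succ e y).mpr a.2⟩ :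
        {z // (ins e y).SameCycle b.succ z})) := by
    constructor
    · intro a1 a2 hh
      exact Subtype.ext (Fin.succ_injective _ (congrArg Subtype.val hh))
    · rintro ⟨z, hz⟩
      induction z using Fin.cases with
      | zero =>
        exfalso
        exact h ((ins_sc_zero e y).mp hz.symm).symm
      | succ a =>
        exact ⟨⟨a, (ins_sc_succ e y).mp hz⟩, rfl⟩
  exact (Nat.card_congr (Equiv.ofBijective _ hbij)).symm

lemma ins_len_of_yes {b : Fin n} (h : e.SameCycle b y) :
    len (ins e y) b.succ = len e b + 1 := by
  have hbij : Function.Bijective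
      (fun a : Option {a // e.SameCycle b a} =>
        (Option.rec ⟨0, ((ins_sc_zero e y).mpr h.symm).symm⟩
          (fun a => ⟨a.1.succ, (ins_sc_succ e y).mpr a.2⟩) a :
          {z // (ins e y).SameCycle b.succ z})) := by
    constructor
    · intro a1 a2 hh
      have hv := congrArg Subtype.val hh
      match a1, a2 with
      | none, none => rfl
      | none, some a2 => exact absurd hv.symm (Fin.succ_ne_zero _)
      | some a1, none => exact absurd hv (Fin.succ_ne_zero _)
      | some a1, some a2 =>
        exact congrArg some (Subtype.ext (Fin.succ_injective _ hv))
    · rintro ⟨z, hz⟩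
      induction z using Fin.cases with
      | zero => exact ⟨none, Subtype.ext rfl⟩
      | succ a => exact ⟨some ⟨a, (ins_sc_succ e y).mp hz⟩, rfl⟩
  have := Nat.card_congr (Equiv.ofBijective _ hbij)
  rw [nat_card_option] at this
  exact this.symm

lemma ins_len_zero : len (ins e y) 0 = len e y + 1 := by
  rw [len_eq_of_sameCycle (ins_sc_zero_succ e y)]
  exact ins_len_of_yes e y (SameCycle.refl _ _)

lemma ext_len_succ (b : Fin n) : len (ext e) b.succ = len e b := by
  have hbij : Function.Bijective
      (fun a : {a // e.SameCycle b a} => (⟨a.1.succ, (ext_sc_succ e).mpr a.2⟩ :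
        {z // (ext e).SameCycle b.succ z})) := by
    constructor
    · intro a1 a2 hh
      exact Subtype.ext (Fin.succ_injective _ (congrArg Subtype.val hh))
    · rintro ⟨z, hz⟩
      induction z using Fin.cases with
      | zero => exact absurd ((ext_sc_zero e).mp hz.symm) (Fin.succ_ne_zero b)
      | succ a => exact ⟨⟨a, (ext_sc_succ e).mp hz⟩, rfl⟩
  exact (Nat.card_congr (Equiv.ofBijective _ hbij)).symm

lemma ext_len_zero : len (ext e) 0 = 1 := by
  apply Nat.card_eq_one_iff_exists.mpr
  exact ⟨⟨0, SameCycle.refl _ _⟩, fun z => Subtype.ext ((ext_sc_zero e).mp z.2)⟩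

section Purity

variable {S : Fin n → Prop} {S' : Fin (n + 1) → Prop}

lemma ext_pure_succ (hS : ∀ a, S' a.succ ↔ S a) (b : Fin n) : Pure S' (ext e) b.succ ↔ Pure S e b := by
  constructor
  · intro h a ha
    exact (hS a).mp (h a.succ ((ext_sc_succ e).mpr ha))
  · intro h z hz
    induction z using Fin.cases with
    | zero => exact absurd ((ext_sc_zero e).mp hz.symm) (Fin.succ_ne_zero b)
    | succ a => exact (hS a).mpr (h a ((ext_sc_succ e).mp hz))

lemma ext_pure_zero : Pure S' (ext e) 0 ↔ S' 0 := by
  constructor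
  · intro h; exact h 0 (SameCycle.refl _ _)
  · intro h z hz
    rw [(ext_sc_zero e).mp hz]; exact h

lemma ins_pure_succ (hS : ∀ a, S' a.succ ↔ S a) {b : Fin n} (hb : ¬ e.SameCycle b y) :
    Pure S' (ins e y) b.succ ↔ Pure S e b := by
  constructor
  · intro h a ha
    exact (hS a).mp (h a.succ ((ins_sc_succ e y).mpr ha))
  · intro h z hz
    induction z using Fin.cases with
    | zero => exact absurd ((ins_sc_zero e y).mp hz.symm).symm hb
    | succ a => exact (hS a).mpr (h a ((ins_sc_succ e y).mp hz))

lemma ins_impure_zero (h0 : ¬ S' 0) : ¬ Pure S' (ins e y) 0 :=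
  fun h => h0 (h 0 (SameCycle.refl _ _))

lemma ins_impure_of_sc {b : Fin n} (h0 : ¬ S' 0) (hb : e.SameCycle b y) :
    ¬ Pure S' (ins e y) b.succ := by
  intro h
  exact h0 (h 0 ((ins_sc_zero e y).mpr hb.symm).symm)

end Purity

end Insert2

end Stmt4
end L4

section L5
open Equiv Equiv.Perm
namespace Stmt4

variable {n : ℕ}

lemma card_fiber_sum {T I : Type*} [Finite T] [Fintype I] (Φ : T → I) :
    Nat.card T = ∑ p : I, Nat.card {t // Φ t = p} := by
  classical
  letI : Fintype T := Fintype.ofFinite T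
  rw [← Nat.card_congr (Equiv.sigmaFiberEquiv Φ), Nat.card_eq_fintype_card,
    Fintype.card_sigma]
  simp [Nat.card_eq_fintype_card]

lemma numCycles_pos {α : Type*} [Fintype α] [DecidableEq α] [Nonempty α] (σ : Perm α) :
    0 < numCycles σ := by
  rw [numCycles]
  by_cases h : Multiset.card σ.cycleType = 0
  · have h2 : σ.cycleType = 0 := Multiset.card_eq_zero.mp h
    rw [h2]
    simp [Fintype.card_pos]
  · omega

lemma gset_zero_empty {S : Fin n → Prop} (hn : 1 ≤ n) :
    Nat.card (GSet (Fin n) S 0) = 0 := by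
  have : IsEmpty (GSet (Fin n) S 0) := by
    constructor
    rintro ⟨⟨σ, f⟩, h1, -⟩
    have : Nonempty (Fin n) := ⟨⟨0, hn⟩⟩
    have h2 : numCycles σ = 0 := h1
    have := numCycles_pos σ
    omega
  exact Nat.card_of_isEmpty

lemma decomposeFin_fst (σ' : Perm (Fin (n+1))) : (Equiv.Perm.decomposeFin σ').1 = σ' 0 := by
  conv_rhs => rw [show σ' = Equiv.Perm.decomposeFin.symm (Equiv.Perm.decomposeFin σ')
    from (Equiv.symm_apply_apply _ _).symm]
  rw [Equiv.Perm.decomposeFin_symm_apply_zero]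

lemma perm_eq_decompose (σ' : Perm (Fin (n+1))) :
    σ' = Equiv.Perm.decomposeFin.symm (σ' 0, (Equiv.Perm.decomposeFin σ').2) := by
  rw [← decomposeFin_fst]
  exact (Equiv.symm_apply_apply _ _).symm

/-- marked objects: all `S`-pure cycles not through `y` odd and colored, cycle of `y`
uncolored -/
def MBSet (n : ℕ) (S : Fin n → Prop) (y : Fin n) (c' : ℕ) : Type :=
  {p : Perm (Fin n) × (Fin n → Bool) //
    numCycles p.1 = c' ∧
    (∀ b, ¬ p.1.SameCycle b y → Pure S p.1 b → Odd (len p.1 b)) ∧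
    (∀ x z, p.1.SameCycle x z → p.2 x = p.2 z) ∧
    (∀ b, (p.1.SameCycle b y ∨ ¬ Pure S p.1 b) → p.2 b = false)}

instance (n : ℕ) (S : Fin n → Prop) (y : Fin n) (c' : ℕ) : Finite (MBSet n S y c') := by
  unfold MBSet; infer_instance

section Fibers

variable {S : Fin n → Prop} {S' : Fin (n + 1) → Prop} {c : ℕ}

def extG (hS : ∀ a, S' a.succ ↔ S a) (h0 : ¬ S' 0) (u : GSet (Fin n) S c) :
    GSet (Fin (n+1)) S' (c+1) :=
    ⟨(ext u.1.1, Fin.cases false u.1.2), by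
      rw [ext_numCycles, u.2.1],
      by
        intro x hp
        induction x using Fin.cases with
        | zero => exact absurd ((ext_pure_zero u.1.1).mp hp) h0
        | succ b =>
          rw [ext_len_succ]
          exact u.2.2.1 b ((ext_pure_succ u.1.1 hS b).mp hp),
      by
        intro x z hxz
        induction x using Fin.cases with
        | zero =>
          have := (ext_sc_zero u.1.1).mp hxz
          subst this; rfl
        | succ a =>
          induction z using Fin.cases with
          | zero => exact absurd ((ext_sc_zero u.1.1).mp hxz.symm) (Fin.succ_ne_zero a)
          | succ b =>
            simp only [Fin.cases_succ]
            exact u.2.2.2.1 a b ((ext_sc_succ u.1.1).mp hxz),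
      by
        intro x hnp
        induction x using Fin.cases with
        | zero => rfl
        | succ b =>
          simp only [Fin.cases_succ]
          exact u.2.2.2.2 b (fun hp => hnp ((ext_pure_succ u.1.1 hS b).mpr hp))⟩

lemma card_fiber_zero (hS : ∀ a, S' a.succ ↔ S a) (h0 : ¬ S' 0) :
    Nat.card {t : GSet (Fin (n+1)) S' (c+1) // t.1.1 0 = 0} =
      Nat.card (GSet (Fin n) S c) := by
  symm
  apply Nat.card_eq_of_bijective (f := fun u => (⟨extG hS h0 u, ext_zero u.1.1⟩ :
    {t : GSet (Fin (n+1)) S' (c+1) // t.1.1 0 = 0}))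
  constructor
  · intro u1 u2 h
    have h1 : ext u1.1.1 = ext u2.1.1 := congrArg (fun t => t.1.1.1) h
    have h2 : (Fin.cases false u1.1.2 : Fin (n+1) → Bool) = Fin.cases false u2.1.2 :=
      congrArg (fun t => t.1.1.2) h
    apply Subtype.ext
    apply Prod.ext
    · have := Equiv.Perm.decomposeFin.symm.injective h1
      exact (Prod.ext_iff.mp this).2
    · funext b
      have := congrFun h2 b.succ
      rwa [Fin.cases_succ, Fin.cases_succ] at this
  · rintro ⟨⟨⟨σ', f'⟩, h1, h2, h3, h4⟩, hfix⟩
    set e := (Equiv.Perm.decomposeFin σ').2 with hedef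
    have he : σ' = ext e := by
      rw [ext, ← hfix]
      exact perm_eq_decompose σ'
    simp only [he] at h1 h2 h3 h4
    refine ⟨⟨(e, fun b => f' b.succ), ?_, ?_, ?_, ?_⟩, ?_⟩
    · show numCycles e = c
      rw [ext_numCycles] at h1; omega
    · intro b hp
      have := h2 b.succ ((ext_pure_succ e hS b).mpr hp)
      rwa [ext_len_succ] at this
    · intro a b hab
      exact h3 a.succ b.succ ((ext_sc_succ e).mpr hab)
    · intro b hnp
      exact h4 b.succ (fun hp => hnp ((ext_pure_succ e hS b).mp hp))
    · apply Subtype.ext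
      apply Subtype.ext
      apply Prod.ext
      · exact he.symm
      · funext x
        induction x using Fin.cases with
        | zero =>
          show false = f' 0
          exact (h4 0 (fun hp => h0 ((ext_pure_zero e).mp hp))).symm
        | succ b =>
          show (Fin.cases false (fun b => f' b.succ) : Fin (n+1) → Bool) b.succ = f' b.succ
          simp only [Fin.cases_succ]

def insG (hS : ∀ a, S' a.succ ↔ S a) (h0 : ¬ S' 0) (y : Fin n) (u : MBSet n S y (c+1)) :
    GSet (Fin (n+1)) S' (c+1) :=
    ⟨(ins u.1.1 y, Fin.cases false u.1.2), by
      rw [ins_numCycles, u.2.1],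
      by
        intro x hp
        induction x using Fin.cases with
        | zero => exact absurd hp (ins_impure_zero u.1.1 y h0)
        | succ b =>
          have hb : ¬ u.1.1.SameCycle b y := fun hsc =>
            (ins_impure_of_sc u.1.1 y h0 hsc) hp
          rw [ins_len_of_not u.1.1 y hb]
          exact u.2.2.1 b hb ((ins_pure_succ u.1.1 y hS hb).mp hp),
      by
        intro x z hxz
        induction x using Fin.cases with
        | zero =>
          induction z using Fin.cases with
          | zero => rfl
          | succ b =>
            simp only [Fin.cases_zero, Fin.cases_succ]
            exact (u.2.2.2.2 b (Or.inl ((ins_sc_zero u.1.1 y).mp hxz).symm)).symm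
        | succ a =>
          induction z using Fin.cases with
          | zero =>
            simp only [Fin.cases_zero, Fin.cases_succ]
            exact u.2.2.2.2 a (Or.inl ((ins_sc_zero u.1.1 y).mp hxz.symm).symm)
          | succ b =>
            simp only [Fin.cases_succ]
            exact u.2.2.2.1 a b ((ins_sc_succ u.1.1 y).mp hxz),
      by
        intro x hnp
        induction x using Fin.cases with
        | zero => rfl
        | succ b =>
          simp only [Fin.cases_succ]
          by_cases hsc : u.1.1.SameCycle b y
          · exact u.2.2.2.2 b (Or.inl hsc)
          · exact u.2.2.2.2 b (Or.inr (fun hp => hnp ((ins_pure_succ u.1.1 y hS hsc).mpr hp)))⟩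

lemma card_fiber_succ (hS : ∀ a, S' a.succ ↔ S a) (h0 : ¬ S' 0) (y : Fin n) :
    Nat.card {t : GSet (Fin (n+1)) S' (c+1) // t.1.1 0 = y.succ} =
      Nat.card (MBSet n S y (c+1)) := by
  symm
  apply Nat.card_eq_of_bijective (f := fun u => (⟨insG hS h0 y u, ins_zero u.1.1 y⟩ :
    {t : GSet (Fin (n+1)) S' (c+1) // t.1.1 0 = y.succ}))
  constructor
  · intro u1 u2 h
    have h1 : ins u1.1.1 y = ins u2.1.1 y := congrArg (fun t => t.1.1.1) h
    have h2 : (Fin.cases false u1.1.2 : Fin (n+1) → Bool) = Fin.cases false u2.1.2 :=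
      congrArg (fun t => t.1.1.2) h
    apply Subtype.ext
    apply Prod.ext
    · have := Equiv.Perm.decomposeFin.symm.injective h1
      exact (Prod.ext_iff.mp this).2
    · funext b
      have := congrFun h2 b.succ
      rwa [Fin.cases_succ, Fin.cases_succ] at this
  · rintro ⟨⟨⟨σ', f'⟩, h1, h2, h3, h4⟩, hfix⟩
    set e := (Equiv.Perm.decomposeFin σ').2 with hedef
    have he : σ' = ins e y := by
      rw [ins, ← hfix]
      exact perm_eq_decompose σ'
    simp only [he] at h1 h2 h3 h4
    have himp0 : ¬ Pure S' (ins e y) 0 := ins_impure_zero e y h0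
    refine ⟨⟨(e, fun b => f' b.succ), ?_, ?_, ?_, ?_⟩, ?_⟩
    · show numCycles e = c + 1
      rw [ins_numCycles] at h1; exact h1
    · intro b hb hp
      have := h2 b.succ ((ins_pure_succ e y hS hb).mpr hp)
      rwa [ins_len_of_not e y hb] at this
    · intro a b hab
      exact h3 a.succ b.succ ((ins_sc_succ e y).mpr hab)
    · intro b hd
      have hnp : ¬ Pure S' (ins e y) b.succ := by
        rcases hd with hsc | hnp
        · exact ins_impure_of_sc e y h0 hsc
        · by_cases hsc : e.SameCycle b y
          · exact ins_impure_of_sc e y h0 hsc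
          · exact fun hp => hnp ((ins_pure_succ e y hS hsc).mp hp)
      exact h4 b.succ hnp
    · apply Subtype.ext
      apply Subtype.ext
      apply Prod.ext
      · exact he.symm
      · funext x
        induction x using Fin.cases with
        | zero =>
          show false = f' 0
          exact (h4 0 himp0).symm
        | succ b =>
          show (Fin.cases false (fun b => f' b.succ) : Fin (n+1) → Bool) b.succ = f' b.succ
          simp only [Fin.cases_succ]

lemma card_mb_nonspecial {y : Fin n} {c' : ℕ} (hy : ¬ S y) :
    Nat.card (MBSet n S y c') = Nat.card (GSet (Fin n) S c') := by
  apply Nat.card_congr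
  apply Equiv.subtypeEquivRight
  rintro ⟨e, f⟩
  have key : ∀ b, e.SameCycle b y → ¬ Pure S e b := fun b hsc hp => hy (hp y hsc)
  constructor
  · rintro ⟨h1, h2, h3, h4⟩
    refine ⟨h1, ?_, h3, ?_⟩
    · intro b hp
      by_cases hsc : e.SameCycle b y
      · exact absurd hp (key b hsc)
      · exact h2 b hsc hp
    · intro b hnp
      exact h4 b (Or.inr hnp)
  · rintro ⟨h1, h2, h3, h4⟩
    refine ⟨h1, fun b _ hp => h2 b hp, h3, ?_⟩
    intro b hd
    rcases hd with hsc | hnp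
    · exact h4 b (key b hsc)
    · exact h4 b hnp

lemma card_mb_special {y : Fin n} {c' : ℕ} (hy : S y) :
    Nat.card (MBSet n S y c') =
      Nat.card (GSet (Fin n) (fun a => S a ∧ a ≠ y) c') := by
  apply Nat.card_congr
  apply Equiv.subtypeEquivRight
  rintro ⟨e, f⟩
  have key : ∀ b, Pure (fun a => S a ∧ a ≠ y) e b ↔ (Pure S e b ∧ ¬ e.SameCycle b y) := by
    intro b
    constructor
    · intro hp
      refine ⟨fun z hz => (hp z hz).1, fun hsc => (hp y hsc).2 rfl⟩
    · rintro ⟨hp, hsc⟩ z hz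
      exact ⟨hp z hz, fun hzy => hsc (hzy ▸ hz)⟩
  constructor
  · rintro ⟨h1, h2, h3, h4⟩
    refine ⟨h1, ?_, h3, ?_⟩
    · intro b hp
      rw [key] at hp
      exact h2 b hp.2 hp.1
    · intro b hnp
      rw [key] at hnp
      by_cases hsc : e.SameCycle b y
      · exact h4 b (Or.inl hsc)
      · exact h4 b (Or.inr (fun hp => hnp ⟨hp, hsc⟩))
  · rintro ⟨h1, h2, h3, h4⟩
    refine ⟨h1, ?_, h3, ?_⟩
    · intro b hsc hp
      exact h2 b ((key b).mpr ⟨hp, hsc⟩)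
    · intro b hd
      apply h4
      rw [key]
      rintro ⟨hp, hsc⟩
      rcases hd with h | h
      · exact hsc h
      · exact h hp

end Fibers

/-- canonical special set: the `k` largest elements -/
def SP (n k : ℕ) : Fin n → Prop := fun x => n - k ≤ (x : ℕ)

instance (n k : ℕ) : DecidablePred (SP n k) := fun _ => Nat.decLe _ _

/-- the fundamental cardinality -/
noncomputable def g (n k c : ℕ) : ℕ := Nat.card (GSet (Fin n) (SP n k) c)

lemma hS_SP {k : ℕ} (hk : k ≤ n) : ∀ a : Fin n, SP (n+1) k a.succ ↔ SP n k a := by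
  intro a
  show n + 1 - k ≤ (a : ℕ) + 1 ↔ n - k ≤ (a : ℕ)
  omega

lemma h0_SP {k : ℕ} (hk : k ≤ n) : ¬ SP (n+1) k 0 := by
  show ¬ (n + 1 - k ≤ 0)
  omega

lemma card_special (k : ℕ) (hk : k ≤ n) :
    (Finset.univ.filter (fun y : Fin n => SP n k y)).card = k := by
  rw [← Fintype.card_subtype]
  have E : {y : Fin n // SP n k y} ≃ Fin k := by
    refine ⟨fun y => ⟨(y.1 : ℕ) - (n - k), by have := y.1.2; have := y.2; unfold SP at *; omega⟩,
      fun j => ⟨⟨(j : ℕ) + (n - k), by have := j.2; omega⟩,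
        show n - k ≤ (j : ℕ) + (n - k) by omega⟩, ?_, ?_⟩
    · rintro ⟨⟨yv, hyv⟩, hy⟩
      have : n - k ≤ yv := hy
      apply Subtype.ext; apply Fin.ext
      show (yv - (n - k)) + (n - k) = yv
      omega
    · rintro ⟨jv, hjv⟩
      apply Fin.ext
      show (jv + (n - k)) - (n - k) = jv
      omega
  rw [Fintype.card_congr E, Fintype.card_fin]

lemma card_gset_minus {k c' : ℕ} (hk : k ≤ n) {y : Fin n} (hy : SP n k y) :
    Nat.card (GSet (Fin n) (fun a => SP n k a ∧ a ≠ y) c') = g n (k-1) c' := by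
  have hk1 : 1 ≤ k := by
    by_contra h
    have : k = 0 := by omega
    subst this
    have := y.2
    exact absurd hy (by show ¬ (n - 0 ≤ (y:ℕ)); omega)
  have hwlt : n - k < n := by have := y.2; omega
  set w : Fin n := ⟨n - k, hwlt⟩ with hw
  apply card_gset_congr (Equiv.swap y w)
  intro a
  have hyval : n - k ≤ (y : ℕ) := hy
  by_cases hay : a = y
  · rw [hay, Equiv.swap_apply_left]
    show (SP n k y ∧ y ≠ y) ↔ (n - (k-1) ≤ n - k)
    constructor
    · rintro ⟨-, h⟩; exact absurd rfl h
    · intro h; omega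
  · by_cases haw : a = w
    · rw [haw, Equiv.swap_apply_right]
      show (SP n k w ∧ w ≠ y) ↔ (n - (k-1) ≤ (y : ℕ))
      have hwv : (w : ℕ) = n - k := rfl
      constructor
      · rintro ⟨-, hne⟩
        have : (w : ℕ) ≠ (y : ℕ) := fun h => hne (Fin.ext h)
        omega
      · intro h
        refine ⟨by show n - k ≤ (w : ℕ); omega, fun he => ?_⟩
        have : (w : ℕ) = (y : ℕ) := congrArg Fin.val he
        omega
    · rw [Equiv.swap_apply_of_ne_of_ne hay haw]
      show (SP n k a ∧ a ≠ y) ↔ (n - (k-1) ≤ (a : ℕ))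
      have hane : (a : ℕ) ≠ n - k := fun h => haw (Fin.ext h)
      constructor
      · rintro ⟨hsp, -⟩
        have : n - k ≤ (a : ℕ) := hsp
        omega
      · intro h
        refine ⟨by show n - k ≤ (a:ℕ); omega, hay⟩

/-- Recursion R1 -/
lemma R1 (k c : ℕ) (hk : k ≤ n) :
    g (n+1) k (c+1) = g n k c + (n - k) * g n k (c+1) + k * g n (k-1) (c+1) := by
  classical
  rw [g, card_fiber_sum (fun t : GSet (Fin (n+1)) (SP (n+1) k) (c+1) => t.1.1 0),
    Fin.sum_univ_succ]
  rw [card_fiber_zero (hS_SP hk) (h0_SP hk)]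
  have hsum : ∀ y : Fin n,
      Nat.card {t : GSet (Fin (n+1)) (SP (n+1) k) (c+1) // t.1.1 0 = y.succ} =
      if SP n k y then g n (k-1) (c+1) else g n k (c+1) := by
    intro y
    rw [card_fiber_succ (hS_SP hk) (h0_SP hk) y]
    by_cases hy : SP n k y
    · rw [if_pos hy, card_mb_special hy, card_gset_minus hk hy]
    · rw [if_neg hy, card_mb_nonspecial hy]
      rfl
  rw [Finset.sum_congr rfl (fun y _ => hsum y)]
  rw [Finset.sum_ite, Finset.sum_const, Finset.sum_const]
  rw [card_special k hk]
  have hcompl : (Finset.univ.filter (fun y : Fin n => ¬ SP n k y)).card = n - k := by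
    have := Finset.card_filter_add_card_filter_not
      (s := (Finset.univ : Finset (Fin n))) (p := fun y => SP n k y)
    rw [card_special k hk, Finset.card_univ, Fintype.card_fin] at this
    omega
  rw [hcompl, smul_eq_mul, smul_eq_mul,
    show Nat.card (GSet (Fin n) (SP n k) c) = g n k c from rfl]
  ring

end Stmt4
end L5

section L6
open Equiv Equiv.Perm
namespace Stmt4

variable {n : ℕ}

lemma sp_all (x : Fin n) : SP n n x := by
  show n - n ≤ (x : ℕ); omega

lemma len_fixed {α : Type*} {σ : Perm α} {x : α} (h : σ x = x) : len σ x = 1 :=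
  Nat.card_eq_one_iff_exists.mpr
    ⟨⟨x, SameCycle.refl _ _⟩, fun z => Subtype.ext (eq_of_sameCycle_fixed z.2 h)⟩

/-- marked all-special objects with an even cycle at the mark -/
def MCSet (n : ℕ) (y : Fin n) (c' : ℕ) : Type :=
  {p : Perm (Fin n) × (Fin n → Bool) //
    numCycles p.1 = c' ∧
    (∀ b, ¬ p.1.SameCycle b y → Odd (len p.1 b)) ∧
    Even (len p.1 y) ∧
    (∀ x z, p.1.SameCycle x z → p.2 x = p.2 z)}

instance (n : ℕ) (y : Fin n) (c' : ℕ) : Finite (MCSet n y c') := by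
  unfold MCSet; infer_instance

section AllSpecial

variable {c : ℕ}

/-- fiber over `0` in the all-special world -/
def extA (b : Bool) (u : GSet (Fin n) (SP n n) c) :
    GSet (Fin (n+1)) (SP (n+1) (n+1)) (c+1) :=
  ⟨(ext u.1.1, Fin.cases b u.1.2), by
    rw [ext_numCycles, u.2.1],
    by
      intro x hp
      induction x using Fin.cases with
      | zero => rw [ext_len_zero]; exact ⟨0, rfl⟩
      | succ a =>
        rw [ext_len_succ]
        exact u.2.2.1 a (fun z _ => sp_all z),
    by
      intro x z hxz
      induction x using Fin.cases with
      | zero =>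
        have := (ext_sc_zero u.1.1).mp hxz
        subst this; rfl
      | succ a =>
        induction z using Fin.cases with
        | zero => exact absurd ((ext_sc_zero u.1.1).mp hxz.symm) (Fin.succ_ne_zero a)
        | succ b =>
          simp only [Fin.cases_succ]
          exact u.2.2.2.1 a b ((ext_sc_succ u.1.1).mp hxz),
    by
      intro x hnp
      exact absurd (fun z _ => sp_all z) hnp⟩

lemma card_fiber_zero_all :
    Nat.card {t : GSet (Fin (n+1)) (SP (n+1) (n+1)) (c+1) // t.1.1 0 = 0} =
      2 * Nat.card (GSet (Fin n) (SP n n) c) := by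
  have h2 : (2 : ℕ) = Nat.card Bool := by
    rw [Nat.card_eq_fintype_card, Fintype.card_bool]
  rw [h2, ← Nat.card_prod]
  symm
  apply Nat.card_eq_of_bijective (f := fun bu : Bool × GSet (Fin n) (SP n n) c =>
    (⟨extA bu.1 bu.2, ext_zero bu.2.1.1⟩ :
      {t : GSet (Fin (n+1)) (SP (n+1) (n+1)) (c+1) // t.1.1 0 = 0}))
  constructor
  · intro u1 u2 h
    have h1 : ext u1.2.1.1 = ext u2.2.1.1 := congrArg (fun t => t.1.1.1) h
    have hferr : (Fin.cases u1.1 u1.2.1.2 : Fin (n+1) → Bool) = Fin.cases u2.1 u2.2.1.2 :=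
      congrArg (fun t => t.1.1.2) h
    apply Prod.ext
    · have := congrFun hferr 0
      simpa using this
    · apply Subtype.ext
      apply Prod.ext
      · have := Equiv.Perm.decomposeFin.symm.injective h1
        exact (Prod.ext_iff.mp this).2
      · funext b
        have := congrFun hferr b.succ
        simpa only [Fin.cases_succ] using this
  · rintro ⟨⟨⟨σ', f'⟩, h1, h2, h3, h4⟩, hfix⟩
    set e := (Equiv.Perm.decomposeFin σ').2 with hedef
    have he : σ' = ext e := by
      rw [ext, ← hfix]
      exact perm_eq_decompose σ'
    simp only [he] at h1 h2 h3
    refine ⟨⟨f' 0, ⟨(e, fun b => f' b.succ), ?_, ?_, ?_, ?_⟩⟩, ?_⟩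
    · show numCycles e = c
      rw [ext_numCycles] at h1; omega
    · intro b _
      have := h2 b.succ (fun z _ => sp_all z)
      rwa [ext_len_succ] at this
    · intro a b hab
      exact h3 a.succ b.succ ((ext_sc_succ e).mpr hab)
    · intro b hnp
      exact absurd (fun z _ => sp_all z) hnp
    · apply Subtype.ext
      apply Subtype.ext
      apply Prod.ext
      · exact he.symm
      · funext x
        induction x using Fin.cases with
        | zero => rfl
        | succ b =>
          show (Fin.cases (f' 0) (fun b => f' b.succ) : Fin (n+1) → Bool) b.succ = f' b.succ
          simp only [Fin.cases_succ]

/-- fiber over `y.succ` in the all-special world -/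
def insA (y : Fin n) (u : MCSet n y (c+1)) :
    GSet (Fin (n+1)) (SP (n+1) (n+1)) (c+1) :=
  ⟨(ins u.1.1 y, Fin.cases (u.1.2 y) u.1.2), by
    rw [ins_numCycles, u.2.1],
    by
      intro x hp
      induction x using Fin.cases with
      | zero =>
        rw [ins_len_zero]
        rw [Nat.odd_add_one, Nat.not_odd_iff_even]
        exact u.2.2.2.1
      | succ a =>
        by_cases hsc : u.1.1.SameCycle a y
        · rw [ins_len_of_yes u.1.1 y hsc, len_eq_of_sameCycle hsc]
          rw [Nat.odd_add_one, Nat.not_odd_iff_even]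
          exact u.2.2.2.1
        · rw [ins_len_of_not u.1.1 y hsc]
          exact u.2.2.1 a hsc,
    by
      intro x z hxz
      induction x using Fin.cases with
      | zero =>
        induction z using Fin.cases with
        | zero => rfl
        | succ b =>
          simp only [Fin.cases_zero, Fin.cases_succ]
          exact u.2.2.2.2 y b ((ins_sc_zero u.1.1 y).mp hxz)
      | succ a =>
        induction z using Fin.cases with
        | zero =>
          simp only [Fin.cases_zero, Fin.cases_succ]
          exact (u.2.2.2.2 y a ((ins_sc_zero u.1.1 y).mp hxz.symm)).symm
        | succ b =>
          simp only [Fin.cases_succ]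
          exact u.2.2.2.2 a b ((ins_sc_succ u.1.1 y).mp hxz),
    by
      intro x hnp
      exact absurd (fun z _ => sp_all z) hnp⟩

lemma card_fiber_succ_all (y : Fin n) :
    Nat.card {t : GSet (Fin (n+1)) (SP (n+1) (n+1)) (c+1) // t.1.1 0 = y.succ} =
      Nat.card (MCSet n y (c+1)) := by
  symm
  apply Nat.card_eq_of_bijective (f := fun u => (⟨insA y u, ins_zero u.1.1 y⟩ :
    {t : GSet (Fin (n+1)) (SP (n+1) (n+1)) (c+1) // t.1.1 0 = y.succ}))
  constructor
  · intro u1 u2 h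
    have h1 : ins u1.1.1 y = ins u2.1.1 y := congrArg (fun t => t.1.1.1) h
    have hferr : (Fin.cases (u1.1.2 y) u1.1.2 : Fin (n+1) → Bool) =
        Fin.cases (u2.1.2 y) u2.1.2 := congrArg (fun t => t.1.1.2) h
    apply Subtype.ext
    apply Prod.ext
    · have := Equiv.Perm.decomposeFin.symm.injective h1
      exact (Prod.ext_iff.mp this).2
    · funext b
      have := congrFun hferr b.succ
      simpa only [Fin.cases_succ] using this
  · rintro ⟨⟨⟨σ', f'⟩, h1, h2, h3, h4⟩, hfix⟩
    set e := (Equiv.Perm.decomposeFin σ').2 with hedef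
    have he : σ' = ins e y := by
      rw [ins, ← hfix]
      exact perm_eq_decompose σ'
    simp only [he] at h1 h2 h3
    refine ⟨⟨(e, fun b => f' b.succ), ?_, ?_, ?_, ?_⟩, ?_⟩
    · show numCycles e = c + 1
      rw [ins_numCycles] at h1; exact h1
    · intro b hb
      have := h2 b.succ (fun z _ => sp_all z)
      rwa [ins_len_of_not e y hb] at this
    · show Even (len e y)
      have := h2 0 (fun z _ => sp_all z)
      rw [ins_len_zero, Nat.odd_add_one, Nat.not_odd_iff_even] at this
      exact this
    · intro a b hab
      exact h3 a.succ b.succ ((ins_sc_succ e y).mpr hab)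
    · apply Subtype.ext
      apply Subtype.ext
      apply Prod.ext
      · exact he.symm
      · funext x
        induction x using Fin.cases with
        | zero =>
          show f' y.succ = f' 0
          exact h3 y.succ 0 (ins_sc_zero_succ e y).symm
        | succ b =>
          show (Fin.cases (f' y.succ) (fun b => f' b.succ) : Fin (n+1) → Bool) b.succ = f' b.succ
          simp only [Fin.cases_succ]

end AllSpecial

end Stmt4
end L6

section L7
open Equiv Equiv.Perm
namespace Stmt4

variable {n : ℕ}

section MCTransport

variable {c' : ℕ}

/-- transport of marked objects along a relabeling -/
def mcmap {y z : Fin n} (e : Fin n ≃ Fin n) (hyz : e y = z) (u : MCSet n y c') :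
    MCSet n z c' := by
  refine ⟨(e.permCongr u.1.1, u.1.2 ∘ e.symm), ?_, ?_, ?_, ?_⟩
  · rw [conj_numCycles]; exact u.2.1
  · intro b hb
    have hb' : ¬ u.1.1.SameCycle (e.symm b) y := by
      intro hsc
      apply hb
      have := (conj_sc e u.1.1).mpr hsc
      rwa [e.apply_symm_apply, hyz] at this
    have := u.2.2.1 _ hb'
    rwa [← conj_len e u.1.1 (e.symm b), e.apply_symm_apply] at this
  · have : len (e.permCongr u.1.1) z = len u.1.1 y := by
      rw [← hyz, conj_len]
    rw [this]
    exact u.2.2.2.1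
  · intro x w hxw
    rw [conj_sc' e u.1.1] at hxw
    exact u.2.2.2.2 _ _ hxw

lemma card_mc_congr (y z : Fin n) (c' : ℕ) :
    Nat.card (MCSet n y c') = Nat.card (MCSet n z c') := by
  apply Nat.card_eq_of_bijective (mcmap (Equiv.swap y z) (Equiv.swap_apply_left y z))
  constructor
  · intro u1 u2 h
    have h1 : (Equiv.swap y z).permCongr u1.1.1 = (Equiv.swap y z).permCongr u2.1.1 :=
      congrArg (fun t => t.1.1) h
    have h2 : u1.1.2 ∘ (Equiv.swap y z).symm = u2.1.2 ∘ (Equiv.swap y z).symm :=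
      congrArg (fun t => t.1.2) h
    apply Subtype.ext
    apply Prod.ext
    · exact (Equiv.swap y z).permCongr.injective h1
    · funext x
      have := congrFun h2 (Equiv.swap y z x)
      simpa using this
  · intro v
    refine ⟨mcmap (Equiv.swap y z) (by rw [Equiv.swap_apply_right]) v, ?_⟩
    apply Subtype.ext
    apply Prod.ext
    · apply Equiv.ext; intro x
      show ((Equiv.swap y z).permCongr ((Equiv.swap y z).permCongr v.1.1)) x = v.1.1 x
      simp [Equiv.permCongr_apply]
    · funext x
      show ((v.1.2 ∘ (Equiv.swap y z).symm) ∘ (Equiv.swap y z).symm) x = v.1.2 x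
      simp

end MCTransport

section MCZero

variable {m c : ℕ}

/-- inserting `0` before `z.succ` turns an all-odd object into a marked object at `0` -/
def insE (z : Fin m) (u : GSet (Fin m) (SP m m) (c+1)) : MCSet (m+1) 0 (c+1) := by
  refine ⟨(ins u.1.1 z, Fin.cases (u.1.2 z) u.1.2), ?_, ?_, ?_, ?_⟩
  · rw [ins_numCycles]; exact u.2.1
  · intro b hb
    induction b using Fin.cases with
    | zero => exact absurd (SameCycle.refl _ _) hb
    | succ a =>
      have hne : ¬ u.1.1.SameCycle a z := by
        intro hsc
        exact hb ((ins_sc_zero u.1.1 z).mpr hsc.symm).symm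
      rw [ins_len_of_not u.1.1 z hne]
      exact u.2.2.1 a (fun w _ => sp_all w)
  · rw [ins_len_zero, Nat.even_add_one, Nat.not_even_iff_odd]
    exact u.2.2.1 z (fun w _ => sp_all w)
  · intro x w hxw
    induction x using Fin.cases with
    | zero =>
      induction w using Fin.cases with
      | zero => rfl
      | succ b =>
        simp only [Fin.cases_zero, Fin.cases_succ]
        exact u.2.2.2.1 z b ((ins_sc_zero u.1.1 z).mp hxw)
    | succ a =>
      induction w using Fin.cases with
      | zero =>
        simp only [Fin.cases_zero, Fin.cases_succ]
        exact (u.2.2.2.1 z a ((ins_sc_zero u.1.1 z).mp hxw.symm)).symm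
      | succ b =>
        simp only [Fin.cases_succ]
        exact u.2.2.2.1 a b ((ins_sc_succ u.1.1 z).mp hxw)

lemma card_mc_fiber_succ (z : Fin m) :
    Nat.card {t : MCSet (m+1) 0 (c+1) // t.1.1 0 = z.succ} =
      Nat.card (GSet (Fin m) (SP m m) (c+1)) := by
  symm
  apply Nat.card_eq_of_bijective (f := fun u => (⟨insE z u, ins_zero u.1.1 z⟩ :
    {t : MCSet (m+1) 0 (c+1) // t.1.1 0 = z.succ}))
  constructor
  · intro u1 u2 h
    have h1 : ins u1.1.1 z = ins u2.1.1 z := congrArg (fun t => t.1.1.1) h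
    have hferr : (Fin.cases (u1.1.2 z) u1.1.2 : Fin (m+1) → Bool) =
        Fin.cases (u2.1.2 z) u2.1.2 := congrArg (fun t => t.1.1.2) h
    apply Subtype.ext
    apply Prod.ext
    · have := Equiv.Perm.decomposeFin.symm.injective h1
      exact (Prod.ext_iff.mp this).2
    · funext b
      have := congrFun hferr b.succ
      simpa only [Fin.cases_succ] using this
  · rintro ⟨⟨⟨σ', f'⟩, h1, h2, h3, h4⟩, hfix⟩
    set e := (Equiv.Perm.decomposeFin σ').2 with hedef
    have he : σ' = ins e z := by
      rw [ins, ← hfix]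
      exact perm_eq_decompose σ'
    simp only [he] at h1 h2 h3 h4
    refine ⟨⟨(e, fun b => f' b.succ), ?_, ?_, ?_, ?_⟩, ?_⟩
    · show numCycles e = c + 1
      rw [ins_numCycles] at h1; exact h1
    · intro a _
      by_cases hsc : e.SameCycle a z
      · rw [len_eq_of_sameCycle hsc]
        have := h3
        rw [ins_len_zero, Nat.even_add_one, Nat.not_even_iff_odd] at this
        exact this
      · have hb : ¬ (ins e z).SameCycle a.succ 0 := by
          intro h
          exact hsc ((ins_sc_zero e z).mp h.symm).symm
        have := h2 a.succ hb
        rwa [ins_len_of_not e z hsc] at this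
    · intro a b hab
      exact h4 a.succ b.succ ((ins_sc_succ e z).mpr hab)
    · intro b hnp
      exact absurd (fun w _ => sp_all w) hnp
    · apply Subtype.ext
      apply Subtype.ext
      apply Prod.ext
      · exact he.symm
      · funext x
        induction x using Fin.cases with
        | zero =>
          show f' z.succ = f' 0
          exact h4 z.succ 0 (ins_sc_zero_succ e z).symm
        | succ b =>
          show (Fin.cases (f' z.succ) (fun b => f' b.succ) : Fin (m+1) → Bool) b.succ = f' b.succ
          simp only [Fin.cases_succ]

lemma card_mc_zero :
    Nat.card (MCSet (m+1) 0 (c+1)) = m * Nat.card (GSet (Fin m) (SP m m) (c+1)) := by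
  rw [card_fiber_sum (fun t : MCSet (m+1) 0 (c+1) => t.1.1 0), Fin.sum_univ_succ]
  have hzero : Nat.card {t : MCSet (m+1) 0 (c+1) // t.1.1 0 = 0} = 0 := by
    have : IsEmpty {t : MCSet (m+1) 0 (c+1) // t.1.1 0 = 0} := by
      constructor
      rintro ⟨⟨⟨σ', f'⟩, h1, h2, h3, h4⟩, hfix⟩
      have hlen : len σ' 0 = 1 := len_fixed hfix
      have heven : Even (len σ' 0) := h3
      rw [hlen] at heven
      exact Nat.not_even_one heven
    exact Nat.card_of_isEmpty
  rw [hzero]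
  rw [Finset.sum_congr rfl (fun z _ => card_mc_fiber_succ z)]
  rw [Finset.sum_const, Finset.card_univ, Fintype.card_fin, smul_eq_mul]
  omega

end MCZero

/-- Recursion R2 (the all-special case) -/
lemma R2 (c : ℕ) :
    g (n+1) (n+1) (c+1) = 2 * g n n c + n * (n - 1) * g (n-1) (n-1) (c+1) := by
  rw [g, card_fiber_sum (fun t : GSet (Fin (n+1)) (SP (n+1) (n+1)) (c+1) => t.1.1 0),
    Fin.sum_univ_succ, card_fiber_zero_all]
  rw [Finset.sum_congr rfl (fun y _ => card_fiber_succ_all y)]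
  match n with
  | 0 => simp [g]
  | m+1 =>
    rw [Finset.sum_congr rfl (fun y _ => (card_mc_congr y 0 (c+1)).trans card_mc_zero)]
    rw [Finset.sum_const, Finset.card_univ, Fintype.card_fin, smul_eq_mul]
    show 2 * Nat.card (GSet (Fin (m+1)) (SP (m+1) (m+1)) c) + (m+1) * (m * g m m (c+1)) = _
    rw [show Nat.card (GSet (Fin (m+1)) (SP (m+1) (m+1)) c) = g (m+1) (m+1) c from rfl]
    simp only [Nat.add_sub_cancel]
    ring

end Stmt4
end L7

section L8
open Polynomial
namespace Stmt4

/-- the building-block products -/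
noncomputable def Pgen (r i : ℕ) : Polynomial ℤ :=
  ∏ m ∈ Finset.range r, (Polynomial.X + Polynomial.C ((m : ℤ) + 1 - (i : ℤ)))

lemma qpoly_eq (d k : ℕ) :
    Qpoly d k = ∑ i ∈ Finset.range (k + 1), Polynomial.C (k.choose i : ℤ) * Pgen d i := rfl

lemma Pgen_succ (r i : ℕ) : Pgen (r+1) i = Pgen r i * (X + C ((r : ℤ) + 1 - (i : ℤ))) :=
  Finset.prod_range_succ _ _

lemma Pgen_shift (r i : ℕ) : Pgen (r+1) (i+1) = Pgen r i * (X + C (-(i : ℤ))) := by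
  unfold Pgen
  have h1 : ∀ m ∈ Finset.range (r+1),
      (X + C ((m : ℤ) + 1 - ((i+1 : ℕ) : ℤ))) = (X + C ((m : ℤ) - i)) := by
    intro m _
    congr 1
    push_cast
    ring
  rw [Finset.prod_congr rfl h1, Finset.prod_range_succ' (fun m => X + C ((m : ℤ) - i)) r]
  have h2 : ∀ m ∈ Finset.range r, (X + C (((m+1 : ℕ) : ℤ) - i)) = (X + C ((m:ℤ) + 1 - i)) := by
    intro m _
    congr 1
  rw [Finset.prod_congr rfl h2]
  congr 1
  congr 1
  push_cast
  ring

lemma choose_mul_sub (k i : ℕ) (hi : i ≤ k) : k * (k-1).choose i = k.choose i * (k - i) := by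
  match k with
  | 0 =>
    interval_cases i
    simp
  | k'+1 =>
    rw [Nat.add_sub_cancel, mul_comm]
    exact Nat.choose_mul_succ_eq k' i

/-- Recursion P1 for the polynomials -/
lemma qpoly_rec (e k : ℕ) (hk : k ≤ e + 1) :
    Qpoly (e+1) k = (X + C ((e + 1 - k : ℕ) : ℤ)) * Qpoly e k
      + C (k : ℤ) * Qpoly e (k-1) := by
  rw [qpoly_eq (e+1) k, qpoly_eq e k, qpoly_eq e (k-1)]
  have key : ∀ i ∈ Finset.range (k+1),
      C ((k.choose i : ℤ)) * Pgen (e+1) i =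
      (X + C ((e + 1 - k : ℕ) : ℤ)) * (C ((k.choose i : ℤ)) * Pgen e i)
        + C ((k * (k-1).choose i : ℕ) : ℤ) * Pgen e i := by
    intro i hi
    have hi' : i ≤ k := Nat.lt_succ_iff.mp (Finset.mem_range.mp hi)
    rw [Pgen_succ]
    have hsplit : (X + C ((e:ℤ) + 1 - (i:ℤ))) =
        (X + C ((e + 1 - k : ℕ) : ℤ)) + C ((k - i : ℕ) : ℤ) := by
      rw [add_assoc, ← C_add]
      congr 1
      rw [Nat.cast_sub hk, Nat.cast_sub hi']
      push_cast
      ring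
    rw [hsplit]
    have hcc : (C ((k * (k-1).choose i : ℕ) : ℤ) : Polynomial ℤ) =
        C ((k.choose i : ℤ)) * C ((k - i : ℕ) : ℤ) := by
      rw [← C_mul]
      congr 1
      rw [choose_mul_sub k i hi']
      push_cast
      ring
    rw [hcc]
    ring
  rw [Finset.sum_congr rfl key, Finset.sum_add_distrib, ← Finset.mul_sum]
  congr 1
  rw [Finset.mul_sum]
  match k with
  | 0 => simp
  | k'+1 =>
    rw [show (k' + 1 - 1) = k' from rfl]
    rw [Finset.sum_range_succ]
    have hlast : ((k'+1) * k'.choose (k'+1) : ℕ) = 0 := by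
      rw [Nat.choose_eq_zero_of_lt (Nat.lt_succ_self k')]
      ring
    rw [hlast]
    simp only [Nat.cast_zero, map_zero, zero_mul, add_zero]
    apply Finset.sum_congr rfl
    intro i _
    rw [← mul_assoc, ← C_mul]
    congr 2

/-- Recursion P2 for the polynomials (all-special case), `d = m+2`. -/
lemma qpoly_rec2 (m : ℕ) :
    Qpoly (m+2) (m+3) = 2 * X * Qpoly (m+1) (m+2)
      + C (((m+2) * (m+1) : ℕ) : ℤ) * Qpoly m (m+1) := by
  rw [qpoly_eq (m+2) (m+3), qpoly_eq (m+1) (m+2), qpoly_eq m (m+1)]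
  -- step 1: Pascal
  have pascal : ∑ i ∈ Finset.range (m+3+1), C (((m+3).choose i : ℤ)) * Pgen (m+2) i =
      ∑ i ∈ Finset.range (m+2+1), C (((m+2).choose i : ℤ)) * (Pgen (m+2) i + Pgen (m+2) (i+1)) := by
    rw [Finset.sum_range_succ' (fun i => C (((m+3).choose i : ℤ)) * Pgen (m+2) i) (m+3)]
    have hsplit : ∀ i ∈ Finset.range (m+3),
        C (((m+3).choose (i+1) : ℤ)) * Pgen (m+2) (i+1) =
        C (((m+2).choose i : ℤ)) * Pgen (m+2) (i+1)
          + C (((m+2).choose (i+1) : ℤ)) * Pgen (m+2) (i+1) := by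
      intro i _
      rw [← add_mul, ← C_add]
      congr 2
    rw [Finset.sum_congr rfl hsplit, Finset.sum_add_distrib]
    simp only [mul_add]
    rw [Finset.sum_add_distrib]
    have hre : ∑ i ∈ Finset.range (m+2+1), C (((m+2).choose i : ℤ)) * Pgen (m+2) i =
        ∑ i ∈ Finset.range (m+2), C (((m+2).choose (i+1) : ℤ)) * Pgen (m+2) (i+1)
          + C (((m+2).choose 0 : ℤ)) * Pgen (m+2) 0 :=
      Finset.sum_range_succ' _ (m+2)
    rw [hre]
    have hzero : ∑ i ∈ Finset.range (m+3), C (((m+2).choose (i+1) : ℤ)) * Pgen (m+2) (i+1) =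
        ∑ i ∈ Finset.range (m+2), C (((m+2).choose (i+1) : ℤ)) * Pgen (m+2) (i+1) := by
      rw [Finset.sum_range_succ]
      have h : (m+2).choose (m+3) = 0 := Nat.choose_eq_zero_of_lt (by omega)
      rw [h]
      simp
    rw [hzero]
    have hc0 : ((m+3).choose 0 : ℤ) = ((m+2).choose 0 : ℤ) := by simp
    rw [hc0]
    ring
  rw [pascal]
  -- step 2
  have hsum2 : ∀ i ∈ Finset.range (m+2+1),
      C (((m+2).choose i : ℤ)) * (Pgen (m+2) i + Pgen (m+2) (i+1)) =
      2 * X * (C (((m+2).choose i : ℤ)) * Pgen (m+1) i)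
        + (C (((m+2).choose i : ℤ)) * C ((m:ℤ) + 2 - 2*i)) * Pgen (m+1) i := by
    intro i _
    rw [Pgen_succ, Pgen_shift]
    have hC : C (((m+1:ℕ):ℤ) + 1 - (i:ℤ)) + C (-(i:ℤ)) = C ((m:ℤ) + 2 - 2*i) := by
      rw [← C_add]
      congr 1
      push_cast
      ring
    calc C (((m+2).choose i : ℤ)) * (Pgen (m+1) i * (X + C (((m+1:ℕ):ℤ) + 1 - (i:ℤ)))
          + Pgen (m+1) i * (X + C (-(i:ℤ))))
        = C (((m+2).choose i : ℤ)) * Pgen (m+1) i *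
            (2 * X + (C (((m+1:ℕ):ℤ) + 1 - (i:ℤ)) + C (-(i:ℤ)))) := by ring
      _ = _ := by rw [hC]; ring
  rw [Finset.sum_congr rfl hsum2, Finset.sum_add_distrib, ← Finset.mul_sum]
  congr 1
  -- step 3
  have hd2 : ∀ i ∈ Finset.range (m+2+1),
      (C (((m+2).choose i : ℤ)) * C ((m:ℤ) + 2 - 2*i)) * Pgen (m+1) i =
      C (((m+2) * (m+1).choose i : ℕ) : ℤ) * Pgen (m+1) i
        - C (((m+2).choose i * i : ℕ) : ℤ) * Pgen (m+1) i := by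
    intro i hi
    have hi' : i ≤ m + 2 := Nat.lt_succ_iff.mp (Finset.mem_range.mp hi)
    rw [← sub_mul]
    congr 1
    rw [← C_mul, ← C_sub]
    congr 1
    have hnat : (m+2) * (m+1).choose i = (m+2).choose i * ((m+2) - i) :=
      choose_mul_sub (m+2) i hi'
    have hcast : ((m+2) * (m+1).choose i : ℤ) = ((m+2).choose i : ℤ) * ((m+2 : ℤ) - i) := by
      have := congrArg (fun t : ℕ => (t : ℤ)) hnat
      push_cast [Nat.cast_sub hi'] at this
      push_cast
      linarith [this]
    push_cast
    push_cast at hcast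
    rw [hcast]
    ring
  rw [Finset.sum_congr rfl hd2, Finset.sum_sub_distrib]
  -- second part: shift index
  have hshift2 : ∑ i ∈ Finset.range (m+2+1), C (((m+2).choose i * i : ℕ) : ℤ) * Pgen (m+1) i =
      ∑ i ∈ Finset.range (m+2), C (((m+2) * (m+1).choose i : ℕ) : ℤ) * Pgen (m+1) (i+1) := by
    rw [Finset.sum_range_succ' (fun i => C (((m+2).choose i * i : ℕ) : ℤ) * Pgen (m+1) i) (m+2)]
    simp only [Nat.mul_zero, Nat.cast_zero, map_zero, zero_mul, add_zero]
    apply Finset.sum_congr rfl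
    intro i _
    congr 2
    have h := Nat.add_one_mul_choose_eq (m+1) i
    have : (m+2) * (m+1).choose i = (m+2).choose (i+1) * (i+1) := h
    rw [this]
  rw [hshift2]
  have hdrop : ∑ i ∈ Finset.range (m+2+1), C (((m+2) * (m+1).choose i : ℕ) : ℤ) * Pgen (m+1) i =
      ∑ i ∈ Finset.range (m+2), C (((m+2) * (m+1).choose i : ℕ) : ℤ) * Pgen (m+1) i := by
    rw [Finset.sum_range_succ]
    have h : (m+1).choose (m+2) = 0 := Nat.choose_eq_zero_of_lt (by omega)
    rw [h]
    simp
  rw [hdrop, ← Finset.sum_sub_distrib]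
  have hfinal : ∀ i ∈ Finset.range (m+2),
      C (((m+2) * (m+1).choose i : ℕ) : ℤ) * Pgen (m+1) i
        - C (((m+2) * (m+1).choose i : ℕ) : ℤ) * Pgen (m+1) (i+1) =
      C (((m+2) * (m+1) : ℕ) : ℤ) * (C (((m+1).choose i : ℤ)) * Pgen m i) := by
    intro i _
    rw [Pgen_succ, Pgen_shift, ← mul_sub]
    have h1 : Pgen m i * (X + C ((m:ℤ) + 1 - i)) - Pgen m i * (X + C (-(i:ℤ))) =
        Pgen m i * C ((m:ℤ) + 1) := by
      rw [← mul_sub]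
      congr 1
      rw [show (X + C ((m:ℤ) + 1 - i)) - (X + C (-(i:ℤ))) = C ((m:ℤ)+1-i) - C (-(i:ℤ)) from by
        ring, ← C_sub]
      congr 1
      ring
    rw [h1]
    rw [show C (((m+2) * (m+1).choose i : ℕ) : ℤ) * (Pgen m i * C ((m:ℤ) + 1)) =
        (C (((m+2) * (m+1).choose i : ℕ) : ℤ) * C ((m:ℤ) + 1)) * Pgen m i from by ring,
      ← C_mul,
      show C (((m+2) * (m+1) : ℕ) : ℤ) * (C (((m+1).choose i : ℤ)) * Pgen m i) =
        (C (((m+2) * (m+1) : ℕ) : ℤ) * C (((m+1).choose i : ℤ))) * Pgen m i from by ring,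
      ← C_mul]
    congr 2
    push_cast
    ring
  rw [Finset.sum_congr rfl hfinal, ← Finset.mul_sum]

end Stmt4
end L8

section L9
open Equiv Equiv.Perm Polynomial
namespace Stmt4

lemma g_zero_c (n k : ℕ) (hn : 1 ≤ n) : g n k 0 = 0 := gset_zero_empty hn

lemma numCycles_one {α : Type*} [Fintype α] [DecidableEq α] :
    numCycles (1 : Perm α) = Fintype.card α := by
  simp [numCycles, Equiv.Perm.cycleType_one]

lemma perm_fin_one (σ : Perm (Fin 1)) : σ = 1 :=
  Equiv.ext fun x => Subsingleton.elim _ _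

lemma sc_one {α : Type*} {x z : α} (h : (1 : Perm α).SameCycle x z) : z = x :=
  eq_of_sameCycle_fixed h rfl

lemma g_one_ne (k c : ℕ) (hc : c ≠ 1) : g 1 k c = 0 := by
  have : IsEmpty (GSet (Fin 1) (SP 1 k) c) := by
    constructor
    rintro ⟨⟨σ, f⟩, h1, -⟩
    have hs : σ = 1 := perm_fin_one σ
    rw [hs] at h1
    rw [numCycles_one, Fintype.card_fin] at h1
    exact hc h1.symm
  exact Nat.card_of_isEmpty

lemma g10 : g 1 0 1 = 1 := by
  apply Nat.card_eq_one_iff_exists.mpr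
  have hnp : ∀ (σ : Perm (Fin 1)) (x : Fin 1), ¬ Pure (SP 1 0) σ x := by
    intro σ x hp
    have := hp x (SameCycle.refl _ _)
    exact absurd this (by show ¬ (1 - 0 ≤ (x:ℕ)); omega)
  refine ⟨⟨(1, fun _ => false), ?_, ?_, ?_, ?_⟩, ?_⟩
  · rw [numCycles_one, Fintype.card_fin]
  · intro x hp
    exact absurd hp (hnp _ _)
  · intro x z _
    rfl
  · intro x _
    rfl
  · rintro ⟨⟨σ, f⟩, h1, h2, h3, h4⟩
    apply Subtype.ext
    apply Prod.ext
    · exact perm_fin_one σ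
    · funext x
      exact h4 x (hnp _ _)

lemma g11 : g 1 1 1 = 2 := by
  have h2 : (2 : ℕ) = Nat.card Bool := by
    rw [Nat.card_eq_fintype_card, Fintype.card_bool]
  rw [g, h2]
  apply Nat.card_eq_of_bijective (f := fun t : GSet (Fin 1) (SP 1 1) 1 => t.1.2 0)
  constructor
  · intro t1 t2 h
    apply Subtype.ext
    apply Prod.ext
    · rw [perm_fin_one t1.1.1, perm_fin_one t2.1.1]
    · funext x
      have hx : x = 0 := Subsingleton.elim _ _
      rw [hx]
      exact h
  · intro b
    refine ⟨⟨(1, fun _ => b), ?_, ?_, ?_, ?_⟩, rfl⟩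
    · rw [numCycles_one, Fintype.card_fin]
    · intro x _
      rw [len_fixed (Equiv.Perm.one_apply x)]
      exact ⟨0, rfl⟩
    · intro x z _
      rfl
    · intro x hnp
      exact absurd (fun z _ => sp_all z) hnp

lemma g_id_pos (n k : ℕ) : 0 < g n k n := by
  have : Nonempty (GSet (Fin n) (SP n k) n) := by
    refine ⟨⟨(1, fun _ => false), ?_, ?_, ?_, ?_⟩⟩
    · rw [numCycles_one, Fintype.card_fin]
    · intro x _
      rw [len_fixed (Equiv.Perm.one_apply x)]
      exact ⟨0, rfl⟩
    · intro x z h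
      rw [sc_one h]
    · intro x _
      rfl
  exact Nat.card_pos

lemma g_pos : ∀ d k, k ≤ d → ∀ j, j ≤ d → 0 < g (d+1) k (j+1) := by
  intro d
  induction d with
  | zero =>
    intro k hk j hj
    interval_cases k
    interval_cases j
    exact g10.symm ▸ Nat.one_pos
  | succ d ihd =>
    intro k hk j hj
    by_cases hjd : j = d + 1
    · subst hjd
      exact g_id_pos (d+2) k
    · have hj' : j ≤ d := by omega
      rcases Nat.lt_or_ge k (d+1) with hk' | hk'
      · -- k ≤ d
        have hkd : k ≤ d := by omega
        rw [R1 k j (by omega : k ≤ d + 1)]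
        match j with
        | 0 =>
          have hpos : 0 < (d + 1 - k) * g (d+1) k (0+1) :=
            Nat.mul_pos (by omega) (ihd k hkd 0 (by omega))
          omega
        | j'+1 =>
          have hpos : 0 < g (d+1) k (j'+1) := ihd k hkd j' (by omega)
          omega
      · -- k = d+1
        have hkd : k = d + 1 := by omega
        subst hkd
        rw [R1 (d+1) j (le_refl (d+1))]
        have hpos : 0 < (d+1) * g (d+1) (d+1-1) (j+1) :=
          Nat.mul_pos (by omega) (by
            rw [show d + 1 - 1 = d from rfl]
            exact ihd d (le_refl d) j hj')
        omega

lemma qpoly00 : Qpoly 0 0 = 1 := by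
  unfold Qpoly
  simp

lemma qpoly01 : Qpoly 0 1 = 2 := by
  unfold Qpoly
  rw [Finset.sum_range_succ, Finset.sum_range_succ]
  simp
  norm_num

lemma qpoly12 : Qpoly 1 2 = C 4 * X := by
  unfold Qpoly
  rw [Finset.sum_range_succ, Finset.sum_range_succ, Finset.sum_range_succ]
  simp [Finset.prod_range_succ]
  push_cast
  ring

lemma coeff_XC (a : ℤ) (Q : Polynomial ℤ) (j : ℕ) :
    ((X + C a) * Q).coeff j = (if j = 0 then 0 else Q.coeff (j-1)) + a * Q.coeff j := by
  rw [add_mul, Polynomial.coeff_add, Polynomial.coeff_C_mul]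
  congr 1
  match j with
  | 0 =>
    rw [if_pos rfl, Polynomial.mul_coeff_zero, Polynomial.coeff_X_zero, zero_mul]
  | j+1 =>
    rw [if_neg (by omega), Polynomial.coeff_X_mul]
    simp

lemma coeff_2X (Q : Polynomial ℤ) (j : ℕ) :
    (2 * X * Q).coeff j = 2 * (if j = 0 then 0 else Q.coeff (j-1)) := by
  have h2 : (2 : Polynomial ℤ) = C 2 := by
    rw [show (2:ℤ) = 1 + 1 from rfl, C_add, C_1]
    norm_num
  rw [mul_assoc, h2, Polynomial.coeff_C_mul]
  congr 1
  match j with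
  | 0 =>
    rw [if_pos rfl, Polynomial.mul_coeff_zero, Polynomial.coeff_X_zero, zero_mul]
  | j+1 =>
    rw [if_neg (by omega), Polynomial.coeff_X_mul]
    simp

/-- MAIN identity -/
lemma main_identity : ∀ d k, k ≤ d + 1 → ∀ j, (Qpoly d k).coeff j = (g (d+1) k (j+1) : ℤ) := by
  intro d
  induction d using Nat.strong_induction_on with
  | _ d ih =>
    match d with
    | 0 =>
      intro k hk j
      interval_cases k
      · rw [qpoly00]
        match j with
        | 0 =>
          rw [Polynomial.coeff_one, if_pos rfl, g10]
          norm_num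
        | j+1 =>
          rw [Polynomial.coeff_one, if_neg (by omega), g_one_ne 0 (j+2) (by omega)]
          norm_num
      · rw [qpoly01]
        match j with
        | 0 =>
          rw [show ((2 : Polynomial ℤ)).coeff 0 = 2 from by norm_num, g11]
          norm_num
        | j+1 =>
          rw [show ((2 : Polynomial ℤ)).coeff (j+1) = 0 from by
            rw [show (2 : Polynomial ℤ) = C 2 from by
              rw [show (2:ℤ) = 1 + 1 from rfl, C_add, C_1]; norm_num]
            rw [Polynomial.coeff_C, if_neg (by omega)],
            g_one_ne 1 (j+2) (by omega)]
          norm_num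
    | e+1 =>
      intro k hk j
      rcases Nat.lt_or_ge k (e+2) with hk' | hk'
      · have hke : k ≤ e + 1 := by omega
        rw [qpoly_rec e k hke, Polynomial.coeff_add, coeff_XC, Polynomial.coeff_C_mul]
        rw [R1 k j hke]
        have ih1 := ih e (by omega) k hke
        have ih2 := ih e (by omega) (k-1) (by omega)
        match j with
        | 0 =>
          rw [if_pos rfl, ih1 0, ih2 0, g_zero_c (e+1) k (by omega)]
          push_cast
          ring
        | j+1 =>
          rw [if_neg (by omega), show j + 1 - 1 = j from rfl, ih1 j, ih1 (j+1), ih2 (j+1)]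
          push_cast
          ring
      · have hke : k = e + 2 := by omega
        subst hke
        match e with
        | 0 =>
          rw [qpoly12, Polynomial.coeff_C_mul, R2 (n := 1) j]
          match j with
          | 0 =>
            rw [Polynomial.coeff_X_zero, g_zero_c 1 1 (by omega)]
            norm_num
          | 1 =>
            rw [Polynomial.coeff_X_one, g11]
            norm_num
          | j+2 =>
            rw [Polynomial.coeff_X, if_neg (by omega), g_one_ne 1 (j+2) (by omega)]
            norm_num
        | m+1 =>
          rw [qpoly_rec2 m, Polynomial.coeff_add, coeff_2X, Polynomial.coeff_C_mul]
          rw [R2 (n := m+2) j]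
          have ih1 := ih (m+1) (by omega) (m+2) (by omega)
          have ih2 := ih m (by omega) (m+1) (by omega)
          match j with
          | 0 =>
            rw [if_pos rfl, ih2 0, g_zero_c (m+2) (m+2) (by omega)]
            push_cast
            ring
          | j+1 =>
            rw [if_neg (by omega), show j + 1 - 1 = j from rfl, ih1 j, ih2 (j+1)]
            push_cast
            ring

end Stmt4
end L9


/-- For every `d ≥ 1`, `0 ≤ k ≤ d`, `0 ≤ j ≤ d`, the coefficient `c_{d,k}(j)`
equals the number of permutations of `{1,…,d+1}` with exactly `j+1` cycles in which every
cycle contained in `{1,…,k}` is odd and 2-colored; in particular `c_{d,k}(j) > 0`. -/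
theorem stmt4 (d k j : ℕ) (hd : 1 ≤ d) (hk : k ≤ d) (hj : j ≤ d) :
    (Qpoly d k).coeff j = (Nat.card (CSet d k j) : ℤ) ∧ 0 < (Qpoly d k).coeff j := by
  have hcard : Nat.card (CSet d k j) = Stmt4.g (d+1) k (j+1) := by
    have h1 : Nat.card (CSet d k j) =
        Nat.card (Stmt4.GSet (Fin (d+1)) (fun x : Fin (d+1) => (x:ℕ) < k) (j+1)) := rfl
    rw [h1]
    apply Stmt4.card_gset_congr (Fin.revPerm : Equiv.Perm (Fin (d+1)))
    intro a
    show ((a:ℕ) < k) ↔ Stmt4.SP (d+1) k (Fin.rev a)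
    show ((a:ℕ) < k) ↔ (d + 1 - k ≤ (Fin.rev a : ℕ))
    rw [Fin.val_rev]
    have := a.isLt
    omega
  constructor
  · rw [Stmt4.main_identity d k (by omega) j, hcard]
  · rw [Stmt4.main_identity d k (by omega) j]
    exact_mod_cast Stmt4.g_pos d k hk j hj
end

section
/- For every d ≥ 1 and k with 0 ≤ k ≤ d, the set C_{d,d} restricted appropriately is in bijection with the set of pairs (σ, m) where σ is a permutation of {1,…,d+1} and m is either 'none' or an element i ≤ k fixed by σ; equivalently, both sets have cardinality (d+k+1)·d!. -/
open Nat

/-- `C_{d,k}`: permutations `σ` of `{1,…,d+1}` in which every cycle contained in `{1,…,k}`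
has odd length, together with a 2-coloring (encoded by `Bool`) of those cycles. -/
def CFull (d k : ℕ) : Type :=
  {p : Equiv.Perm (Fin (d + 1)) × (Fin (d + 1) → Bool) //
    (∀ x, IsKCycleElt p.1 k x → Odd (cycleLen p.1 x)) ∧
    (∀ x y, p.1.SameCycle x y → p.2 x = p.2 y) ∧
    (∀ x, ¬ IsKCycleElt p.1 k x → p.2 x = false)}

/-- Permutations of `{1,…,d+1}` together with a marker which is either `none` or a fixed
point `i` with `i ≤ k`. -/
def Marked (d k : ℕ) : Type :=
  {p : Equiv.Perm (Fin (d + 1)) × Option (Fin (d + 1)) //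
    ∀ i, p.2 = some i → p.1 i = i ∧ (i : ℕ) < k}

/-!
For a cycle `c` of `π`, `1 + sign c` is `2` if `c` has odd length and `0` otherwise. Expanding the
product of these factors over the cycles inside `P`, the number of admissible colourings of `π`
is `∑ sign (π|_A)` over the `π`-invariant sets `A ⊆ P`. Exchanging the sums, the permutations
leaving `A` invariant are `S_A × S_{Aᶜ}`, and `∑_{σ ∈ S_A} sign σ` vanishes unless `|A| ≤ 1`:
only `A = ∅` and the `|P|` singletons survive, contributing `n!` and `(n-1)!` each. The same
count `n! + |P| (n-1)!` of permutations with an optional marked fixed point in `P` is immediate.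
-/

open Equiv Finset
open scoped symmDiff

namespace Equiv.Perm

variable {α : Type*} {π : Perm α} {A B : Finset α}

abbrev IsInvariant (π : Perm α) (A : Finset α) : Prop := ∀ x, π x ∈ A ↔ x ∈ A

lemma IsInvariant.mem_iff_of_sameCycle (h : π.IsInvariant A) {x y : α} (hxy : π.SameCycle x y) :
    x ∈ A ↔ y ∈ A := by
  have key : ∀ {x y}, π.SameCycle x y → x ∈ A → y ∈ A := by
    rintro x y ⟨z, rfl⟩ hx
    have : ((π.subtypePerm h ^ z) ⟨x, hx⟩ : α) = (π ^ z) x := by simp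
    exact this ▸ ((π.subtypePerm h ^ z) ⟨x, hx⟩).2
  exact ⟨key hxy, key hxy.symm⟩

lemma IsInvariant.symmDiff [DecidableEq α] (hA : π.IsInvariant A) (hB : π.IsInvariant B) :
    π.IsInvariant (A ∆ B) := fun x => by
  simp only [Finset.mem_symmDiff, hA x, hB x]

variable [Fintype α] [DecidableEq α]

def cycleFinset (π : Perm α) (x : α) : Finset α := {y | π.SameCycle x y}

@[simp]
lemma mem_cycleFinset {x y : α} : y ∈ π.cycleFinset x ↔ π.SameCycle x y := by
  simp [cycleFinset]

/-- The sign of `π` restricted to `A`, with the junk value `0` when `A` is not `π`-invariant. -/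
def signOn (π : Perm α) (A : Finset α) : ℤ :=
  if h : π.IsInvariant A then (sign (π.subtypePerm h) : ℤ) else 0

lemma IsInvariant.cycleFinset_subset (h : π.IsInvariant A) {x : α} (hx : x ∈ A) :
    π.cycleFinset x ⊆ A := fun _ hy => (h.mem_iff_of_sameCycle (mem_cycleFinset.1 hy)).1 hx

lemma isInvariant_cycleFinset (π : Perm α) (x : α) : π.IsInvariant (π.cycleFinset x) := fun _ => by
  simp [sameCycle_apply_right]

lemma signOn_union (hAB : _root_.Disjoint A B) (hA : π.IsInvariant A) (hB : π.IsInvariant B) :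
    π.signOn (A ∪ B) = π.signOn A * π.signOn B := by
  have hAB' : π.IsInvariant (A ∪ B) := fun x => by simp [hA x, hB x]
  have key : ofSubtype (π.subtypePerm hAB') =
      ofSubtype (π.subtypePerm hA) * ofSubtype (π.subtypePerm hB) := by
    ext y
    by_cases hyA : y ∈ A
    · have hyB : y ∉ B := Finset.disjoint_left.1 hAB hyA
      simp [ofSubtype_apply_of_mem, ofSubtype_apply_of_not_mem, hyA, hyB]
    · have hyA' : π y ∉ A := fun h => hyA ((hA y).1 h)
      by_cases hyB : y ∈ B
      · simp [ofSubtype_apply_of_mem, ofSubtype_apply_of_not_mem, hyA, hyA', hyB]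
      · simp [ofSubtype_apply_of_not_mem, hyA, hyB]
  simp only [signOn, dif_pos hA, dif_pos hB, dif_pos hAB', ← sign_ofSubtype, key, map_mul,
    Units.val_mul]

lemma signOn_cycleFinset (π : Perm α) (x : α) :
    π.signOn (π.cycleFinset x) = sign (π.cycleOf x) := by
  have : ofSubtype (π.subtypePerm (π.isInvariant_cycleFinset x)) = π.cycleOf x := by
    ext y
    by_cases h : π.SameCycle x y <;>
      simp [cycleOf_apply, h, ofSubtype_apply_of_mem, ofSubtype_apply_of_not_mem]
  rw [signOn, dif_pos (π.isInvariant_cycleFinset x), ← sign_ofSubtype, this]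

lemma sign_cycleOf (π : Perm α) (x : α) : sign (π.cycleOf x) = -(-1) ^ #(π.cycleFinset x) := by
  by_cases hx : π x = x
  · have : π.cycleFinset x = {x} := by
      ext y
      simp only [mem_cycleFinset, Finset.mem_singleton]
      exact ⟨fun h => (h.eq_of_left hx).symm, fun h => h ▸ SameCycle.rfl⟩
    simp [this, (cycleOf_eq_one_iff π).2 hx]
  · have : (π.cycleOf x).support = π.cycleFinset x := by
      ext y; simp [mem_support_cycleOf_iff' hx]
    rw [(isCycle_cycleOf π hx).sign, this]

lemma signOn_symmDiff_cycleFinset (A : Finset α) (x : α) :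
    π.signOn (A ∆ π.cycleFinset x) = π.signOn A * sign (π.cycleOf x) := by
  set C := π.cycleFinset x
  have hC := π.isInvariant_cycleFinset x
  rw [← signOn_cycleFinset]
  by_cases hA : π.IsInvariant A
  swap
  · have : ¬ π.IsInvariant (A ∆ C) := fun h =>
      hA (symmDiff_symmDiff_cancel_right C A ▸ h.symmDiff hC)
    simp [signOn, hA, this]
  by_cases hxA : x ∈ A
  · have hCA : C ⊆ A := hA.cycleFinset_subset hxA
    have hsq : π.signOn C * π.signOn C = 1 := by
      rw [signOn_cycleFinset, ← Units.val_mul, Int.units_mul_self, Units.val_one]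
    have hsplit : π.signOn A = π.signOn (A ∆ C) * π.signOn C := by
      rw [← signOn_union _ (hA.symmDiff hC) hC]
      · rw [symmDiff_comm, symmDiff_of_le hCA, sdiff_union_of_subset hCA]
      · rw [symmDiff_comm, symmDiff_of_le hCA]; exact sdiff_disjoint
    rw [hsplit, mul_assoc, hsq, mul_one]
  · have hAC : _root_.Disjoint A C := Finset.disjoint_left.2 fun y hyA hyC =>
      hxA ((hA.mem_iff_of_sameCycle (mem_cycleFinset.1 hyC)).2 hyA)
    rw [hAC.symmDiff_eq_sup, sup_eq_union, signOn_union hAC hA hC]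

lemma signOn_eq_one (hA : π.IsInvariant A) (hodd : ∀ x ∈ A, Odd #(π.cycleFinset x)) :
    π.signOn A = 1 := by
  induction A using Finset.strongInduction with
  | H A ih =>
    rcases A.eq_empty_or_nonempty with rfl | ⟨x, hx⟩
    · simp [signOn, Subsingleton.elim (π.subtypePerm hA) 1]
    have hCA := hA.cycleFinset_subset hx
    have hsub : A ∆ π.cycleFinset x ⊂ A := by
      rw [symmDiff_comm, symmDiff_of_le hCA]
      exact sdiff_ssubset hCA ⟨x, mem_cycleFinset.2 .rfl⟩
    have hA' := hA.symmDiff (π.isInvariant_cycleFinset x)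
    rw [← symmDiff_symmDiff_cancel_right (π.cycleFinset x) A, signOn_symmDiff_cycleFinset,
      ih _ hsub hA' fun y hy => hodd y (hsub.subset hy), sign_cycleOf, (hodd x hx).neg_one_pow]
    simp

lemma sum_signOn_powerset_eq_zero {P : Finset α} {x : α} (hxP : π.cycleFinset x ⊆ P)
    (heven : Even #(π.cycleFinset x)) : ∑ A ∈ P.powerset, π.signOn A = 0 := by
  refine sum_involution (fun A _ => A ∆ π.cycleFinset x) (fun A _ => ?_) (fun A _ _ => ?_)
    (fun A hA => ?_) (fun A _ => symmDiff_symmDiff_cancel_right _ _)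
  · rw [signOn_symmDiff_cycleFinset, sign_cycleOf, heven.neg_one_pow]
    simp
  · rw [Ne, symmDiff_eq_left, bot_eq_empty, ← Ne, ← nonempty_iff_ne_empty]
    exact ⟨x, mem_cycleFinset.2 .rfl⟩
  · rw [mem_powerset] at hA ⊢
    exact symmDiff_subset_union.trans (union_subset hA hxP)

def OddCyclesIn (π : Perm α) (P : Finset α) : Prop :=
  ∀ x, π.cycleFinset x ⊆ P → Odd #(π.cycleFinset x)

def IsCycleColoring (π : Perm α) (P : Finset α) (f : α → Bool) : Prop :=
  (∀ x y, π.SameCycle x y → f x = f y) ∧ ∀ x, ¬ π.cycleFinset x ⊆ P → f x = false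

def cycleColoringEquiv (π : Perm α) (P : Finset α) :
    {f // π.IsCycleColoring P f} ≃ {A : Finset α // A ⊆ P ∧ π.IsInvariant A} where
  toFun f := ⟨({x | f.1 x} : Finset α), fun x hx => by
      by_contra hxP
      have := f.2.2 x fun h => hxP (h (mem_cycleFinset.2 .rfl))
      simp_all,
    fun x => by simp [f.2.1 x (π x) (sameCycle_apply_right.2 .rfl)]⟩
  invFun A := ⟨fun x => x ∈ A.1, fun x y hxy => by simp [A.2.2.mem_iff_of_sameCycle hxy],
    fun x hx => by
      simpa using fun hxA => hx (A.2.2.cycleFinset_subset hxA |>.trans A.2.1)⟩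
  left_inv f := by ext; simp
  right_inv A := by ext; simp

theorem card_cycleColoring_eq_sum_signOn (π : Perm α) (P : Finset α) :
    (Nat.card {f // π.OddCyclesIn P ∧ π.IsCycleColoring P f} : ℤ) =
      ∑ A ∈ P.powerset, π.signOn A := by
  by_cases hodd : π.OddCyclesIn P
  · have hsign : ∀ A ∈ P.powerset, π.signOn A = if π.IsInvariant A then 1 else 0 := by
      intro A hAP
      split_ifs with hA
      · exact signOn_eq_one hA fun x hx =>
          hodd x ((hA.cycleFinset_subset hx).trans (mem_powerset.1 hAP))
      · simp [signOn, hA]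
    simp only [hodd, true_and]
    rw [Nat.card_congr (cycleColoringEquiv π P), sum_congr rfl hsign, sum_boole,
      Nat.card_eq_fintype_card, Fintype.card_subtype]
    congr 2
    ext A
    simp
  · obtain ⟨x, hxP, heven⟩ : ∃ x, π.cycleFinset x ⊆ P ∧ ¬ Odd #(π.cycleFinset x) := by
      simpa [OddCyclesIn] using hodd
    rw [sum_signOn_powerset_eq_zero hxP (Nat.not_odd_iff_even.1 heven)]
    simp [hodd]

theorem sum_signOn (A : Finset α) :
    ∑ π : Perm α, π.signOn A = (∑ σ : Perm A, (sign σ : ℤ)) * (Fintype.card α - #A)! := by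
  rw [← Fintype.sum_of_injective (subtypeCongrHom (· ∈ A)) (subtypeCongrHom_injective _)
    (fun στ => (sign στ.1 : ℤ)) _ ?_ ?_]
  · rw [Fintype.sum_prod_type]
    simp [Fintype.card_perm, Fintype.card_subtype_compl, ← mul_sum, mul_comm]
  · intro π hπ
    rw [signOn, dif_neg]
    intro hA
    refine hπ ⟨(π.subtypePerm hA, π.subtypePerm fun x => not_congr (hA x)), ?_⟩
    ext x
    by_cases hx : x ∈ A <;> simp [hx]
  · rintro ⟨σ, τ⟩
    have hA : (σ.subtypeCongr τ).IsInvariant A := fun x => by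
      by_cases hx : x ∈ A
      · simp [Perm.subtypeCongr.left_apply _ _ hx, hx]
      · simp [Perm.subtypeCongr.right_apply _ _ hx, hx, (τ ⟨x, hx⟩).2]
    change _ = (σ.subtypeCongr τ).signOn A
    rw [signOn, dif_pos hA]
    congr 3
    ext x
    simp

theorem sum_sign_perm (β : Type*) [Fintype β] [DecidableEq β] :
    ∑ σ : Perm β, (sign σ : ℤ) = if Fintype.card β ≤ 1 then 1 else 0 := by
  split_ifs with h
  · have : Subsingleton β := Fintype.card_le_one_iff_subsingleton.1 h
    simp [Subsingleton.elim _ (1 : Perm β)]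
  · obtain ⟨a, b, hab⟩ := Fintype.exists_pair_of_one_lt_card (not_le.1 h)
    have := _root_.Equiv.sum_comp (Equiv.mulLeft (swap a b)) fun σ => (sign σ : ℤ)
    simp only [coe_mulLeft, sign_mul, sign_swap hab, Units.val_neg, neg_one_mul,
      sum_neg_distrib] at this
    linarith

theorem sum_card_cycleColoring (P : Finset α) :
    ∑ π : Perm α, Nat.card {f // π.OddCyclesIn P ∧ π.IsCycleColoring P f} =
      (Fintype.card α)! + #P * (Fintype.card α - 1)! := by
  zify
  simp_rw [card_cycleColoring_eq_sum_signOn]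
  rw [sum_comm]
  simp_rw [sum_signOn, sum_sign_perm, Fintype.card_coe]
  rw [sum_powerset_apply_card (fun m => (if m ≤ 1 then (1 : ℤ) else 0) * (Fintype.card α - m)!)]
  rcases #P with _ | k
  · simp
  · rw [sum_range_succ', sum_range_succ']
    simp
    ring

theorem card_perm_apply_eq_self (a : α) :
    Nat.card {σ : Perm α // σ a = a} = (Fintype.card α - 1)! := by
  rw [Nat.card_congr ((Equiv.subtypeEquivRight fun σ => ?_).trans
    (Perm.subtypeEquivSubtypePerm (· ≠ a)).symm)]
  · simp [Nat.card_eq_fintype_card, Fintype.card_perm, Fintype.card_subtype_compl]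
  · simp

theorem card_markedFixedPoint (P : Finset α) :
    Nat.card {p : Perm α × Option α // ∀ i, p.2 = some i → p.1 i = i ∧ i ∈ P} =
      (Fintype.card α)! + #P * (Fintype.card α - 1)! := by
  rw [Nat.card_eq_fintype_card, Fintype.card_subtype, card_filter, Fintype.sum_prod_type_right,
    Fintype.sum_option]
  have hfix : ∀ i,
      #{σ : Perm α | σ i = i ∧ i ∈ P} = if i ∈ P then (Fintype.card α - 1)! else 0 := by
    intro i
    split_ifs with hi
    · simp [hi, ← card_perm_apply_eq_self i, Nat.card_eq_fintype_card, Fintype.card_subtype]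
    · simp [hi]
  simp [hfix, Fintype.card_perm]

end Equiv.Perm

lemma isKCycleElt_iff {N : ℕ} (σ : Perm (Fin N)) (k : ℕ) (x : Fin N) :
    IsKCycleElt σ k x ↔ σ.cycleFinset x ⊆ ({y | (y : ℕ) < k} : Finset (Fin N)) := by
  simp [IsKCycleElt, subset_iff]

lemma cycleLen_eq_card_cycleFinset {N : ℕ} (σ : Perm (Fin N)) (x : Fin N) :
    cycleLen σ x = #(σ.cycleFinset x) := by
  rw [cycleLen, Nat.card_eq_fintype_card, Fintype.card_subtype]
  rfl

lemma card_CFull (d k : ℕ) (hk : k ≤ d + 1) : Nat.card (CFull d k) = (d + 1)! + k * d ! := by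
  let P : Finset (Fin (d + 1)) := {y | (y : ℕ) < k}
  have e : CFull d k ≃ Σ π : Perm (Fin (d + 1)), {f // π.OddCyclesIn P ∧ π.IsCycleColoring P f} :=
    (Equiv.subtypeEquivRight (q := fun p => p.1.OddCyclesIn P ∧ p.1.IsCycleColoring P p.2)
      fun p => by
        simp only [isKCycleElt_iff, cycleLen_eq_card_cycleFinset, Perm.OddCyclesIn,
          Perm.IsCycleColoring, P]).trans
      (Equiv.subtypeProdEquivSigmaSubtype fun (π : Perm (Fin (d + 1))) f =>
        π.OddCyclesIn P ∧ π.IsCycleColoring P f)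
  rw [Nat.card_congr e, Nat.card_sigma, Perm.sum_card_cycleColoring, Fin.card_filter_val_lt,
    Fintype.card_fin, min_eq_right hk]
  rfl

lemma card_Marked (d k : ℕ) (hk : k ≤ d + 1) : Nat.card (Marked d k) = (d + 1)! + k * d ! := by
  let P : Finset (Fin (d + 1)) := {y | (y : ℕ) < k}
  have e : Marked d k ≃ {p : Perm (Fin (d + 1)) × Option (Fin (d + 1)) //
      ∀ i, p.2 = some i → p.1 i = i ∧ i ∈ P} :=
    Equiv.subtypeEquivRight fun p => by simp [P]
  rw [Nat.card_congr e, Perm.card_markedFixedPoint, Fin.card_filter_val_lt, Fintype.card_fin,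
    min_eq_right hk]
  rfl

theorem stmt8_general (d k : ℕ) (hk : k ≤ d) :
    Nat.card (CFull d k) = Nat.card (Marked d k) ∧
      Nat.card (CFull d k) = (d + k + 1) * d ! := by
  rw [card_CFull d k (by omega), card_Marked d k (by omega)]
  exact ⟨rfl, by rw [factorial_succ]; ring⟩

/-- Lemma 3.2: For every `d ≥ 1` and `0 ≤ k ≤ d`, the set `C_{d,k}` is in
bijection with the set of pairs `(σ, m)` where `σ ∈ S_{d+1}` and `m` is either `none` or an
element `i ≤ k` fixed by `σ`; both sets have cardinality `(d+k+1)·d!`. -/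
theorem stmt8 (d k : ℕ) (hd : 1 ≤ d) (hk : k ≤ d) :
    Nat.card (CFull d k) = Nat.card (Marked d k) ∧
      Nat.card (CFull d k) = (d + k + 1) * d ! :=
  stmt8_general d k hk
end

section
/- For every d ≥ 1, k with 0 ≤ k ≤ d, and n ≥ 0, the number of words in the alphabet {○, ①,…,ⓚ, 1,…,d} in which each of 1,…,d appears exactly once (either circled, which is only allowed for values ≤ k, or uncircled) and exactly n circles appear (empty or filled), equals d!·P_{d,k}(n). -/
/-!
Sort the words by the set `S ⊆ K` of circled letters. Forgetting the circle marks turns a word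
with circled set `S` into a word in which every letter of `α` occurs once among `n - |S|` empty
circles, and such a word is the same thing as the injection `α ↪ Fin (|α| + n - |S|)` recording
the positions of the letters. So there are `|α|! · C(n + |α| - |S|, |α|)` words with circled set
`S`, and summing over the `C(|K|, j)` sets `S` of size `j` gives `|α|! · P_{|α|,|K|}(n)`.
-/

open Nat

def P (d k n : ℕ) : ℕ := ∑ i ∈ Finset.range (k + 1), k.choose i * (n + d - i).choose d

open Finset

variable {α β : Type*}

theorem List.count_ofFn [BEq β] [LawfulBEq β] [DecidableEq β] {N : ℕ} (g : Fin N → β) (b : β) :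
    (List.ofFn g).count b = #{p | g p = b} := by
  obtain rfl : ‹BEq β› = instBEqOfDecidableEq := lawful_beq_subsingleton _ _
  rw [← Multiset.coe_count, ← Fin.univ_val_map, Multiset.count_map, Finset.card_def,
    Finset.filter_val]
  simp only [eq_comm]

theorem List.length_eq_sum_count [BEq β] [LawfulBEq β] [Fintype β] (l : List β) :
    l.length = ∑ b, l.count b := by
  classical
  obtain rfl : ‹BEq β› = instBEqOfDecidableEq := lawful_beq_subsingleton _ _
  simp [← Multiset.coe_count, ← Multiset.coe_card]

theorem Function.Embedding.partialInv_injective {N : Type*} :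
    Function.Injective fun f : α ↪ N => Function.partialInv f := by
  intro f f' h
  ext a
  have hfa : Function.partialInv f' (f a) = some a := by
    rw [← Function.partialInv_left f.injective a]
    exact congrFun h.symm (f a)
  exact ((f'.injective.isPartialInv _ _).mp hfa).symm

theorem exists_embedding_partialInv_eq {N : Type*} [Fintype N] [DecidableEq α] (g : N → Option α)
    (hg : ∀ a, #{p | g p = some a} = 1) : ∃ f : α ↪ N, Function.partialInv f = g := by
  choose f hf using fun a => Finset.card_eq_one.mp (hg a)
  have hgf : ∀ a p, g p = some a ↔ f a = p := fun a p => by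
    simpa [eq_comm] using Finset.ext_iff.mp (hf a) p
  have hf_inj : Function.Injective f := fun a b h => by
    simpa using ((hgf a _).mpr h).symm.trans ((hgf b _).mpr rfl)
  refine ⟨⟨f, hf_inj⟩, funext fun p => Option.ext fun a => ?_⟩
  exact (hf_inj.isPartialInv _ _).trans (hgf a p).symm

section Arrangement

variable [Fintype α] [DecidableEq α]

def IsArrangement (m : ℕ) (v : List (Option α)) : Prop :=
  (∀ a, v.count (some a) = 1) ∧ v.count none = m

theorem isArrangement_iff {m : ℕ} {v : List (Option α)} :
    IsArrangement m v ↔ (∀ a, v.count (some a) = 1) ∧ v.length = Fintype.card α + m := by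
  rw [IsArrangement, List.length_eq_sum_count, Fintype.sum_option]
  refine and_congr_right fun h => ?_
  simp only [h, sum_const, Finset.card_univ, smul_eq_mul, mul_one]
  omega

theorem isArrangement_ofFn_partialInv {m : ℕ} (f : α ↪ Fin (Fintype.card α + m)) :
    IsArrangement m (List.ofFn (Function.partialInv f)) := by
  refine isArrangement_iff.mpr ⟨fun a => ?_, List.length_ofFn⟩
  simp [List.count_ofFn, f.injective.isPartialInv _ _, Finset.filter_eq]

theorem bijective_ofFn_partialInv (m : ℕ) :
    Function.Bijective fun f : α ↪ Fin (Fintype.card α + m) =>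
      (⟨_, isArrangement_ofFn_partialInv f⟩ : {v : List (Option α) // IsArrangement m v}) := by
  refine ⟨fun f f' h => Function.Embedding.partialInv_injective
    (List.ofFn_injective (congrArg Subtype.val h)), fun ⟨v, hv⟩ => ?_⟩
  obtain ⟨hcount, hlen⟩ := isArrangement_iff.mp hv
  let g (p : Fin (Fintype.card α + m)) : Option α := v[p.val]
  have hvg : List.ofFn g = v := List.ext_getElem (by simp [hlen]) (by simp [g])
  obtain ⟨f, hf⟩ := exists_embedding_partialInv_eq g fun a => by
    rw [← List.count_ofFn, hvg, hcount]
  exact ⟨f, Subtype.ext ((congrArg List.ofFn hf).trans hvg)⟩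

noncomputable def arrangementEquiv (m : ℕ) :
    (α ↪ Fin (Fintype.card α + m)) ≃ {v : List (Option α) // IsArrangement m v} :=
  Equiv.ofBijective _ (bijective_ofFn_partialInv m)

instance (m : ℕ) : Finite {v : List (Option α) // IsArrangement m v} :=
  Finite.of_equiv _ (arrangementEquiv m)

theorem card_arrangements (m : ℕ) :
    Nat.card {v : List (Option α) // IsArrangement m v} =
      (Fintype.card α + m).descFactorial (Fintype.card α) := by
  rw [← Nat.card_congr (arrangementEquiv m), Nat.card_eq_fintype_card, Fintype.card_embedding_eq,
    Fintype.card_fin]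

end Arrangement

section CircledWord

variable [DecidableEq α]

/-- `none` is an empty circle and `some (a, true)` the circled letter `a`: both are circles. -/
def isCircle (x : Option (α × Bool)) : Bool := x.elim true fun q => q.2

def IsCircledWord (K : Finset α) (n : ℕ) (w : List (Option (α × Bool))) : Prop :=
  (∀ a, w.count (some (a, true)) + w.count (some (a, false)) = 1) ∧
  (∀ a, some (a, true) ∈ w → a ∈ K) ∧
  w.countP isCircle = n

def circledLetters [Fintype α] (w : List (Option (α × Bool))) : Finset α :=
  {a | some (a, true) ∈ w}

def flagWith (S : Finset α) : Option α → Option (α × Bool) :=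
  Option.map fun a => (a, decide (a ∈ S))

theorem flagWith_injective (S : Finset α) : Function.Injective (flagWith S) :=
  Option.map_injective fun _ _ h => congrArg Prod.fst h

theorem count_some_map_flagWith (S : Finset α) (v : List (Option α)) (a : α) (b : Bool) :
    (v.map (flagWith S)).count (some (a, b)) =
      if b = decide (a ∈ S) then v.count (some a) else 0 := by
  split_ifs with h
  · subst h
    exact List.count_map_of_injective _ _ (flagWith_injective S) (some a)
  · refine List.count_eq_zero.mpr fun hmem => h ?_
    obtain ⟨x, -, hx⟩ := List.mem_map.mp hmem
    cases x <;> simp_all [flagWith]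

theorem count_none_map_flagWith (S : Finset α) (v : List (Option α)) :
    (v.map (flagWith S)).count none = v.count none :=
  List.count_map_of_injective _ _ (flagWith_injective S) none

variable [Fintype α] {K S : Finset α} {n : ℕ}

theorem countP_isCircle_eq (w : List (Option (α × Bool))) :
    w.countP isCircle = w.count none + ∑ a, w.count (some (a, true)) := by
  induction w with
  | nil => simp
  | cons x w ih =>
    rcases x with _ | ⟨a, _ | _⟩ <;>
      simp [isCircle, List.countP_cons, List.count_cons, Finset.sum_add_distrib, ih] <;> ring

theorem countP_isCircle_map_flagWith {v : List (Option α)} (hv : ∀ a, v.count (some a) = 1) :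
    (v.map (flagWith S)).countP isCircle = v.count none + #S := by
  rw [countP_isCircle_eq, count_none_map_flagWith]
  simp [count_some_map_flagWith, hv]

theorem isCircledWord_map_flagWith (hSK : S ⊆ K) {v : List (Option α)}
    (hv : ∀ a, v.count (some a) = 1) :
    IsCircledWord K (v.count none + #S) (v.map (flagWith S)) := by
  refine ⟨fun a => ?_, fun a ha => hSK ?_, countP_isCircle_map_flagWith hv⟩
  · by_cases a ∈ S <;> simp [count_some_map_flagWith, *]
  · by_contra h
    simp [← List.count_pos_iff, count_some_map_flagWith, h] at ha

theorem circledLetters_map_flagWith {v : List (Option α)} (hv : ∀ a, v.count (some a) = 1) :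
    circledLetters (v.map (flagWith S)) = S := by
  ext a
  by_cases a ∈ S <;> simp [circledLetters, ← List.count_pos_iff, count_some_map_flagWith, *]

namespace IsCircledWord

variable {w : List (Option (α × Bool))} (hw : IsCircledWord K n w)
include hw

theorem count_some_decide_mem (a : α) :
    w.count (some (a, decide (a ∈ circledLetters w))) = 1 := by
  have h := hw.1 a
  by_cases ha : some (a, true) ∈ w
  · have := List.count_pos_iff.mpr ha
    simp [circledLetters, ha]
    omega
  · simp_all [circledLetters, List.count_eq_zero.mpr ha]

theorem map_flagWith_map_fst :
    (w.map (Option.map Prod.fst)).map (flagWith (circledLetters w)) = w := by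
  rw [List.map_map]
  refine (List.map_congr_left fun x hx => ?_).trans (List.map_id w)
  rcases x with _ | ⟨a, b⟩
  · rfl
  have h1 := hw.count_some_decide_mem a
  have h2 := List.count_pos_iff.mpr hx
  have h3 := hw.1 a
  cases b <;> cases hd : decide (a ∈ circledLetters w) <;> simp_all [flagWith]

theorem count_map_fst :
    (∀ a, (w.map (Option.map Prod.fst)).count (some a) = 1) ∧
      (w.map (Option.map Prod.fst)).count none + #(circledLetters w) = n := by
  have hw' := hw.map_flagWith_map_fst
  have hv : ∀ a, (w.map (Option.map Prod.fst)).count (some a) = 1 := fun a => by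
    calc _ = ((w.map (Option.map Prod.fst)).map (flagWith (circledLetters w))).count
            (some (a, decide (a ∈ circledLetters w))) := by
          rw [count_some_map_flagWith, if_pos rfl]
      _ = 1 := by rw [hw', hw.count_some_decide_mem a]
  refine ⟨hv, ?_⟩
  rw [← countP_isCircle_map_flagWith hv, hw', hw.2.2]

end IsCircledWord

def circledWordEquiv (K : Finset α) (n : ℕ) :
    {w // IsCircledWord K n w} ≃
      Σ S : {S : Finset α // S ⊆ K ∧ #S ≤ n}, {v : List (Option α) // IsArrangement (n - #S.1) v}
    where
  toFun w :=
    have h := w.2.count_map_fst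
    ⟨⟨circledLetters w.1, fun a ha => w.2.2.1 a (by simpa [circledLetters] using ha),
      Nat.le.intro (Nat.add_comm _ _ ▸ h.2)⟩,
      ⟨w.1.map (Option.map Prod.fst), h.1, Nat.eq_sub_of_add_eq h.2⟩⟩
  invFun p := ⟨p.2.1.map (flagWith p.1.1), by
    simpa [p.2.2.2, p.1.2.2] using isCircledWord_map_flagWith p.1.2.1 p.2.2.1⟩
  left_inv w := Subtype.ext w.2.map_flagWith_map_fst
  right_inv p := Sigma.subtype_ext (Subtype.ext (circledLetters_map_flagWith p.2.2.1))
    (by simp [List.map_map, flagWith, Option.map_map, Function.comp_def])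

theorem card_circledWords (K : Finset α) (n : ℕ) :
    Nat.card {w // IsCircledWord K n w} = (Fintype.card α)! * P (Fintype.card α) #K n := by
  set c := Fintype.card α
  rw [Nat.card_congr (circledWordEquiv K n), Nat.card_sigma]
  simp only [card_arrangements]
  calc ∑ S : {S : Finset α // S ⊆ K ∧ #S ≤ n}, (c + (n - #S.1)).descFactorial c
      = ∑ S : {S : Finset α // S ⊆ K ∧ #S ≤ n}, (n + c - #S.1).descFactorial c :=
        Fintype.sum_congr _ _ fun S => by rw [← Nat.add_sub_assoc S.2.2, Nat.add_comm]
    _ = ∑ S ∈ K.powerset with #S ≤ n, (n + c - #S).descFactorial c :=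
        (Finset.sum_subtype (p := fun S => S ⊆ K ∧ #S ≤ n) _ (fun S => by simp)
          fun S => (n + c - #S).descFactorial c).symm
    _ = ∑ S ∈ K.powerset, (n + c - #S).descFactorial c :=
        Finset.sum_filter_of_ne fun S _ h => by
          by_contra hS
          have := Finset.card_le_univ S
          exact h (Nat.descFactorial_eq_zero_iff_lt.mpr (by omega))
    _ = ∑ j ∈ range (#K + 1), (#K).choose j • (n + c - j).descFactorial c :=
        Finset.sum_powerset_apply_card fun j => (n + c - j).descFactorial c
    _ = c ! * P c #K n := by
        rw [P, Finset.mul_sum]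
        refine Finset.sum_congr rfl fun j _ => ?_
        rw [smul_eq_mul, Nat.descFactorial_eq_factorial_mul_choose]
        ring

end CircledWord

theorem stmt9_general (d k n : ℕ) (hk : k ≤ d) :
    Nat.card {w : List (Option (Fin d × Bool)) //
        (∀ i : Fin d, w.count (some (i, true)) + w.count (some (i, false)) = 1) ∧
        (∀ i : Fin d, some (i, true) ∈ w → (i : ℕ) < k) ∧
        w.countP (fun a => a.elim true (fun q => q.2)) = n} =
      d ! * P d k n := by
  have hK : #{i : Fin d | (i : ℕ) < k} = k := by
    rw [Fin.card_filter_val_lt, Nat.min_eq_right hk]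
  have h := card_circledWords {i : Fin d | (i : ℕ) < k} n
  rw [Fintype.card_fin, hK] at h
  rw [← h]
  exact Nat.card_congr (Equiv.subtypeEquivRight fun w => and_congr_right' (and_congr_left' (by simp)))

/-- For every `d ≥ 1`, `0 ≤ k ≤ d`, `n ≥ 0`, the number of words in the alphabet
`{○, ①,…,ⓚ, 1,…,d}` in which each of `1,…,d` appears exactly once (circled only allowed for
values ≤ k) and exactly `n` circles appear (empty or filled), equals `d!·P_{d,k}(n)`.
Letters are encoded as `Option (Fin d × Bool)`: `none` is an empty circle and `some (i, b)`
is the entry `i` (circled iff `b = true`). -/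
theorem stmt9 (d k n : ℕ) (hd : 1 ≤ d) (hk : k ≤ d) :
    Nat.card {w : List (Option (Fin d × Bool)) //
        (∀ i : Fin d, w.count (some (i, true)) + w.count (some (i, false)) = 1) ∧
        (∀ i : Fin d, some (i, true) ∈ w → (i : ℕ) < k) ∧
        w.countP (fun a => a.elim true (fun q => q.2)) = n} =
      d ! * P d k n :=
  stmt9_general d k n hk
end

section
/- For every d ≥ 1, k with 0 ≤ k ≤ d, and j with 0 ≤ j ≤ d, we have c_{d,k}(j) ≤ c_{d+1,k}(j). -/
/-!
Write `Q_{d,k} = Qpoly d k`. The recurrence `Q_{d+1,k} = (X + d + 1 - k) Q_{d,k} + k Q_{d,k-1}`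
has nonnegative constants for `k ≤ d + 1`, so all `Q_{d,k}` with `k ≤ d + 1` have nonnegative
coefficients once the boundary polynomials `D_d = Q_{d,d+1}` do. These count permutations all of
whose cycles are odd and 2-coloured, and satisfy `D_{d+2} = 2X D_{d+1} + (d+1)(d+2) D_d`, which
follows from the recurrence together with the Pascal rule `Q_{d,k+1}(X) = Q_{d,k}(X) + Q_{d,k}(X-1)`.
For `k ≤ d` the recurrence then exhibits `Q_{d+1,k} - Q_{d,k} = (X + d - k) Q_{d,k} + k Q_{d,k-1}`
as a polynomial with nonnegative coefficients.
-/

open Polynomial Finset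

section NonnegCoeffs

variable (R : Type*) [Semiring R] [PartialOrder R] [IsOrderedRing R]

def nonnegCoeffs : Subsemiring R[X] where
  carrier := {p | ∀ n, 0 ≤ p.coeff n}
  zero_mem' _ := by simp
  one_mem' n := by simp only [coeff_one]; split_ifs <;> simp
  add_mem' hp hq n := by rw [coeff_add]; exact add_nonneg (hp n) (hq n)
  mul_mem' hp hq n := by
    rw [coeff_mul]; exact sum_nonneg fun x _ => mul_nonneg (hp _) (hq _)

variable {R}

theorem mem_nonnegCoeffs {p : R[X]} : p ∈ nonnegCoeffs R ↔ ∀ n, 0 ≤ p.coeff n := Iff.rfl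

theorem X_mem_nonnegCoeffs : (X : R[X]) ∈ nonnegCoeffs R := fun n => by
  rw [coeff_X]; split_ifs <;> simp

theorem X_add_natCast_mem_nonnegCoeffs (n : ℕ) : X + (n : R[X]) ∈ nonnegCoeffs R :=
  add_mem X_mem_nonnegCoeffs (natCast_mem _ n)

end NonnegCoeffs

section BinomialSums

variable {R : Type*} [CommSemiring R] (f : ℕ → R)

theorem sum_range_succ_choose_mul (k : ℕ) :
    ∑ i ∈ range (k + 2), ((k + 1).choose i : R) * f i =
      ∑ i ∈ range (k + 1), (k.choose i : R) * f i +
        ∑ i ∈ range (k + 1), (k.choose i : R) * f (i + 1) := by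
  rw [sum_range_succ' _ (k + 1), sum_range_succ' (fun i => (k.choose i : R) * f i)]
  simp only [Nat.choose_succ_succ, Nat.cast_add, add_mul, sum_add_distrib,
    sum_range_succ (fun i => (k.choose (i + 1) : R) * f (i + 1)), Nat.choose_succ_self,
    Nat.choose_zero_right]
  simp only [Nat.cast_zero, zero_mul, add_zero, Nat.cast_one]
  ring

theorem sum_range_succ_choose_mul_self_mul (k : ℕ) :
    ∑ i ∈ range (k + 2), ((k + 1).choose i : R) * i * f i =
      (k + 1) * ∑ i ∈ range (k + 1), (k.choose i : R) * f (i + 1) := by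
  rw [sum_range_succ', mul_sum]
  simp only [Nat.cast_zero, mul_zero, zero_mul, add_zero]
  refine sum_congr rfl fun i _ => ?_
  rw [← mul_assoc]
  exact_mod_cast congrArg (fun n : ℕ => (n : R) * f (i + 1)) (Nat.add_one_mul_choose_eq k i).symm

theorem sum_range_choose_mul_sub_mul (k : ℕ) :
    ∑ i ∈ range (k + 1), (k.choose i : R) * ↑(k - i) * f i =
      k * ∑ i ∈ range (k - 1 + 1), ((k - 1).choose i : R) * f i := by
  cases k with
  | zero => simp
  | succ k =>
    rw [sum_range_succ, Nat.sub_self, Nat.add_sub_cancel, mul_sum]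
    simp only [Nat.cast_zero, mul_zero, zero_mul, add_zero]
    refine sum_congr rfl fun i _ => ?_
    rw [← mul_assoc]
    exact_mod_cast congrArg (fun n : ℕ => (n : R) * f i)
      ((Nat.choose_mul_succ_eq k i).symm.trans (mul_comm _ _))

end BinomialSums

/-- `∏_{m=1}^{d} (X + m - a)`, i.e. `d! · (X + d - a).choose d`. -/
noncomputable def shiftedRising (d : ℕ) (a : ℤ) : ℤ[X] :=
  ∏ m ∈ range d, (X + C ((m : ℤ) + 1 - a))

theorem shiftedRising_succ (d : ℕ) (a : ℤ) :
    shiftedRising (d + 1) a = shiftedRising d a * (X + C ((d : ℤ) + 1 - a)) :=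
  prod_range_succ _ d

theorem shiftedRising_succ_add_one (d : ℕ) (a : ℤ) :
    shiftedRising (d + 1) (a + 1) = (X - C a) * shiftedRising d a := by
  rw [shiftedRising, prod_range_succ']
  push_cast
  simp only [add_sub_add_right_eq_sub, sub_add_cancel_right, map_neg, ← sub_eq_add_neg]
  rw [mul_comm, shiftedRising]

theorem Qpoly_eq_sum (d k : ℕ) :
    Qpoly d k = ∑ i ∈ range (k + 1), (k.choose i : ℤ[X]) * shiftedRising d i := by
  simp only [Qpoly, map_natCast]
  rfl

/-- `Qpoly d k` with `X` replaced by `X - 1`. -/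
noncomputable def shiftedQpoly (d k : ℕ) : ℤ[X] :=
  ∑ i ∈ range (k + 1), (k.choose i : ℤ[X]) * shiftedRising d ↑(i + 1)

theorem Qpoly_succ_right (d k : ℕ) : Qpoly d (k + 1) = Qpoly d k + shiftedQpoly d k := by
  rw [Qpoly_eq_sum, Qpoly_eq_sum, shiftedQpoly]
  exact sum_range_succ_choose_mul (fun i => shiftedRising d i) k

theorem Qpoly_succ_left (d k : ℕ) (hk : k ≤ d + 1) :
    Qpoly (d + 1) k =
      (X + ((d + 1 - k : ℕ) : ℤ[X])) * Qpoly d k + (k : ℤ[X]) * Qpoly d (k - 1) := by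
  have hsplit : ∀ i ∈ range (k + 1), (k.choose i : ℤ[X]) * shiftedRising (d + 1) i =
      (X + ((d + 1 - k : ℕ) : ℤ[X])) * ((k.choose i : ℤ[X]) * shiftedRising d i) +
        (k.choose i : ℤ[X]) * ((k - i : ℕ) : ℤ[X]) * shiftedRising d i := by
    intro i hi
    have hik : i ≤ k := mem_range_succ_iff.mp hi
    have hconst : (d : ℤ) + 1 - i = ↑(d + 1 - k) + ↑(k - i) := by omega
    rw [shiftedRising_succ, hconst, map_add, map_natCast, map_natCast]
    ring
  rw [Qpoly_eq_sum, sum_congr rfl hsplit, sum_add_distrib, ← mul_sum, ← Qpoly_eq_sum,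
    sum_range_choose_mul_sub_mul (fun i => shiftedRising d i), ← Qpoly_eq_sum]

theorem shiftedQpoly_succ_succ (d k : ℕ) :
    shiftedQpoly (d + 1) (k + 1) = X * Qpoly d (k + 1) - ((k : ℤ[X]) + 1) * shiftedQpoly d k := by
  have hsplit : ∀ i ∈ range (k + 2),
      ((k + 1).choose i : ℤ[X]) * shiftedRising (d + 1) ↑(i + 1) =
        X * (((k + 1).choose i : ℤ[X]) * shiftedRising d i) -
          ((k + 1).choose i : ℤ[X]) * (i : ℤ[X]) * shiftedRising d i := by
    intro i _
    rw [Nat.cast_succ, shiftedRising_succ_add_one, map_natCast]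
    ring
  rw [shiftedQpoly, sum_congr rfl hsplit, sum_sub_distrib, ← mul_sum, ← Qpoly_eq_sum,
    sum_range_succ_choose_mul_self_mul (fun i => shiftedRising d i), shiftedQpoly]

theorem Qpoly_add_one_add_two (d : ℕ) :
    Qpoly (d + 1) (d + 2) =
      (2 * X - ((d : ℤ[X]) + 1)) * Qpoly d (d + 1) + 2 * ((d : ℤ[X]) + 1) * Qpoly d d := by
  have hk := Qpoly_succ_right (d + 1) (d + 1)
  have hd := Qpoly_succ_left d (d + 1) le_rfl
  have hshift := shiftedQpoly_succ_succ d d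
  have hk' := Qpoly_succ_right d d
  simp only [Nat.sub_self, Nat.add_sub_cancel, Nat.cast_zero, add_zero, Nat.cast_succ] at hd
  linear_combination hk + hd + hshift + ((d : ℤ[X]) + 1) * hk'

theorem Qpoly_add_two_add_three (d : ℕ) :
    Qpoly (d + 2) (d + 3) =
      2 * X * Qpoly (d + 1) (d + 2) + (((d + 1) * (d + 2) : ℕ) : ℤ[X]) * Qpoly d (d + 1) := by
  have h₁ := Qpoly_add_one_add_two (d + 1)
  have h₀ := Qpoly_add_one_add_two d
  have hd := Qpoly_succ_left d (d + 1) le_rfl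
  simp only [Nat.sub_self, Nat.add_sub_cancel, Nat.cast_zero, add_zero, Nat.cast_succ] at hd h₁
  push_cast
  linear_combination h₁ - ((d : ℤ[X]) + 2) * h₀ + 2 * ((d : ℤ[X]) + 2) * hd

theorem Qpoly_self_add_one_mem_nonnegCoeffs (d : ℕ) : Qpoly d (d + 1) ∈ nonnegCoeffs ℤ := by
  induction d using Nat.twoStepInduction with
  | zero =>
    have h : Qpoly 0 1 = 2 := by norm_num [Qpoly, sum_range_succ]
    exact h ▸ natCast_mem _ 2
  | one =>
    have h : Qpoly 1 2 = 4 * X := by norm_num [Qpoly, sum_range_succ]; ring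
    exact h ▸ mul_mem (natCast_mem _ 4) X_mem_nonnegCoeffs
  | more d h₀ h₁ =>
    rw [Qpoly_add_two_add_three]
    exact add_mem (mul_mem (mul_mem (natCast_mem _ 2) X_mem_nonnegCoeffs) h₁)
      (mul_mem (natCast_mem _ _) h₀)

theorem Qpoly_mem_nonnegCoeffs {d k : ℕ} (hk : k ≤ d + 1) : Qpoly d k ∈ nonnegCoeffs ℤ := by
  induction d generalizing k with
  | zero =>
    interval_cases k
    · simp [Qpoly, one_mem]
    · exact Qpoly_self_add_one_mem_nonnegCoeffs 0
  | succ d ih =>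
    obtain rfl | hk' := eq_or_lt_of_le hk
    · exact Qpoly_self_add_one_mem_nonnegCoeffs (d + 1)
    rw [Qpoly_succ_left d k (by omega)]
    exact add_mem (mul_mem (X_add_natCast_mem_nonnegCoeffs _) (ih (by omega)))
      (mul_mem (natCast_mem _ _) (ih (by omega)))

theorem Qpoly_succ_sub_mem_nonnegCoeffs {d k : ℕ} (hk : k ≤ d) :
    Qpoly (d + 1) k - Qpoly d k ∈ nonnegCoeffs ℤ := by
  have hsub : Qpoly (d + 1) k - Qpoly d k =
      (X + ((d - k : ℕ) : ℤ[X])) * Qpoly d k + (k : ℤ[X]) * Qpoly d (k - 1) := by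
    rw [Qpoly_succ_left d k (by omega), show d + 1 - k = d - k + 1 by omega]
    push_cast
    ring
  rw [hsub]
  exact add_mem (mul_mem (X_add_natCast_mem_nonnegCoeffs _) (Qpoly_mem_nonnegCoeffs (by omega)))
    (mul_mem (natCast_mem _ _) (Qpoly_mem_nonnegCoeffs (by omega)))

theorem stmt12_general (d k j : ℕ) (hk : k ≤ d) :
    (Qpoly d k).coeff j ≤ (Qpoly (d + 1) k).coeff j := by
  have h := mem_nonnegCoeffs.mp (Qpoly_succ_sub_mem_nonnegCoeffs hk) j
  rwa [coeff_sub, sub_nonneg] at h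

/-- For every `d ≥ 1`, `0 ≤ k ≤ d`, `0 ≤ j ≤ d`,
`c_{d,k}(j) ≤ c_{d+1,k}(j)`. -/
theorem stmt12 (d k j : ℕ) (hd : 1 ≤ d) (hk : k ≤ d) (hj : j ≤ d) :
    (Qpoly d k).coeff j ≤ (Qpoly (d + 1) k).coeff j :=
  stmt12_general d k j hk
end

section
/- For every d ≥ 1, the Ehrhart polynomial of the d-dimensional cross-polytope satisfies P_{d,d}(n) = # { x ∈ ℤ^d : |x_1| + ⋯ + |x_d| ≤ n } for all natural numbers n, where P_{d,d}(n) = ∑_{i=0}^{d} C(d,i)·C(n+d-i,d). -/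
open Finset


/-- Finiteness of the bounded-sum tuples. -/
lemma finite_aux (d m c : ℕ) : Finite {y : Fin d → ℕ // c + ∑ i, y i ≤ m} := by
  apply Finite.of_injective (fun y : {y : Fin d → ℕ // c + ∑ i, y i ≤ m} =>
    (fun i => (⟨min (y.1 i) m, by omega⟩ : Fin (m + 1)) : Fin d → Fin (m + 1)))
  intro a b h
  have ha : ∀ i, a.1 i ≤ m := fun i => le_trans
    (le_trans (Finset.single_le_sum (fun j _ => Nat.zero_le (a.1 j)) (mem_univ i))
      (Nat.le_add_left _ c)) a.2
  have hb : ∀ i, b.1 i ≤ m := fun i => le_trans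
    (le_trans (Finset.single_le_sum (fun j _ => Nat.zero_le (b.1 j)) (mem_univ i))
      (Nat.le_add_left _ c)) b.2
  ext i
  have := congrFun h i
  simp only [Fin.mk.injEq] at this
  have h1 := ha i
  have h2 := hb i
  omega

instance finite_aux' (d m c : ℕ) : Finite {y : Fin d → ℕ // c + ∑ i, y i ≤ m} := finite_aux d m c

instance finite_aux0 (d m : ℕ) : Finite {y : Fin d → ℕ // ∑ i, y i ≤ m} := by
  have := finite_aux d m 0
  exact Finite.of_injective (fun y : {y : Fin d → ℕ // ∑ i, y i ≤ m} =>
    (⟨y.1, by simpa using y.2⟩ : {y : Fin d → ℕ // 0 + ∑ i, y i ≤ m}))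
    (fun a b h => by simpa [Subtype.ext_iff] using h)

lemma natCard_sigma {ι : Type*} [Fintype ι] (f : ι → Type*) [∀ i, Finite (f i)] :
    Nat.card (Σ i, f i) = ∑ i, Nat.card (f i) := by
  letI := fun i => Fintype.ofFinite (f i)
  simp [Nat.card_eq_fintype_card]

/-- Stars and bars with inequality. -/
lemma natCard_sum_le (d : ℕ) : ∀ m : ℕ,
    Nat.card {y : Fin d → ℕ // ∑ i, y i ≤ m} = (m + d).choose d := by
  induction d with
  | zero =>
    intro m
    haveI : Unique {y : Fin 0 → ℕ // ∑ i, y i ≤ m} :=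
      ⟨⟨⟨fun i => 0, by simp⟩⟩, fun y => Subtype.ext (funext fun i => i.elim0)⟩
    simp [Nat.card_unique]
  | succ d ih =>
    intro m
    have e : {y : Fin (d+1) → ℕ // ∑ i, y i ≤ m} ≃
        Σ t : Fin (m+1), {z : Fin d → ℕ // ∑ i, z i ≤ m - t.1} := by
      refine ⟨fun y => ⟨⟨y.1 0, ?_⟩, ⟨Fin.tail y.1, ?_⟩⟩,
        fun p => ⟨Fin.cons p.1.1 p.2.1, ?_⟩, ?_, ?_⟩
      · have h1 : y.1 0 ≤ ∑ i, y.1 i :=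
          Finset.single_le_sum (fun j _ => Nat.zero_le (y.1 j)) (mem_univ 0)
        have := y.2; omega
      · have h := y.2
        rw [Fin.sum_univ_succ] at h
        simp only [Fin.tail]
        omega
      · have h := p.2.2
        have ht : p.1.1 ≤ m := by omega
        rw [Fin.sum_univ_succ]
        simp only [Fin.cons_zero, Fin.cons_succ]
        omega
      · intro y
        exact Subtype.ext (Fin.cons_self_tail y.1)
      · rintro ⟨⟨t, ht⟩, z, hz⟩
        apply Sigma.ext
        · simp
        · rw [Subtype.heq_iff_coe_eq]
          · simp [Fin.tail_cons]
          · intro x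
            simp
    rw [Nat.card_congr e, natCard_sigma]
    have : ∀ t : Fin (m+1), Nat.card {z : Fin d → ℕ // ∑ i, z i ≤ m - t.1}
        = (m - t.1 + d).choose d := fun t => ih (m - t.1)
    rw [Finset.sum_congr rfl (fun t _ => this t)]
    rw [Fin.sum_univ_eq_sum_range (fun t => (m - t + d).choose d)]
    have hr := Finset.sum_range_reflect (fun j => (j + d).choose d) (m + 1)
    simp only [Nat.add_sub_cancel] at hr
    calc ∑ t ∈ range (m + 1), (m - t + d).choose d
        = ∑ t ∈ range (m + 1), (t + d).choose d := hr
      _ = (m + d + 1).choose (d + 1) := Nat.sum_range_add_choose m d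
      _ = (m + (d + 1)).choose (d + 1) := by rw [Nat.add_assoc]

lemma natCard_shifted (d n c : ℕ) (hc : c ≤ d) :
    Nat.card {y : Fin d → ℕ // c + ∑ i, y i ≤ n} = (n + d - c).choose d := by
  by_cases h : c ≤ n
  · have e : {y : Fin d → ℕ // c + ∑ i, y i ≤ n} ≃ {y : Fin d → ℕ // ∑ i, y i ≤ n - c} :=
      Equiv.subtypeEquivRight (fun y => by omega)
    rw [Nat.card_congr e, natCard_sum_le]
    congr 1
    omega
  · haveI : IsEmpty {y : Fin d → ℕ // c + ∑ i, y i ≤ n} :=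
      ⟨fun y => by have := y.2; omega⟩
    rw [Nat.card_of_isEmpty]
    exact (Nat.choose_eq_zero_of_lt (by omega)).symm

/-- For every `d ≥ 1` and all natural `n`, the Ehrhart polynomial of the
`d`-dimensional cross-polytope satisfies
`P_{d,d}(n) = #{x ∈ ℤ^d : |x_1| + ⋯ + |x_d| ≤ n}`. -/
theorem stmt16 (d : ℕ) (hd : 1 ≤ d) (n : ℕ) :
    Nat.card {x : Fin d → ℤ // ∑ i, |x i| ≤ (n : ℤ)} = P d d n := by
  classical
  -- key pointwise facts
  have key : ∀ x : Fin d → ℤ, ∀ i,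
      ((if x i < 0 then (-(x i) - 1).toNat else (x i).toNat : ℕ) : ℤ)
        + (if x i < 0 then (1 : ℤ) else 0) = |x i| := by
    intro x i
    by_cases h : x i < 0
    · simp only [h, if_true]
      rw [Int.toNat_of_nonneg (by omega), abs_of_neg h]
      ring
    · simp only [h, if_false]
      rw [Int.toNat_of_nonneg (by omega), abs_of_nonneg (by omega)]
      ring
  have e : {x : Fin d → ℤ // ∑ i, |x i| ≤ (n : ℤ)} ≃
      Σ S : Finset (Fin d), {y : Fin d → ℕ // S.card + ∑ i, y i ≤ n} := by
    refine ⟨fun x => ⟨univ.filter (fun i => x.1 i < 0),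
        ⟨fun i => if x.1 i < 0 then (-(x.1 i) - 1).toNat else (x.1 i).toNat, ?_⟩⟩,
      fun p => ⟨fun i => if i ∈ p.1 then -(p.2.1 i : ℤ) - 1 else (p.2.1 i : ℤ), ?_⟩, ?_, ?_⟩
    · -- condition for toFun
      have hx := x.2
      have hcast : (((univ.filter (fun i => x.1 i < 0)).card : ℤ)
          + ∑ i, ((if x.1 i < 0 then (-(x.1 i) - 1).toNat else (x.1 i).toNat : ℕ) : ℤ))
          ≤ (n : ℤ) := by
        rw [Finset.card_filter]
        push_cast
        rw [← Finset.sum_add_distrib]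
        calc ∑ i, ((if x.1 i < 0 then (1:ℤ) else 0)
              + (if x.1 i < 0 then ((-(x.1 i) - 1).toNat : ℤ) else ((x.1 i).toNat : ℤ)))
            = ∑ i, |x.1 i| := by
              refine Finset.sum_congr rfl (fun i _ => ?_)
              have := key x.1 i
              by_cases h : x.1 i < 0 <;> simp [h] at this ⊢ <;> omega
          _ ≤ (n : ℤ) := hx
      have := hcast
      push_cast at this
      exact_mod_cast this
    · -- condition for invFun
      obtain ⟨S, y, hy⟩ := p
      simp only
      calc ∑ i, |if i ∈ S then -(y i : ℤ) - 1 else (y i : ℤ)|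
          = ∑ i, ((y i : ℤ) + if i ∈ S then 1 else 0) := by
            refine Finset.sum_congr rfl (fun i _ => ?_)
            by_cases h : i ∈ S
            · rw [if_pos h, if_pos h, abs_of_neg (by omega)]; ring
            · rw [if_neg h, if_neg h, abs_of_nonneg (by omega)]; ring
        _ = (∑ i, (y i : ℤ)) + S.card := by
            rw [Finset.sum_add_distrib]
            congr 1
            rw [Finset.sum_ite_mem, Finset.univ_inter, Finset.sum_const]
            simp
        _ ≤ (n : ℤ) := by
            have : (S.card : ℤ) + ∑ i, (y i : ℤ) ≤ n := by exact_mod_cast hy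
            omega
    · -- left inverse
      rintro ⟨x, hx⟩
      apply Subtype.ext
      funext i
      simp only [Finset.mem_filter, Finset.mem_univ, true_and]
      by_cases h : x i < 0
      · simp only [h, if_true]
        rw [Int.toNat_of_nonneg (by omega)]
        ring
      · simp only [h, if_false]
        rw [Int.toNat_of_nonneg (by omega)]
    · -- right inverse
      rintro ⟨S, y, hy⟩
      dsimp only
      have hmem : ∀ i, ((if i ∈ S then -(y i : ℤ) - 1 else (y i : ℤ)) < 0) ↔ i ∈ S := by
        intro i
        by_cases h : i ∈ S
        · simp only [h, if_true, iff_true]; omega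
        · simp only [h, if_false, iff_false]; omega
      have hS : (univ.filter (fun i => (if i ∈ S then -(y i : ℤ) - 1 else (y i : ℤ)) < 0)) = S := by
        ext i
        simp [hmem i]
      apply Sigma.ext
      · simpa using hS
      · rw [Subtype.heq_iff_coe_eq]
        · funext i
          by_cases h : i ∈ S
          · have hlt : (-(y i : ℤ) - 1) < 0 := by omega
            simp only [h, if_true, hlt, if_pos]
            omega
          · have hge : ¬ ((y i : ℤ) < 0) := by omega
            simp only [h, if_false, hge, if_neg, not_false_iff]
            simp
        · intro z
          dsimp only
          rw [hS]
  rw [Nat.card_congr e, natCard_sigma]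
  have step : ∀ S : Finset (Fin d), Nat.card {y : Fin d → ℕ // S.card + ∑ i, y i ≤ n}
      = (n + d - S.card).choose d := fun S =>
    natCard_shifted d n S.card (by simpa using Finset.card_le_univ S)
  rw [Finset.sum_congr rfl (fun S _ => step S)]
  unfold P
  rw [← Finset.powerset_univ, Finset.sum_powerset]
  simp only [Finset.card_univ, Fintype.card_fin]
  refine Finset.sum_congr rfl (fun j hj => ?_)
  rw [Finset.sum_powersetCard j univ (fun m => (n + d - m).choose d)]
  simp [Finset.card_univ, mul_comm]
end

section
/- For every d ≥ 1, k with 0 ≤ k ≤ d, and n ≥ 0, the number of integer points x ∈ ℤ^d with |x_1| + ⋯ + |x_k| + x_{k+1} + ⋯ + x_d ≤ n and x_{k+1},…,x_d ≥ 0 equals P_{d,k}(n) = ∑_{i=0}^{k} C(k,i)·C(n+d-i,d). -/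
open Finset Function

theorem card_sum_le_eq_choose (ι : Type*) [Fintype ι] (n : ℕ) :
    Nat.card {y : ι → ℕ // ∑ i, y i ≤ n} = (n + Fintype.card ι).choose (Fintype.card ι) := by
  classical
  let addSlack : {y : ι → ℕ // ∑ i, y i ≤ n} ≃ {z : Option ι → ℕ // ∑ o, z o = n} :=
    { toFun := fun y => ⟨fun o => o.elim (n - ∑ i, y.1 i) y.1, by
        simp only [Fintype.sum_option, Option.elim_none, Option.elim_some]; have := y.2; omega⟩
      invFun := fun z => ⟨fun i => z.1 (some i), by
        show ∑ i, z.1 (some i) ≤ n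
        have := z.2; rw [Fintype.sum_option] at this; omega⟩
      left_inv := fun y => rfl
      right_inv := fun z => by
        have := z.2
        rw [Fintype.sum_option] at this
        ext (_ | i)
        · simp only [Option.elim_none]; omega
        · rfl }
  rw [Nat.card_congr (addSlack.trans (Sym.equivNatSumOfFintype _ n).symm),
    Sym.natCard_sym_eq_choose, Finite.card_option, Nat.card_eq_fintype_card,
    show Fintype.card ι + 1 + n - 1 = n + Fintype.card ι by omega, Nat.choose_symm_add]

theorem P_zero {d k : ℕ} (hk : k ≤ d) : P d k 0 = 1 := by
  rw [P, sum_eq_single 0]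
  · simp
  · intro i hi hi0
    have : 0 + d - i < d := by have := mem_range.mp hi; omega
    rw [Nat.choose_eq_zero_of_lt this, mul_zero]
  · simp

theorem P_succ_succ (d k n : ℕ) : P d (k + 1) (n + 1) = P d k (n + 1) + P d k n := by
  set f := fun i => (n + 1 + d - i).choose d with hf
  have hn : P d k n = ∑ i ∈ range (k + 1), k.choose i * f (i + 1) :=
    sum_congr rfl fun i _ => by simp only [hf, show n + 1 + d - (i + 1) = n + d - i by omega]
  calc P d (k + 1) (n + 1)
      = ∑ i ∈ range (k + 1), (k + 1).choose (i + 1) * f (i + 1) + f 0 := by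
        rw [P, sum_range_succ', Nat.choose_zero_right, one_mul]
    _ = ∑ i ∈ range (k + 1), k.choose i * f (i + 1) +
          (∑ i ∈ range (k + 1), k.choose (i + 1) * f (i + 1) + k.choose 0 * f 0) := by
        simp only [Nat.choose_succ_succ, add_mul, sum_add_distrib, Nat.choose_zero_right]
        ring
    _ = P d k n + P d k (n + 1) := by
        rw [← sum_range_succ' (fun i => k.choose i * f i), sum_range_succ _ (k + 1),
          Nat.choose_eq_zero_of_lt (Nat.lt_succ_self k), zero_mul, add_zero, hn]
        rfl
    _ = P d k (n + 1) + P d k n := add_comm _ _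

section CrossPyramid

variable {ι : Type*}

def reflectAt [DecidableEq ι] (a : ι) (x : ι → ℤ) : ι → ℤ :=
  update x a (-1 - x a)

theorem reflectAt_involutive [DecidableEq ι] (a : ι) : Involutive (reflectAt a) := fun x => by
  simp [reflectAt]

variable [Fintype ι]

theorem sum_abs_update [DecidableEq ι] (x : ι → ℤ) (a : ι) (v : ℤ) :
    ∑ i, |update x a v i| + |x a| = ∑ i, |x i| + |v| := by
  have h : (fun i => |update x a v i|) = update (fun i => |x i|) a |v| := by
    ext i; rcases eq_or_ne i a with rfl | h <;> simp [*]
  rw [h, sum_update_of_mem (mem_univ a), sdiff_singleton_eq_erase,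
    ← add_sum_erase _ _ (mem_univ a)]
  ring

def crossPyramid (s : Finset ι) (m : ℤ) : Set (ι → ℤ) :=
  {x | ∑ i, |x i| ≤ m ∧ ∀ i ∉ s, 0 ≤ x i}

theorem abs_le_of_mem_crossPyramid {s : Finset ι} {m : ℤ} {x : ι → ℤ}
    (hx : x ∈ crossPyramid s m) (i : ι) : |x i| ≤ m :=
  (single_le_sum (fun j _ => abs_nonneg (x j)) (mem_univ i)).trans hx.1

theorem crossPyramid_finite (s : Finset ι) (m : ℤ) : (crossPyramid s m).Finite :=
  (Set.Finite.pi fun _ => Set.finite_Icc (-m) m).subset fun _ hx i _ =>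
    abs_le.mp (abs_le_of_mem_crossPyramid hx i)

theorem crossPyramid_eq_empty {s : Finset ι} {m : ℤ} (hm : m < 0) : crossPyramid s m = ∅ :=
  Set.eq_empty_of_forall_notMem fun x hx =>
    (hx.1.trans_lt hm).not_ge (sum_nonneg fun i _ => abs_nonneg (x i))

theorem crossPyramid_empty_ncard (n : ℕ) :
    (crossPyramid (∅ : Finset ι) n).ncard = (n + Fintype.card ι).choose (Fintype.card ι) := by
  have toNat : crossPyramid (∅ : Finset ι) n ≃ {y : ι → ℕ // ∑ i, y i ≤ n} :=
    { toFun := fun x => ⟨fun i => (x.1 i).toNat, by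
        have hx := x.2
        simp only [crossPyramid, Set.mem_ofPred_eq, notMem_empty, not_false_eq_true,
          forall_const] at hx
        zify
        simpa [Int.toNat_of_nonneg (hx.2 _), abs_of_nonneg (hx.2 _)] using hx.1⟩
      invFun := fun y => ⟨fun i => y.1 i, by
        refine ⟨?_, fun i _ => Int.natCast_nonneg _⟩
        simp only [Int.abs_natCast]
        exact_mod_cast y.2⟩
      left_inv := fun x => by
        ext i
        exact Int.toNat_of_nonneg (x.2.2 i (notMem_empty i))
      right_inv := fun y => by ext i; simp }
  rw [← Nat.card_coe_set_eq, Nat.card_congr toNat, card_sum_le_eq_choose]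

variable [DecidableEq ι]

theorem mem_crossPyramid_iff_insert {a : ι} {s : Finset ι} (ha : a ∉ s) {m : ℤ} {x : ι → ℤ} :
    x ∈ crossPyramid s m ↔ x ∈ crossPyramid (insert a s) m ∧ 0 ≤ x a := by
  simp only [crossPyramid, Set.mem_ofPred_eq, mem_insert, not_or]
  constructor
  · exact fun ⟨hm, hs⟩ => ⟨⟨hm, fun i hi => hs i hi.2⟩, hs a ha⟩
  · rintro ⟨⟨hm, hs⟩, ha⟩
    refine ⟨hm, fun i hi => ?_⟩
    rcases eq_or_ne i a with rfl | h
    exacts [ha, hs i ⟨h, hi⟩]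

theorem reflectAt_mem_crossPyramid_iff {a : ι} {s : Finset ι} (ha : a ∉ s) {m : ℤ}
    {x : ι → ℤ} :
    reflectAt a x ∈ crossPyramid s (m - 1) ↔ x ∈ crossPyramid (insert a s) m ∧ x a < 0 := by
  have hsum : ∑ i, |reflectAt a x i| + |x a| = ∑ i, |x i| + |-1 - x a| :=
    sum_abs_update x a (-1 - x a)
  have hself : reflectAt a x a = -1 - x a := update_self _ _ _
  have hoff : ∀ i ∉ insert a s, reflectAt a x i = x i := fun i hi =>
    update_of_ne (ne_of_mem_of_not_mem (mem_insert_self a s) hi).symm _ _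
  rw [mem_crossPyramid_iff_insert ha]
  simp only [crossPyramid, Set.mem_ofPred_eq, hself]
  constructor
  · rintro ⟨⟨hm, hs⟩, hneg⟩
    refine ⟨⟨?_, fun i hi => hoff i hi ▸ hs i hi⟩, by omega⟩
    rw [abs_of_neg (by omega : x a < 0), abs_of_nonneg hneg] at hsum
    omega
  · rintro ⟨⟨hm, hs⟩, hneg⟩
    refine ⟨⟨?_, fun i hi => hoff i hi ▸ hs i hi⟩, by omega⟩
    rw [abs_of_neg hneg, abs_of_nonneg (by omega : 0 ≤ -1 - x a)] at hsum
    omega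

theorem crossPyramid_insert_ncard {a : ι} {s : Finset ι} (ha : a ∉ s) (m : ℤ) :
    (crossPyramid (insert a s) m).ncard =
      (crossPyramid s m).ncard + (crossPyramid s (m - 1)).ncard := by
  have hnonneg : crossPyramid (insert a s) m ∩ {x | 0 ≤ x a} = crossPyramid s m := by
    ext x; exact (mem_crossPyramid_iff_insert ha).symm
  have hneg : crossPyramid (insert a s) m \ {x | 0 ≤ x a} =
      reflectAt a ⁻¹' crossPyramid s (m - 1) := by
    ext x; simp [reflectAt_mem_crossPyramid_iff ha]
  rw [← Set.ncard_inter_add_ncard_sdiff_eq_ncard _ {x | 0 ≤ x a} (crossPyramid_finite _ _),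
    hnonneg, hneg, Set.ncard_preimage_of_injective_subset_range (reflectAt_involutive a).injective
      (by simp [(reflectAt_involutive a).surjective.range_eq])]

theorem crossPyramid_ncard (s : Finset ι) (n : ℕ) :
    (crossPyramid s n).ncard = P (Fintype.card ι) #s n := by
  induction s using Finset.induction_on generalizing n with
  | empty => simp [crossPyramid_empty_ncard, P]
  | insert a s ha ih =>
    have hs : #s + 1 ≤ Fintype.card ι := card_insert_of_notMem ha ▸ card_le_univ _
    rw [crossPyramid_insert_ncard ha, card_insert_of_notMem ha, ih]
    cases n with
    | zero =>
      rw [crossPyramid_eq_empty (by simp), Set.ncard_empty, P_zero hs, P_zero (by omega)]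
    | succ n => rw [Nat.cast_succ, add_sub_cancel_right, ih, P_succ_succ]

end CrossPyramid

theorem crossPyramid_filter_lt (d k : ℕ) (m : ℤ) :
    crossPyramid {i : Fin d | (i : ℕ) < k} m =
      {x | (∑ i : Fin d, if (i : ℕ) < k then |x i| else x i) ≤ m ∧
        ∀ i : Fin d, k ≤ (i : ℕ) → 0 ≤ x i} := by
  ext x
  simp only [crossPyramid, mem_filter, mem_univ, true_and, not_lt, Set.mem_ofPred_eq]
  refine and_congr_left fun hx => ?_
  rw [sum_congr rfl fun i _ => ?_]
  split_ifs with hi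
  · rfl
  · exact abs_of_nonneg (hx i (not_lt.mp hi))

theorem stmt17_general (d k n : ℕ) (hk : k ≤ d) :
    Nat.card {x : Fin d → ℤ //
        (∑ i : Fin d, if (i : ℕ) < k then |x i| else x i) ≤ (n : ℤ) ∧
        ∀ i : Fin d, k ≤ (i : ℕ) → 0 ≤ x i} = P d k n := by
  have hcard : #{i : Fin d | (i : ℕ) < k} = k := Fin.card_filter_val_lt.trans (min_eq_right hk)
  have := crossPyramid_ncard {i : Fin d | (i : ℕ) < k} n
  rwa [Fintype.card_fin, hcard, crossPyramid_filter_lt] at this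

/-- For every `d ≥ 1`, `0 ≤ k ≤ d`, `n ≥ 0`, the number of integer points
`x ∈ ℤ^d` with `|x_1| + ⋯ + |x_k| + x_{k+1} + ⋯ + x_d ≤ n` and `x_{k+1},…,x_d ≥ 0`
equals `P_{d,k}(n)`. (Coordinates are indexed by `Fin d`; the first `k` of them are the
ones taken in absolute value.) -/
theorem stmt17 (d k n : ℕ) (hd : 1 ≤ d) (hk : k ≤ d) :
    Nat.card {x : Fin d → ℤ //
        (∑ i : Fin d, if (i : ℕ) < k then |x i| else x i) ≤ (n : ℤ) ∧
        ∀ i : Fin d, k ≤ (i : ℕ) → 0 ≤ x i} = P d k n :=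
  stmt17_general d k n hk
end

section
/- The number of permutations of {1,…,2m} all of whose cycles have odd length equals the number of permutations of {1,…,2m} all of whose cycles have even length, for every m ≥ 1. -/
open Equiv Finset
open scoped Nat

namespace Equiv.Perm

variable {α β : Type*}

noncomputable def cycleLength (σ : Perm α) (x : α) : ℕ := Nat.card {y // σ.SameCycle x y}

theorem SameCycle.map_of_forall {σ : Perm α} {τ : Perm β} {f : α → β}
    (hf : ∀ x, τ.SameCycle (f x) (f (σ x))) {x y : α} (h : σ.SameCycle x y) :
    τ.SameCycle (f x) (f y) := by
  obtain ⟨i, rfl⟩ := h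
  induction i using Int.induction_on with
  | zero => exact .rfl
  | succ i ih => rw [add_comm, zpow_add, zpow_one, mul_apply]; exact ih.trans (hf _)
  | pred i ih =>
    have hstep : σ ((σ ^ (-(i : ℤ) - 1)) x) = (σ ^ (-(i : ℤ))) x := by
      rw [← mul_apply, ← zpow_one_add, add_sub_cancel]
    exact ih.trans (hstep ▸ hf _).symm

theorem sameCycle_permCongr_apply (f : α ≃ β) (σ : Perm α) {x y : α} :
    (f.permCongr σ).SameCycle (f x) (f y) ↔ σ.SameCycle x y := by
  refine ⟨fun h => ?_, fun h => h.map_of_forall (f := f) fun z => ⟨1, by simp⟩⟩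
  simpa using h.map_of_forall (f := f.symm) fun z => by simp [SameCycle.rfl]

theorem cycleLength_permCongr_apply (f : α ≃ β) (σ : Perm α) (x : α) :
    (f.permCongr σ).cycleLength (f x) = σ.cycleLength x :=
  (Nat.card_congr (f.subtypeEquiv fun _ => (sameCycle_permCongr_apply f σ).symm)).symm

theorem forall_cycleLength_permCongr (q : ℕ → Prop) (f : α ≃ β) (σ : Perm α) :
    (∀ y, q ((f.permCongr σ).cycleLength y)) ↔ ∀ x, q (σ.cycleLength x) :=
  (f.forall_congr fun x => by rw [cycleLength_permCongr_apply]).symm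

noncomputable def restrictedPermCount (q : ℕ → Prop) (α : Type*) : ℕ :=
  Nat.card {σ : Perm α // ∀ x, q (σ.cycleLength x)}

theorem restrictedPermCount_congr (q : ℕ → Prop) (f : α ≃ β) :
    restrictedPermCount q α = restrictedPermCount q β :=
  Nat.card_congr (f.permCongr.subtypeEquiv fun σ => (forall_cycleLength_permCongr q f σ).symm)

theorem restrictedPermCount_of_isEmpty (q : ℕ → Prop) [IsEmpty α] :
    restrictedPermCount q α = 1 := by
  rw [restrictedPermCount, Nat.card_congr (Equiv.subtypeUnivEquiv fun σ x => isEmptyElim x)]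
  exact Nat.card_unique

theorem sameCycle_optionCongr_none_left (e : Perm α) {u : Option α} :
    Perm.SameCycle e.optionCongr none u ↔ u = none :=
  ⟨fun h => (h.eq_of_left (by simp [Function.IsFixedPt])).symm, fun h => h ▸ .rfl⟩

theorem sameCycle_optionCongr_some (e : Perm α) {x y : α} :
    Perm.SameCycle e.optionCongr (some x) (some y) ↔ e.SameCycle x y := by
  refine ⟨fun h => ?_, fun h => h.map_of_forall (f := some) fun z => ⟨1, by simp⟩⟩
  simpa using h.map_of_forall (f := fun u => u.getD x) fun u => by
    cases u <;> simp [SameCycle.rfl]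

section Option

variable [DecidableEq α]

-- `decomposeOption.symm (some a, e)`: `none` enters the cycle of `a`, just before `a`.
def insertBefore (e : Perm α) (a : α) : Perm (Option α) :=
  swap none (some a) * e.optionCongr

theorem insertBefore_none (e : Perm α) (a : α) : e.insertBefore a none = some a := by
  simp [insertBefore]

theorem insertBefore_some (e : Perm α) (a x : α) :
    e.insertBefore a (some x) = if e x = a then none else some (e x) := by
  split_ifs with h
  · simp [insertBefore, h]
  · simp [insertBefore, swap_apply_of_ne_of_ne, h]

theorem sameCycle_insertBefore (e : Perm α) (a : α) {u v : Option α} :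
    (e.insertBefore a).SameCycle u v ↔ e.SameCycle (u.getD a) (v.getD a) := by
  constructor
  · refine fun h => h.map_of_forall (f := fun w : Option α => w.getD a) fun w => ?_
    rcases w with _ | x
    · simp [insertBefore_none, SameCycle.rfl]
    · rw [insertBefore_some]
      split_ifs with hx
      · exact (hx ▸ SameCycle.rfl.apply_right : e.SameCycle x a)
      · exact SameCycle.rfl.apply_right
  · intro h
    have hstep (x : α) : (e.insertBefore a).SameCycle (some x) (some (e x)) := by
      by_cases hx : e x = a
      · have h2 : e.insertBefore a (e.insertBefore a (some x)) = some (e x) := by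
          simp [insertBefore_some, insertBefore_none, hx]
        exact h2 ▸ SameCycle.rfl.apply_right.apply_right
      · have h1 : e.insertBefore a (some x) = some (e x) := by simp [insertBefore_some, hx]
        exact h1 ▸ SameCycle.rfl.apply_right
    have hsome (w : Option α) : (e.insertBefore a).SameCycle w (some (w.getD a)) := by
      rcases w with _ | x
      · exact ⟨1, by simp [insertBefore_none]⟩
      · exact .rfl
    exact (hsome u).trans ((h.map_of_forall (f := some) hstep).trans (hsome v).symm)

theorem cycleLength_option [Fintype α] (σ : Perm (Option α)) (u : Option α) :
    σ.cycleLength u =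
      Nat.card {y // σ.SameCycle u (some y)} + if σ.SameCycle u none then 1 else 0 := by
  simp only [cycleLength, Nat.card_eq_fintype_card, Fintype.card_subtype, Finset.card_filter,
    Fintype.sum_option]
  rw [add_comm]

theorem cycleLength_insertBefore [Fintype α] (e : Perm α) (a : α) (u : Option α) :
    (e.insertBefore a).cycleLength u =
      e.cycleLength (u.getD a) + if e.SameCycle a (u.getD a) then 1 else 0 := by
  simp only [cycleLength_option, sameCycle_insertBefore, Option.getD_some, Option.getD_none,
    sameCycle_comm (x := a)]
  rfl

theorem insertBefore_permCongr [DecidableEq β] (f : α ≃ β) (e : Perm α) (a : α) :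
    (f.permCongr e).insertBefore (f a) = f.optionCongr.permCongr (e.insertBefore a) := by
  ext (_ | x) : 1
  · simp [insertBefore_none, ← optionCongr_symm]
  · simp only [insertBefore_some, permCongr_apply, ← optionCongr_symm, optionCongr_apply,
      Option.map_some, EmbeddingLike.apply_eq_iff_eq]
    split_ifs <;> simp

theorem card_forall_cycleLength_insertBefore_congr [DecidableEq β] (q : ℕ → Prop) (f : α ≃ β)
    (a : α) :
    Nat.card {e : Perm α // ∀ u, q ((e.insertBefore a).cycleLength u)} =
      Nat.card {e : Perm β // ∀ u, q ((e.insertBefore (f a)).cycleLength u)} :=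
  Nat.card_congr (f.permCongr.subtypeEquiv fun e => by
    rw [insertBefore_permCongr, forall_cycleLength_permCongr])

variable [Fintype α]

theorem cycleLength_optionCongr_none (e : Perm α) :
    Perm.cycleLength e.optionCongr none = 1 := by
  simp [cycleLength_option, sameCycle_optionCongr_none_left, SameCycle.rfl]

theorem cycleLength_optionCongr_some (e : Perm α) (x : α) :
    Perm.cycleLength e.optionCongr (some x) = e.cycleLength x := by
  simp only [cycleLength_option, sameCycle_optionCongr_some,
    sameCycle_comm (x := some x) (y := none), sameCycle_optionCongr_none_left, reduceCtorEq,
    if_false, add_zero]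
  rfl

theorem card_perm_option (P : Perm (Option α) → Prop) :
    Nat.card {σ // P σ} =
      Nat.card {e : Perm α // P e.optionCongr} +
        ∑ a, Nat.card {e : Perm α // P (e.insertBefore a)} := by
  rw [Nat.card_congr (decomposeOption.subtypeEquiv (q := fun p => P (decomposeOption.symm p))
      fun σ => by rw [symm_apply_apply]),
    Nat.card_congr (subtypeProdEquivSigmaSubtype fun o e => P (decomposeOption.symm (o, e))),
    Nat.card_sigma, Fintype.sum_option]
  simp only [decomposeOption_symm_apply, swap_self]
  rfl

theorem forall_cycleLength_optionCongr (q : ℕ → Prop) (e : Perm α) :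
    (∀ u, q (Perm.cycleLength e.optionCongr u)) ↔ q 1 ∧ ∀ x, q (e.cycleLength x) := by
  simp [Option.forall, cycleLength_optionCongr_none, cycleLength_optionCongr_some]

theorem restrictedPermCount_option (q : ℕ → Prop) [DecidablePred q] :
    restrictedPermCount q (Option α) =
      (if q 1 then restrictedPermCount q α else 0) +
        ∑ a, Nat.card {e : Perm α // ∀ u, q ((e.insertBefore a).cycleLength u)} := by
  rw [restrictedPermCount, card_perm_option]
  simp_rw [forall_cycleLength_optionCongr]
  split_ifs with h
  · simp only [h, true_and]; rfl
  · simp [h]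

theorem card_forall_cycleLength_insertBefore_none (q : ℕ → Prop) [DecidablePred q]
    (hq : ∀ n, q (n + 2) ↔ q n) :
    Nat.card {e : Perm (Option α) // ∀ u, q ((e.insertBefore none).cycleLength u)} =
      ((if q 2 then 1 else 0) + Fintype.card α) * restrictedPermCount q α := by
  have h_optionCongr (e : Perm α) :
      (∀ u, q ((Perm.insertBefore e.optionCongr none).cycleLength u)) ↔
        q 2 ∧ ∀ x, q (e.cycleLength x) := by
    simp [Option.forall, cycleLength_insertBefore, cycleLength_optionCongr_none,
      cycleLength_optionCongr_some, sameCycle_optionCongr_none_left]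
  have h_insertBefore (e : Perm α) (b : α) :
      (∀ u, q (((e.insertBefore b).insertBefore none).cycleLength u)) ↔
        ∀ x, q (e.cycleLength x) := by
    have h_twice (n : ℕ) (c : Prop) [Decidable c] :
        q (n + (if c then 1 else 0) + (if c then 1 else 0)) ↔ q n := by
      split_ifs <;> simp [hq]
    simp only [cycleLength_insertBefore, sameCycle_insertBefore, Option.getD_none, h_twice]
    simpa [Option.forall] using fun h => h b
  rw [card_perm_option (fun e => ∀ u, q ((e.insertBefore none).cycleLength u))]
  simp_rw [h_optionCongr, h_insertBefore]
  rw [sum_const, card_univ, smul_eq_mul, add_mul, restrictedPermCount]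
  split_ifs with h <;> simp [h]

theorem restrictedPermCount_option_option (q : ℕ → Prop) [DecidablePred q]
    (hq : ∀ n, q (n + 2) ↔ q n) :
    restrictedPermCount q (Option (Option α)) =
      (if q 1 then restrictedPermCount q (Option α) else 0) +
        (Fintype.card α + 1) * (((if q 2 then 1 else 0) + Fintype.card α) *
          restrictedPermCount q α) := by
  have h_symm (a : Option α) := card_forall_cycleLength_insertBefore_congr q (swap a none) a
  simp only [swap_apply_left] at h_symm
  rw [restrictedPermCount_option, ← card_forall_cycleLength_insertBefore_none q hq,
    sum_congr rfl fun a _ => h_symm a, sum_const, card_univ, Fintype.card_option, smul_eq_mul]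

end Option

theorem restrictedPermCount_fin_one (q : ℕ → Prop) [DecidablePred q] :
    restrictedPermCount q (Fin 1) = if q 1 then 1 else 0 := by
  rw [restrictedPermCount_congr q (finSuccEquiv 0), restrictedPermCount_option,
    restrictedPermCount_of_isEmpty, univ_eq_empty, sum_empty, add_zero]

theorem restrictedPermCount_fin_add_two (q : ℕ → Prop) [DecidablePred q]
    (hq : ∀ n, q (n + 2) ↔ q n) (n : ℕ) :
    restrictedPermCount q (Fin (n + 2)) =
      (if q 1 then restrictedPermCount q (Fin (n + 1)) else 0) +
        (n + 1) * (((if q 2 then 1 else 0) + n) * restrictedPermCount q (Fin n)) := by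
  rw [restrictedPermCount_congr q (finSuccEquiv (n + 1)),
    restrictedPermCount_congr q (finSuccEquiv n).optionCongr,
    restrictedPermCount_congr q (finSuccEquiv n), restrictedPermCount_option_option q hq,
    Fintype.card_fin]

theorem restrictedPermCount_even_fin_add_two (n : ℕ) :
    restrictedPermCount Even (Fin (n + 2)) = (n + 1) ^ 2 * restrictedPermCount Even (Fin n) := by
  rw [restrictedPermCount_fin_add_two Even (fun n => by simp [parity_simps])]
  simp
  ring

theorem restrictedPermCount_odd_fin_add_two (n : ℕ) :
    restrictedPermCount Odd (Fin (n + 2)) =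
      restrictedPermCount Odd (Fin (n + 1)) + (n + 1) * n * restrictedPermCount Odd (Fin n) := by
  rw [restrictedPermCount_fin_add_two Odd (fun n => by simp [parity_simps])]
  simp [show ¬Odd 2 by decide]
  ring

theorem restrictedPermCount_even_fin_two_mul (m : ℕ) :
    restrictedPermCount Even (Fin (2 * m)) = (2 * m - 1)‼ ^ 2 := by
  induction m with
  | zero => exact restrictedPermCount_of_isEmpty (α := Fin 0) Even
  | succ m ih =>
    rw [mul_add_one, restrictedPermCount_even_fin_add_two, ih,
      show 2 * m + 2 - 1 = 2 * m + 1 by omega, Nat.doubleFactorial_add_one]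
    ring

theorem restrictedPermCount_odd_fin_two_mul (m : ℕ) :
    restrictedPermCount Odd (Fin (2 * m)) = (2 * m - 1)‼ ^ 2 := by
  suffices h : restrictedPermCount Odd (Fin (2 * m)) = (2 * m - 1)‼ ^ 2 ∧
      restrictedPermCount Odd (Fin (2 * m + 1)) = (2 * m + 1)‼ * (2 * m - 1)‼ from h.1
  induction m with
  | zero =>
    exact ⟨restrictedPermCount_of_isEmpty (α := Fin 0) Odd, by simp [restrictedPermCount_fin_one]⟩
  | succ m ih =>
    obtain ⟨h_even, h_odd⟩ := ih
    have h_next : restrictedPermCount Odd (Fin (2 * m + 2)) = (2 * m + 1)‼ ^ 2 := by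
      rw [restrictedPermCount_odd_fin_add_two, h_odd, h_even, Nat.doubleFactorial_add_one]
      ring
    rw [mul_add_one, show 2 * m + 2 - 1 = 2 * m + 1 by omega, h_next,
      restrictedPermCount_odd_fin_add_two, h_next, h_odd, Nat.doubleFactorial_add_two]
    constructor
    · rfl
    · rw [Nat.doubleFactorial_add_one]; ring

end Equiv.Perm

theorem stmt18_general (m : ℕ) :
    Nat.card {σ : Equiv.Perm (Fin (2 * m)) // ∀ x, Odd (cycleLen σ x)} =
      Nat.card {σ : Equiv.Perm (Fin (2 * m)) // ∀ x, Even (cycleLen σ x)} :=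
  (Perm.restrictedPermCount_odd_fin_two_mul m).trans
    (Perm.restrictedPermCount_even_fin_two_mul m).symm

/-- Bóna–McLennan–White: For every `m ≥ 1`, the number of permutations of
`{1,…,2m}` all of whose cycles have odd length equals the number of permutations of
`{1,…,2m}` all of whose cycles have even length. -/
theorem stmt18 (m : ℕ) (hm : 1 ≤ m) :
    Nat.card {σ : Equiv.Perm (Fin (2 * m)) // ∀ x, Odd (cycleLen σ x)} =
      Nat.card {σ : Equiv.Perm (Fin (2 * m)) // ∀ x, Even (cycleLen σ x)} :=
  stmt18_general m
end

section
/- For every d ≥ 1 and j with 0 ≤ j ≤ d, the coefficient of n^j in the polynomial d!·(n+1)^d equals ∑_{i=0}^{d-1} A(d,i)·e(d,i,j), where e(d,i,j) := ∑_{ℓ=0}^{d-i} |s(d-i+1, ℓ+1)|·s(i, j-ℓ); that is, d!·C(d,j) = ∑_{i=0}^{d-1} A(d,i)·e(d,i,j). -/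
open Nat

/-- The signed Stirling number of the first kind `s(m, z)`: the coefficient of `x^z` in
`x(x-1)⋯(x-m+1)`, with the convention that it is `0` for `z < 0`. -/
noncomputable def sgnStirling (m : ℕ) (z : ℤ) : ℤ :=
  if 0 ≤ z then (∏ r ∈ Finset.range m, (Polynomial.X - Polynomial.C (r : ℤ))).coeff z.toNat
  else 0

/-- `e(d,i,j) := ∑_{ℓ=0}^{d-i} |s(d-i+1, ℓ+1)|·s(i, j-ℓ)`. -/
noncomputable def eNum (d i j : ℕ) : ℤ :=
  ∑ ℓ ∈ Finset.range (d - i + 1),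
    ((sgnStirling (d - i + 1) ((ℓ : ℤ) + 1)).natAbs : ℤ) * sgnStirling i ((j : ℤ) - (ℓ : ℤ))

/-- The Eulerian number `A(d,i)`: the number of permutations of `{1,…,d}` with exactly `i`
descents, a descent of `σ` (in one-line notation) being a position `t` with `σ(t) > σ(t+1)`. -/
noncomputable def eulerian (d i : ℕ) : ℕ :=
  Nat.card {σ : Equiv.Perm (Fin d) //
    Nat.card {t : Fin d // ∃ h : (t : ℕ) + 1 < d, σ ⟨(t : ℕ) + 1, h⟩ < σ t} = i}

/-!
Both sides are coefficients of `X ^ j` in two integer polynomials that agree at every natural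
number `n`: `d! (n + 1) ^ d` and `∑ᵢ A(d,i) (n + d - i) ⋯ (n + 1 - i)`. That they agree is
Worpitzky's identity `(n + 1) ^ d = ∑ᵢ A(d,i) C(n + d - i, d)`, proved by sorting: the words
`f : Fin d → Fin (n + 1)` sorted by `σ` are, after composing with `σ`, the weakly increasing
sequences that increase strictly at the descents of `σ`; adding to each entry the number of
non-descent steps before it turns them into the `C(n + d - des σ, d)` strictly increasing ones.
On the other side `(X + d - i) ⋯ (X + 1 - i)` factors as `(X + d - i) ⋯ (X + 1)` times
`X (X - 1) ⋯ (X - i + 1)`, whose coefficients are `|s(d - i + 1, ℓ + 1)|` and `s(i, k)`, so its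
`j`-th coefficient is the convolution `e(d,i,j)`.
-/

open Polynomial Finset

namespace Polynomial

variable {R : Type*} [CommRing R]

theorem coeff_mul_eq_sum_range_of_natDegree_le {p q : R[X]} {n : ℕ} (hp : p.natDegree ≤ n)
    (j : ℕ) :
    (p * q).coeff j = ∑ ℓ ∈ range (n + 1), p.coeff ℓ * if ℓ ≤ j then q.coeff (j - ℓ) else 0 := by
  set f : ℕ → R := fun ℓ ↦ p.coeff ℓ * if ℓ ≤ j then q.coeff (j - ℓ) else 0
  have hf_of_gt_j : ∀ ℓ ≥ j + 1, f ℓ = 0 := fun ℓ hℓ ↦ by simp [f, show ¬ℓ ≤ j by omega]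
  have hf_of_gt_n : ∀ ℓ ≥ n + 1, f ℓ = 0 := fun ℓ hℓ ↦ by
    simp [f, coeff_eq_zero_of_natDegree_lt (show p.natDegree < ℓ by omega)]
  calc (p * q).coeff j = ∑ ℓ ∈ range (j + 1), f ℓ := by
        rw [coeff_mul, Nat.sum_antidiagonal_eq_sum_range_succ_mk]
        exact sum_congr rfl fun ℓ hℓ ↦ by simp [f, Nat.lt_succ_iff.1 (mem_range.1 hℓ)]
    _ = ∑ ℓ ∈ range (j + 1 + (n + 1)), f ℓ := (eventually_constant_sum hf_of_gt_j (by omega)).symm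
    _ = ∑ ℓ ∈ range (n + 1), f ℓ := eventually_constant_sum hf_of_gt_n (by omega)

theorem descPochhammer_eq_prod_range (m : ℕ) :
    descPochhammer R m = ∏ r ∈ range m, (X - C (r : R)) := by
  induction m with
  | zero => simp
  | succ m ih => rw [descPochhammer_succ_right, ih, prod_range_succ, map_natCast]

theorem descPochhammer_eq_neg_one_pow_mul_comp_neg_X (m : ℕ) :
    descPochhammer R m = (-1) ^ m * (ascPochhammer R m).comp (-X) := by
  induction m with
  | zero => simp
  | succ m ih =>
    rw [descPochhammer_succ_right, ascPochhammer_succ_right, ih, mul_comp, add_comp, X_comp,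
      natCast_comp]
    ring

theorem coeff_descPochhammer (m k : ℕ) :
    (descPochhammer R m).coeff k = (-1) ^ (m + k) * (ascPochhammer R m).coeff k := by
  rw [descPochhammer_eq_neg_one_pow_mul_comp_neg_X, ← neg_one_mul (X : R[X]), ← C_1, ← C_neg,
    ← C_pow, coeff_C_mul, comp_C_mul_X_coeff]
  ring

theorem descPochhammer_comp_X_add_natCast (q i : ℕ) :
    (descPochhammer ℤ (q + i)).comp (X + (q : ℤ[X])) =
      (ascPochhammer ℤ q).comp (X + 1) * descPochhammer ℤ i := by
  have hhigh : (descPochhammer ℤ q).comp (X + (q : ℤ[X])) = (ascPochhammer ℤ q).comp (X + 1) := by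
    rw [descPochhammer_eq_ascPochhammer, comp_assoc, add_comp, sub_comp, X_comp, natCast_comp,
      one_comp, add_sub_cancel_right]
  have hlow : ((descPochhammer ℤ i).comp (X - (q : ℤ[X]))).comp (X + (q : ℤ[X])) =
      descPochhammer ℤ i := by
    rw [comp_assoc, sub_comp, X_comp, natCast_comp, add_sub_cancel_right, comp_X]
  rw [← descPochhammer_mul, mul_comp, hhigh, hlow]

theorem eval_descPochhammer_comp_X_add_natCast (d q n : ℕ) :
    ((descPochhammer ℤ d).comp (X + (q : ℤ[X]))).eval (n : ℤ) = (d ! * (n + q).choose d : ℕ) := by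
  rw [eval_comp, eval_add, eval_X, eval_natCast, ← Nat.cast_add,
    descPochhammer_eval_eq_descFactorial, Nat.descFactorial_eq_factorial_mul_choose]

end Polynomial

theorem sgnStirling_eq_ite (m : ℕ) (z : ℤ) :
    sgnStirling m z = if 0 ≤ z then (descPochhammer ℤ m).coeff z.toNat else 0 := by
  rw [sgnStirling, descPochhammer_eq_prod_range]

theorem sgnStirling_natCast_sub_natCast (m j ℓ : ℕ) :
    sgnStirling m ((j : ℤ) - ℓ) = if ℓ ≤ j then (descPochhammer ℤ m).coeff (j - ℓ) else 0 := by
  rw [sgnStirling_eq_ite]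
  by_cases h : ℓ ≤ j
  · rw [if_pos (by omega), if_pos h]
    congr
    omega
  · rw [if_neg (by omega), if_neg h]

theorem natAbs_sgnStirling_natCast (m k : ℕ) :
    ((sgnStirling m k).natAbs : ℤ) = (ascPochhammer ℤ m).coeff k := by
  have hnonneg : 0 ≤ (ascPochhammer ℤ m).coeff k := by
    rw [← ascPochhammer_map (Nat.castRingHom ℤ), coeff_map]
    exact Nat.cast_nonneg _
  rw [sgnStirling_eq_ite, if_pos (Int.natCast_nonneg k), Int.toNat_natCast, coeff_descPochhammer,
    Int.natAbs_mul, Int.natAbs_pow, Int.natAbs_neg, Int.natAbs_one, one_pow, one_mul,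
    Int.natAbs_of_nonneg hnonneg]

theorem eNum_eq_coeff (d i j : ℕ) (hi : i ≤ d) :
    eNum d i j = ((descPochhammer ℤ d).comp (X + ((d - i : ℕ) : ℤ[X]))).coeff j := by
  obtain ⟨q, rfl⟩ : ∃ q, d = q + i := ⟨d - i, by omega⟩
  have hdeg : ((ascPochhammer ℤ q).comp (X + 1)).natDegree ≤ q := by
    rw [natDegree_comp, ascPochhammer_natDegree, ← C_1, natDegree_X_add_C, mul_one]
  rw [Nat.add_sub_cancel, descPochhammer_comp_X_add_natCast,
    coeff_mul_eq_sum_range_of_natDegree_le hdeg, eNum, Nat.add_sub_cancel]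
  refine sum_congr rfl fun ℓ _ ↦ ?_
  rw [sgnStirling_natCast_sub_natCast, ← Nat.cast_succ, natAbs_sgnStirling_natCast,
    ascPochhammer_succ_left, coeff_X_mul]

section OrderEmbedding

variable {m M : ℕ}

theorem OrderEmbedding.monotone_apply_sub_val (h : Fin (m + 1) ↪o Fin M) :
    Monotone fun t : Fin (m + 1) ↦ ((h t : ℕ) : ℤ) - t := by
  refine Fin.monotone_iff_le_succ.2 fun r ↦ ?_
  have : (h r.castSucc : ℕ) < h r.succ := h.strictMono Fin.castSucc_lt_succ
  simp only [Fin.val_succ, Fin.val_castSucc]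
  omega

theorem OrderEmbedding.val_le_apply (h : Fin (m + 1) ↪o Fin M) (t : Fin (m + 1)) :
    (t : ℕ) ≤ h t := by
  have := h.monotone_apply_sub_val (Fin.zero_le t)
  simp only [Fin.val_zero] at this
  omega

theorem OrderEmbedding.apply_add_lt (h : Fin (m + 1) ↪o Fin M) (t : Fin (m + 1)) :
    (h t : ℕ) + m < M + t := by
  have hmono := h.monotone_apply_sub_val (Fin.le_last t)
  have := (h (Fin.last m)).isLt
  simp only [Fin.val_last] at hmono
  omega

end OrderEmbedding

section StrictSteps

variable {m : ℕ} (D : Finset (Fin m))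

def markedBefore (t : Fin (m + 1)) : ℕ := #{s ∈ D | s.castSucc < t}

theorem markedBefore_succ (r : Fin m) :
    markedBefore D r.succ = markedBefore D r.castSucc + if r ∈ D then 1 else 0 := by
  simp only [markedBefore, Fin.castSucc_lt_succ_iff, Fin.castSucc_lt_castSucc_iff, le_iff_lt_or_eq,
    filter_or]
  rw [card_union_of_disjoint (disjoint_filter.2 fun _ _ h₁ h₂ ↦ h₁.ne h₂), filter_eq']
  split_ifs <;> simp

theorem markedBefore_zero : markedBefore D 0 = 0 := by
  simp [markedBefore]

theorem markedBefore_last : markedBefore D (Fin.last m) = #D := by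
  simp [markedBefore, Fin.castSucc_lt_last]

theorem monotone_markedBefore : Monotone (markedBefore D) := fun _ _ h ↦
  card_le_card (monotone_filter_right D fun _ _ hs ↦ lt_of_lt_of_le hs h)

theorem monotone_val_sub_markedBefore :
    Monotone fun t : Fin (m + 1) ↦ (t : ℤ) - markedBefore D t := by
  refine Fin.monotone_iff_le_succ.2 fun r ↦ ?_
  simp only [markedBefore_succ, Fin.val_succ, Fin.val_castSucc]
  split_ifs <;> push_cast <;> omega

theorem markedBefore_le (t : Fin (m + 1)) : markedBefore D t ≤ t := by
  have := monotone_val_sub_markedBefore D (Fin.zero_le t)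
  simp only [Fin.val_zero, markedBefore_zero] at this
  omega

theorem markedBefore_le_card (t : Fin (m + 1)) : markedBefore D t ≤ #D :=
  markedBefore_last D ▸ monotone_markedBefore D (Fin.le_last t)

theorem val_sub_markedBefore_le (t : Fin (m + 1)) : (t : ℕ) - markedBefore D t ≤ m - #D := by
  have hmono := monotone_val_sub_markedBefore D (Fin.le_last t)
  have := markedBefore_le D t
  simp only [Fin.val_last, markedBefore_last] at hmono
  omega

def MonotoneWithStrictSteps {α : Type*} [Preorder α] (g : Fin (m + 1) → α) : Prop :=
  Monotone g ∧ ∀ s ∈ D, g s.castSucc < g s.succ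

theorem strictMono_add_val_sub_markedBefore {N : ℕ} {g : Fin (m + 1) → Fin N}
    (hg : MonotoneWithStrictSteps D g) :
    StrictMono fun t ↦ (g t : ℕ) + t - markedBefore D t := by
  refine Fin.strictMono_iff_lt_succ.2 fun r ↦ ?_
  have hmono : (g r.castSucc : ℕ) ≤ g r.succ := hg.1 (Fin.castSucc_le_succ r)
  have := markedBefore_le D r.castSucc
  rw [Fin.val_castSucc] at this
  simp only [markedBefore_succ, Fin.val_succ, Fin.val_castSucc]
  split_ifs with hr
  · have : (g r.castSucc : ℕ) < g r.succ := hg.2 r hr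
    omega
  · omega

theorem monotoneWithStrictSteps_add_markedBefore_sub_val {M : ℕ} (h : Fin (m + 1) ↪o Fin M) :
    MonotoneWithStrictSteps D fun t ↦ (h t : ℕ) + markedBefore D t - t := by
  have hstep (r : Fin m) : (h r.castSucc : ℕ) < h r.succ ∧ (r : ℕ) ≤ h r.castSucc :=
    ⟨h.strictMono Fin.castSucc_lt_succ, h.val_le_apply r.castSucc⟩
  refine ⟨Fin.monotone_iff_le_succ.2 fun r ↦ ?_, fun r hr ↦ ?_⟩
  · have := hstep r
    simp only [markedBefore_succ, Fin.val_succ, Fin.val_castSucc]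
    split_ifs <;> omega
  · have := hstep r
    simp only [markedBefore_succ, if_pos hr, Fin.val_succ, Fin.val_castSucc]
    omega

def monotoneWithStrictStepsEquiv (N : ℕ) :
    {g : Fin (m + 1) → Fin N // MonotoneWithStrictSteps D g} ≃
      (Fin (m + 1) ↪o Fin (N + m - #D)) where
  toFun g := OrderEmbedding.ofStrictMono
    (fun t ↦ ⟨g.1 t + t - markedBefore D t, by
      have := (g.1 t).isLt
      have := markedBefore_le D t
      have := val_sub_markedBefore_le D t
      have := card_finset_fin_le D
      omega⟩)
    fun _ _ hab ↦ Fin.mk_lt_mk.2 (strictMono_add_val_sub_markedBefore D g.2 hab)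
  invFun h := ⟨fun t ↦ ⟨h t + markedBefore D t - t, by
      have := h.val_le_apply t
      have := h.apply_add_lt t
      have := markedBefore_le_card D t
      have := card_finset_fin_le D
      omega⟩,
    fun _ _ hab ↦ Fin.mk_le_mk.2 ((monotoneWithStrictSteps_add_markedBefore_sub_val D h).1 hab),
    fun s hs ↦ Fin.mk_lt_mk.2 ((monotoneWithStrictSteps_add_markedBefore_sub_val D h).2 s hs)⟩
  left_inv g := Subtype.ext <| funext fun t ↦ Fin.ext <| by
    change (g.1 t : ℕ) + t - markedBefore D t + markedBefore D t - t = g.1 t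
    have := markedBefore_le D t
    omega
  right_inv h := by
    ext t
    change (h t : ℕ) + markedBefore D t - t + t - markedBefore D t = h t
    have := h.val_le_apply t
    omega

theorem card_monotoneWithStrictSteps (N : ℕ) :
    Nat.card {g : Fin (m + 1) → Fin N // MonotoneWithStrictSteps D g} =
      (N + m - #D).choose (m + 1) := by
  rw [Nat.card_congr ((monotoneWithStrictStepsEquiv D N).trans Set.powersetCard.ofFinEmbEquiv),
    Set.powersetCard.card, Nat.card_fin]

end StrictSteps

section Descents

variable {m : ℕ}

def descents (σ : Equiv.Perm (Fin (m + 1))) : Finset (Fin m) := {s | σ s.succ < σ s.castSucc}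

theorem strictMono_toLex_iff {α : Type*} [LinearOrder α] (σ : Equiv.Perm (Fin (m + 1)))
    (g : Fin (m + 1) → α) :
    StrictMono (fun u ↦ toLex (g u, σ u)) ↔ MonotoneWithStrictSteps (descents σ) g := by
  simp only [Fin.strictMono_iff_lt_succ, MonotoneWithStrictSteps, Fin.monotone_iff_le_succ,
    Prod.Lex.toLex_lt_toLex, descents, mem_filter, mem_univ, true_and]
  constructor
  · intro h
    refine ⟨fun r ↦ (h r).elim le_of_lt fun h' ↦ h'.1.le, fun r hr ↦ ?_⟩
    exact (h r).resolve_right fun h' ↦ lt_asymm hr h'.2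
  · rintro ⟨hmono, hstrict⟩ r
    rcases (hmono r).lt_or_eq with hlt | heq
    · exact Or.inl hlt
    · refine Or.inr ⟨heq, lt_of_le_of_ne (not_lt.1 fun hlt ↦ (hstrict r hlt).ne heq) ?_⟩
      exact σ.injective.ne Fin.castSucc_lt_succ.ne

theorem Tuple.sort_eq_iff {α : Type*} [LinearOrder α] (σ : Equiv.Perm (Fin (m + 1)))
    (f : Fin (m + 1) → α) :
    Tuple.sort f = σ ↔ MonotoneWithStrictSteps (descents σ) (f ∘ σ) := by
  rw [eq_comm, Tuple.eq_sort_iff', ← strictMono_toLex_iff]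
  rfl

def sortFiberEquiv {α : Type*} [LinearOrder α] (σ : Equiv.Perm (Fin (m + 1))) :
    {f : Fin (m + 1) → α // Tuple.sort f = σ} ≃
      {g : Fin (m + 1) → α // MonotoneWithStrictSteps (descents σ) g} :=
  (σ.symm.arrowCongr (Equiv.refl α)).subtypeEquiv fun f ↦ Tuple.sort_eq_iff σ f

theorem card_sort_eq (σ : Equiv.Perm (Fin (m + 1))) (N : ℕ) :
    Nat.card {f : Fin (m + 1) → Fin N // Tuple.sort f = σ} =
      (N + m - #(descents σ)).choose (m + 1) := by
  rw [Nat.card_congr (sortFiberEquiv σ), card_monotoneWithStrictSteps]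

theorem card_descents (σ : Equiv.Perm (Fin (m + 1))) :
    Nat.card {t : Fin (m + 1) // ∃ h : (t : ℕ) + 1 < m + 1, σ ⟨(t : ℕ) + 1, h⟩ < σ t} =
      #(descents σ) := by
  rw [Nat.card_eq_fintype_card, Fintype.card_subtype]
  refine (card_bij (fun s _ ↦ s.castSucc) (fun s hs ↦ ?_) (fun _ _ _ _ ↦ Fin.castSucc_inj.1)
    fun t ht ↦ ?_).symm
  · simp only [descents, mem_filter, mem_univ, true_and] at hs ⊢
    exact ⟨by simp, hs⟩
  · obtain ⟨h, hlt⟩ := (mem_filter.1 ht).2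
    exact ⟨⟨t, by omega⟩, by simpa [descents] using hlt, rfl⟩

theorem eulerian_succ_eq_card (i : ℕ) :
    eulerian (m + 1) i = #{σ : Equiv.Perm (Fin (m + 1)) | #(descents σ) = i} := by
  simp only [eulerian, card_descents]
  rw [Nat.card_eq_fintype_card, Fintype.card_subtype]

end Descents

theorem add_one_pow_eq_sum_eulerian_mul_choose (m n : ℕ) :
    (n + 1) ^ (m + 1) =
      ∑ i ∈ range (m + 1), eulerian (m + 1) i * (n + 1 + m - i).choose (m + 1) := by
  calc (n + 1) ^ (m + 1) = #(univ : Finset (Fin (m + 1) → Fin (n + 1))) := by simp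
    _ = ∑ σ : Equiv.Perm (Fin (m + 1)), #{f : Fin (m + 1) → Fin (n + 1) | Tuple.sort f = σ} :=
        card_eq_sum_card_fiberwise fun _ _ ↦ mem_univ _
    _ = ∑ σ : Equiv.Perm (Fin (m + 1)), (n + 1 + m - #(descents σ)).choose (m + 1) :=
        sum_congr rfl fun σ _ ↦ by
          rw [← card_sort_eq, Nat.card_eq_fintype_card, Fintype.card_subtype]
    _ = ∑ i ∈ range (m + 1), eulerian (m + 1) i * (n + 1 + m - i).choose (m + 1) := by
        rw [← sum_fiberwise_of_maps_to (g := fun σ ↦ #(descents σ)) (t := range (m + 1))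
          fun σ _ ↦ mem_range.2 (Nat.lt_succ_of_le (card_finset_fin_le _))]
        refine sum_congr rfl fun i _ ↦ ?_
        rw [eulerian_succ_eq_card, ← smul_eq_mul, ← sum_const]
        exact sum_congr rfl fun σ hσ ↦ by rw [(mem_filter.1 hσ).2]

theorem factorial_mul_X_add_one_pow_eq_sum (m : ℕ) :
    C (((m + 1)! : ℕ) : ℤ) * (X + 1) ^ (m + 1) =
      ∑ i ∈ range (m + 1),
        C (eulerian (m + 1) i : ℤ) *
          (descPochhammer ℤ (m + 1)).comp (X + ((m + 1 - i : ℕ) : ℤ[X])) := by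
  refine eq_of_infinite_eval_eq _ _
    (Set.infinite_of_injective_forall_mem Nat.cast_injective fun n : ℕ ↦ ?_)
  have hworpitzky : (m + 1)! * (n + 1) ^ (m + 1) = ∑ i ∈ range (m + 1),
      eulerian (m + 1) i * ((m + 1)! * (n + (m + 1 - i)).choose (m + 1)) := by
    rw [add_one_pow_eq_sum_eulerian_mul_choose, mul_sum]
    refine sum_congr rfl fun i hi ↦ ?_
    rw [show n + 1 + m - i = n + (m + 1 - i) by have := mem_range.1 hi; omega]
    ring
  simp only [Set.mem_ofPred_eq, eval_mul, eval_C, eval_pow, eval_add, eval_X, eval_one,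
    eval_finsetSum, eval_descPochhammer_comp_X_add_natCast]
  exact_mod_cast hworpitzky

theorem stmt19_general (d j : ℕ) (hd : 1 ≤ d) :
    (d ! : ℤ) * (d.choose j : ℤ) = ∑ i ∈ Finset.range d, (eulerian d i : ℤ) * eNum d i j := by
  obtain ⟨m, rfl⟩ := Nat.exists_eq_add_of_le' hd
  have hcoeff := congrArg (coeff · j) (factorial_mul_X_add_one_pow_eq_sum m)
  simp only [coeff_C_mul, coeff_X_add_one_pow, finsetSum_coeff] at hcoeff
  rw [hcoeff]
  exact sum_congr rfl fun i hi ↦ by rw [eNum_eq_coeff _ _ _ (mem_range.1 hi).le]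

/-- For every `d ≥ 1` and `0 ≤ j ≤ d`, the coefficient of `n^j` in
`d!·(n+1)^d`, namely `d!·C(d,j)`, equals `∑_{i=0}^{d-1} A(d,i)·e(d,i,j)`. -/
theorem stmt19 (d j : ℕ) (hd : 1 ≤ d) (hj : j ≤ d) :
    (d ! : ℤ) * (d.choose j : ℤ) = ∑ i ∈ Finset.range d, (eulerian d i : ℤ) * eNum d i j :=
  stmt19_general d j hd
end
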